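/- arXiv:math/9707210 — 14 statements merged into one kernel-verified Lean document; each statement's English description precedes it below -/
import Mathlib

section
/- If f and g are functions in L^1 of a measure space with a positive measure ν, and ‖f+g‖₁ + ‖f−g‖₁ = 2(‖f‖₁ + ‖g‖₁), then f(u)·g(u) = 0 for ν-almost every u. -/
open MeasureTheory

lemma abs_sum_diff (a b : ℝ) : |a + b| + |a - b| = 2 * max |a| |b| := by
  rcases abs_cases a with ⟨ha, _⟩ | ⟨ha, _⟩ <;>
  rcases abs_cases b with ⟨hb, _⟩ | ⟨hb, _⟩ <;>
  rcases abs_cases (a + b) with ⟨h1, _⟩ | ⟨h1, _⟩ <;>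
  rcases abs_cases (a - b) with ⟨h2, _⟩ | ⟨h2, _⟩ <;>
  rcases max_cases |a| |b| with ⟨h3, _⟩ | ⟨h3, _⟩ <;>
  linarith

/-- If `f` and `g` are integrable functions on a measure space with (nonnegative) measure `ν`
and `‖f+g‖₁ + ‖f-g‖₁ = 2(‖f‖₁ + ‖g‖₁)`, then `f·g = 0` ν-almost everywhere. -/
theorem l1_equality_implies_ae_disjoint_support
    {α : Type*} [MeasurableSpace α] (ν : Measure α) (f g : α → ℝ)
    (hf : Integrable f ν) (hg : Integrable g ν)
    (h : (∫ x, |f x + g x| ∂ν) + ∫ x, |f x - g x| ∂ν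
        = 2 * ((∫ x, |f x| ∂ν) + ∫ x, |g x| ∂ν)) :
    ∀ᵐ u ∂ν, f u * g u = 0 := by
  set φ : α → ℝ := fun x => 2 * (|f x| + |g x|) - (|f x + g x| + |f x - g x|) with hφ
  have hint : Integrable φ ν := by
    apply Integrable.sub
    · exact ((hf.abs.add hg.abs).const_mul 2)
    · exact (hf.add hg).abs.add (hf.sub hg).abs
  have hnn : 0 ≤ᵐ[ν] φ := Filter.Eventually.of_forall (fun x => by
    have := abs_sum_diff (f x) (g x)
    have h1 : max |f x| |g x| ≤ |f x| + |g x| :=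
      max_le (le_add_of_nonneg_right (abs_nonneg _)) (le_add_of_nonneg_left (abs_nonneg _))
    simp only [hφ]; dsimp; linarith)
  have i1 : Integrable (fun x => 2 * (|f x| + |g x|)) ν := (hf.abs.add hg.abs).const_mul 2
  have i2 : Integrable (fun x => |f x + g x|) ν := (hf.add hg).abs
  have i3 : Integrable (fun x => |f x - g x|) ν := (hf.sub hg).abs
  have i4 : Integrable (fun x => |f x + g x| + |f x - g x|) ν := i2.add i3
  have hzero : ∫ x, φ x ∂ν = 0 := by
    have : ∫ x, φ x ∂ν = 2 * ((∫ x, |f x| ∂ν) + ∫ x, |g x| ∂ν)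
        - ((∫ x, |f x + g x| ∂ν) + ∫ x, |f x - g x| ∂ν) := by
      simp only [hφ]
      rw [integral_sub i1 i4, integral_add i2 i3,
        MeasureTheory.integral_const_mul, integral_add hf.abs hg.abs]
    rw [this, h]; ring
  have hae : φ =ᵐ[ν] 0 := (integral_eq_zero_iff_of_nonneg_ae hnn hint).mp hzero
  filter_upwards [hae] with x hx
  have := abs_sum_diff (f x) (g x)
  simp only [hφ, Pi.zero_apply] at hx
  have hmin : min |f x| |g x| = 0 := by
    have hsum : |f x| + |g x| = max |f x| |g x| := by linarith
    have := max_add_min |f x| |g x|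
    linarith
  rcases min_eq_iff.mp hmin with ⟨h0, _⟩ | ⟨h0, _⟩
  · rw [abs_eq_zero.mp h0, zero_mul]
  · rw [abs_eq_zero.mp h0, mul_zero]
end

section
/- If x₁,…,xₙ is a linear basis of ℝⁿ with n ≥ 1, then the set {u ∈ S^{n-1} : |⟨u,x₁⟩| = |⟨u,x₂⟩| = ⋯ = |⟨u,xₙ⟩|} is finite, containing at most 2ⁿ points. -/
private lemma eq_zero_of_inner_basis_eq_zero (n : ℕ)
    (b : Module.Basis (Fin n) ℝ (EuclideanSpace ℝ (Fin n)))
    (u : EuclideanSpace ℝ (Fin n)) (h : ∀ i, (inner ℝ u (b i) : ℝ) = 0) : u = 0 := by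
  have : (inner ℝ u u : ℝ) = 0 := by
    nth_rewrite 2 [← b.sum_repr u]
    rw [inner_sum]
    simp only [real_inner_smul_right, h, mul_zero, Finset.sum_const_zero]
  exact inner_self_eq_zero.mp this

/-- If `x₁,…,xₙ` is a basis of `ℝⁿ` (`n ≥ 1`), then the set of unit vectors `u` with
`|⟨u,x₁⟩| = ⋯ = |⟨u,xₙ⟩|` is finite and has at most `2ⁿ` points. -/
theorem finite_equal_abs_inner_basis (n : ℕ) (hn : 1 ≤ n)
    (b : Module.Basis (Fin n) ℝ (EuclideanSpace ℝ (Fin n))) :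
    (setOf (fun u : EuclideanSpace ℝ (Fin n) =>
        ‖u‖ = 1 ∧ ∀ i j : Fin n, |(inner ℝ u (b i) : ℝ)| = |(inner ℝ u (b j) : ℝ)|)).Finite ∧
    (setOf (fun u : EuclideanSpace ℝ (Fin n) =>
        ‖u‖ = 1 ∧ ∀ i j : Fin n, |(inner ℝ u (b i) : ℝ)| = |(inner ℝ u (b j) : ℝ)|)).ncard
      ≤ 2 ^ n := by
  set i0 : Fin n := ⟨0, hn⟩ with hi0
  set S := setOf (fun u : EuclideanSpace ℝ (Fin n) =>
      ‖u‖ = 1 ∧ ∀ i j : Fin n, |(inner ℝ u (b i) : ℝ)| = |(inner ℝ u (b j) : ℝ)|) with hS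
  -- the common absolute value is positive
  have key : ∀ u ∈ S, 0 < |(inner ℝ u (b i0) : ℝ)| := by
    intro u hu
    rcases hu with ⟨hn1, heq⟩
    by_contra h
    push_neg at h
    have h0 : |(inner ℝ u (b i0) : ℝ)| = 0 := le_antisymm h (abs_nonneg _)
    have hz : ∀ i, (inner ℝ u (b i) : ℝ) = 0 := by
      intro i
      have := heq i i0
      rw [h0] at this
      exact abs_eq_zero.mp this
    have := eq_zero_of_inner_basis_eq_zero n b u hz
    rw [this] at hn1
    simp at hn1
  set g : EuclideanSpace ℝ (Fin n) → (Fin n → Bool) :=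
    fun u i => decide (0 < (inner ℝ u (b i) : ℝ)) with hg
  have hinj : Set.InjOn g S := by
    intro u hu w hw hgu
    obtain ⟨hu1, hu2⟩ := hu
    obtain ⟨hw1, hw2⟩ := hw
    have hcu := key u ⟨hu1, hu2⟩
    have hcw := key w ⟨hw1, hw2⟩
    set cu := |(inner ℝ u (b i0) : ℝ)| with hcu_def
    set cw := |(inner ℝ w (b i0) : ℝ)| with hcw_def
    have hmain : ∀ i, cw * (inner ℝ u (b i) : ℝ) = cu * (inner ℝ w (b i) : ℝ) := by
      intro i
      have hau : |(inner ℝ u (b i) : ℝ)| = cu := hu2 i i0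
      have haw : |(inner ℝ w (b i) : ℝ)| = cw := hw2 i i0
      have hau0 : (inner ℝ u (b i) : ℝ) ≠ 0 := by
        intro h; rw [h, abs_zero] at hau; linarith
      have haw0 : (inner ℝ w (b i) : ℝ) ≠ 0 := by
        intro h; rw [h, abs_zero] at haw; linarith
      have hsign : (0 < (inner ℝ u (b i) : ℝ)) ↔ (0 < (inner ℝ w (b i) : ℝ)) := by
        have := congrFun hgu i
        simpa [hg] using this
      by_cases hp : 0 < (inner ℝ u (b i) : ℝ)
      · have hp' : 0 < (inner ℝ w (b i) : ℝ) := hsign.mp hp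
        rw [abs_of_pos hp] at hau
        rw [abs_of_pos hp'] at haw
        rw [hau, haw]; ring
      · have hneg : (inner ℝ u (b i) : ℝ) < 0 := lt_of_le_of_ne (not_lt.mp hp) hau0
        have hneg' : (inner ℝ w (b i) : ℝ) < 0 := by
          by_contra h'
          exact hp (hsign.mpr (lt_of_le_of_ne (not_lt.mp h') (Ne.symm haw0)))
        rw [abs_of_neg hneg] at hau
        rw [abs_of_neg hneg'] at haw
        have h1 : (inner ℝ u (b i) : ℝ) = -cu := by linarith
        have h2 : (inner ℝ w (b i) : ℝ) = -cw := by linarith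
        rw [h1, h2]; ring
    have hv : cw • u - cu • w = 0 := by
      apply eq_zero_of_inner_basis_eq_zero n b
      intro i
      rw [inner_sub_left, real_inner_smul_left, real_inner_smul_left, hmain i, sub_self]
    have heq : cw • u = cu • w := sub_eq_zero.mp hv
    have hnorm : cw = cu := by
      have := congrArg norm heq
      rw [norm_smul, norm_smul, hu1, hw1] at this
      simpa [abs_of_pos hcu, abs_of_pos hcw] using this
    rw [hnorm] at heq
    exact smul_right_injective _ (ne_of_gt hcu) heq
  constructor
  · exact Set.Finite.of_finite_image (Set.toFinite _) hinj
  · calc S.ncard ≤ (Set.univ : Set (Fin n → Bool)).ncard :=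
        Set.ncard_le_ncard_of_injOn g (fun a _ => Set.mem_univ _) hinj Set.finite_univ
      _ = 2 ^ n := by simp [Set.ncard_univ, Nat.card_eq_fintype_card]
end

section
/- If x lies on the boundary of B and y on the boundary of C, where K = B ⊕ C is a direct Minkowski sum with orthogonal spans, then ‖(x+y)+(x−y)‖_K + ‖(x+y)−(x−y)‖_K = 2(‖x+y‖_K + ‖x−y‖_K) = 4. -/
open Pointwise

lemma gauge_aux {E : Type*} [NormedAddCommGroup E] [NormedSpace ℝ E]
    (B C : Set E)
    (hdisj : ∀ z : E, z ∈ Submodule.span ℝ B → z ∈ Submodule.span ℝ C → z = 0)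
    (u v : E) (hu : u ∈ B) (hub : gauge B u = 1) (hv : v ∈ C) :
    gauge (B + C) (u + v) = 1 := by
  have hmem : u + v ∈ B + C := Set.add_mem_add hu hv
  apply le_antisymm
  · exact gauge_le_of_mem zero_le_one (by simpa using hmem)
  · rw [gauge]
    refine le_csInf ⟨1, ⟨one_pos, by simpa using hmem⟩⟩ ?_
    rintro r ⟨hr, hrm⟩
    by_contra hlt
    push_neg at hlt
    rw [show r • (B + C) = r • B + r • C from smul_add r B C] at hrm
    obtain ⟨b, hb, c, hc, heq⟩ := hrm
    obtain ⟨b0, hb0, rfl⟩ := hb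
    obtain ⟨c0, hc0, rfl⟩ := hc
    have hsub : u - r • b0 = r • c0 - v := by
      rw [sub_eq_sub_iff_add_eq_add, ← heq, add_comm]
    have hz : u - r • b0 = 0 := by
      apply hdisj
      · exact sub_mem (Submodule.subset_span hu)
          (Submodule.smul_mem _ r (Submodule.subset_span hb0))
      · rw [hsub]
        exact sub_mem (Submodule.smul_mem _ r (Submodule.subset_span hc0))
          (Submodule.subset_span hv)
    have hu' : u ∈ r • B := ⟨b0, hb0, (sub_eq_zero.mp hz).symm⟩
    have : gauge B u ≤ r := gauge_le_of_mem hr.le hu'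
    rw [hub] at this
    linarith

/-- If `K = B ⊕ C` is a direct Minkowski sum with mutually orthogonal spans, `x ∈ ∂B` and
`y ∈ ∂C`, then `‖(x+y)+(x-y)‖_K + ‖(x+y)-(x-y)‖_K = 2(‖x+y‖_K + ‖x-y‖_K) = 4`. -/
theorem gauge_sum_boundary_points (n : ℕ) (B C K : Set (EuclideanSpace ℝ (Fin n)))
    (hBcomp : IsCompact B) (hCcomp : IsCompact C)
    (hBconv : Convex ℝ B) (hCconv : Convex ℝ C)
    (hBsymm : B = -B) (hCsymm : C = -C)
    (horth : ∀ b ∈ Submodule.span ℝ B, ∀ c ∈ Submodule.span ℝ C, (inner ℝ b c : ℝ) = 0)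
    (hspan : Submodule.span ℝ B ⊔ Submodule.span ℝ C = ⊤)
    (hK : K = B + C)
    (x y : EuclideanSpace ℝ (Fin n))
    (hx : x ∈ B) (hy : y ∈ C) (hxb : gauge B x = 1) (hyb : gauge C y = 1) :
    gauge K ((x + y) + (x - y)) + gauge K ((x + y) - (x - y))
        = 2 * (gauge K (x + y) + gauge K (x - y)) ∧
      2 * (gauge K (x + y) + gauge K (x - y)) = 4 := by
  subst hK
  have hdisj : ∀ z : EuclideanSpace ℝ (Fin n),
      z ∈ Submodule.span ℝ B → z ∈ Submodule.span ℝ C → z = 0 := by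
    intro z hzB hzC
    have := horth z hzB z hzC
    exact inner_self_eq_zero.mp this
  have hdisj' : ∀ z : EuclideanSpace ℝ (Fin n),
      z ∈ Submodule.span ℝ C → z ∈ Submodule.span ℝ B → z = 0 :=
    fun z h1 h2 => hdisj z h2 h1
  have hny : -y ∈ C := by rw [hCsymm]; simpa using hy
  have hnx : -x ∈ B := by rw [hBsymm]; simpa using hx
  have h0C : (0 : EuclideanSpace ℝ (Fin n)) ∈ C := by
    have := hCconv hy hny (by norm_num : (0:ℝ) ≤ 1/2) (by norm_num : (0:ℝ) ≤ 1/2)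
      (by norm_num)
    simpa using this
  have h0B : (0 : EuclideanSpace ℝ (Fin n)) ∈ B := by
    have := hBconv hx hnx (by norm_num : (0:ℝ) ≤ 1/2) (by norm_num : (0:ℝ) ≤ 1/2)
      (by norm_num)
    simpa using this
  have h1 : gauge (B + C) (x + y) = 1 := gauge_aux B C hdisj x y hx hxb hy
  have h2 : gauge (B + C) (x - y) = 1 := by
    rw [sub_eq_add_neg]
    exact gauge_aux B C hdisj x (-y) hx hxb hny
  have hx1 : gauge (B + C) x = 1 := by
    have := gauge_aux B C hdisj x 0 hx hxb h0C
    simpa using this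
  have hy1 : gauge (B + C) y = 1 := by
    have := gauge_aux C B hdisj' y 0 hy hyb h0B
    rw [add_comm C B] at this
    simpa using this
  have e1 : (x + y) + (x - y) = (2:ℝ) • x := by
    rw [two_smul]; abel
  have e2 : (x + y) - (x - y) = (2:ℝ) • y := by
    rw [two_smul]; abel
  rw [e1, e2, gauge_smul_of_nonneg (by norm_num : (0:ℝ) ≤ 2),
    gauge_smul_of_nonneg (by norm_num : (0:ℝ) ≤ 2), h1, h2, hx1, hy1]
  norm_num
end

section
/- Let K be a centrally symmetric compact convex subset of ℝⁿ with dim K ≥ 2, let U ⊂ ℝⁿ be a subspace with dim U ≤ n−2, and let H be an (n−1)-dimensional linear subspace of ℝⁿ. Then there exists a point x ∈ ∂K ∩ H and a nonzero vector u orthogonal to U that is an outer normal vector of K at x. -/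
open Metric Filter

set_option maxHeartbeats 1000000 in
/-- If `K ⊂ ℝⁿ` is centrally symmetric, compact and convex with `dim K ≥ 2`, `U` is a
subspace with `dim U ≤ n - 2` and `H` is an `(n-1)`-dimensional subspace, then there is a
boundary point `x` of `K` lying in `H` at which `K` has an outer normal vector orthogonal
to `U`. -/
theorem exists_boundary_point_with_normal_orthogonal (n : ℕ)
    (K : Set (EuclideanSpace ℝ (Fin n)))
    (hKcomp : IsCompact K) (hKconv : Convex ℝ K) (hKsymm : K = -K) (hKne : K.Nonempty)
    (hKdim : 2 ≤ Module.finrank ℝ (Submodule.span ℝ K))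
    (U H : Submodule ℝ (EuclideanSpace ℝ (Fin n)))
    (hU : Module.finrank ℝ U ≤ n - 2)
    (hH : Module.finrank ℝ H = n - 1) :
    ∃ x ∈ frontier K, x ∈ H ∧ ∃ u : EuclideanSpace ℝ (Fin n), u ≠ 0 ∧
      (∀ w ∈ U, (inner ℝ u w : ℝ) = 0) ∧
      ∀ y ∈ K, (inner ℝ y u : ℝ) ≤ (inner ℝ x u : ℝ) := by
  classical
  -- basic dimension facts
  have hnE : Module.finrank ℝ (EuclideanSpace ℝ (Fin n)) = n := finrank_euclideanSpace_fin
  have hn2 : 2 ≤ n := by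
    have h := Submodule.finrank_le (Submodule.span ℝ K)
    rw [hnE] at h
    omega
  -- symmetry: y ∈ K → -y ∈ K
  have hneg : ∀ y, y ∈ K → -y ∈ K := by
    intro y hy
    rw [hKsymm] at hy
    simpa using hy
  -- a nonzero vector orthogonal to H, characterizing H
  obtain ⟨e, he0, heH⟩ : ∃ e : EuclideanSpace ℝ (Fin n), e ≠ 0 ∧
      ∀ x : EuclideanSpace ℝ (Fin n), (inner ℝ e x : ℝ) = 0 → x ∈ H := by
    have hHne : Hᗮ ≠ ⊥ := by
      intro h
      rw [Submodule.orthogonal_eq_bot_iff] at h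
      rw [h, finrank_top, hnE] at hH
      omega
    obtain ⟨e, heo, he0⟩ := Submodule.exists_mem_ne_zero_of_ne_bot hHne
    refine ⟨e, he0, ?_⟩
    have hle : H ≤ (Submodule.span ℝ {e})ᗮ := by
      intro x hx
      rw [Submodule.mem_orthogonal]
      intro u hu
      obtain ⟨c, rfl⟩ := Submodule.mem_span_singleton.mp hu
      have h0 : (inner ℝ e x : ℝ) = 0 := (Submodule.mem_orthogonal' H e).mp heo x hx
      rw [real_inner_smul_left, h0, mul_zero]
    have hfr : Module.finrank ℝ H = Module.finrank ℝ (Submodule.span ℝ {e})ᗮ := by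
      have h1 : Module.finrank ℝ (Submodule.span ℝ ({e} : Set (EuclideanSpace ℝ (Fin n)))) = 1 :=
        finrank_span_singleton he0
      have h2 := Submodule.finrank_add_finrank_orthogonal (𝕜 := ℝ)
        (Submodule.span ℝ ({e} : Set (EuclideanSpace ℝ (Fin n))))
      rw [hnE, h1] at h2
      omega
    have hHeq := Submodule.eq_of_le_of_finrank_eq hle hfr
    intro x hx
    rw [hHeq, Submodule.mem_orthogonal]
    intro u hu
    obtain ⟨c, rfl⟩ := Submodule.mem_span_singleton.mp hu
    rw [real_inner_smul_left, hx, mul_zero]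
  -- the orthogonal complement of U has dimension ≥ 2
  have hWdim : 2 ≤ Module.finrank ℝ Uᗮ := by
    have h2 := Submodule.finrank_add_finrank_orthogonal (𝕜 := ℝ) U
    rw [hnE] at h2
    omega
  -- maximizer predicate
  set M : EuclideanSpace ℝ (Fin n) → EuclideanSpace ℝ (Fin n) → Prop :=
    fun u x => x ∈ K ∧ ∀ y ∈ K, (inner ℝ y u : ℝ) ≤ (inner ℝ x u : ℝ) with hM
  have hexM : ∀ u : EuclideanSpace ℝ (Fin n), ∃ x, M u x := by
    intro u
    obtain ⟨x, hxK, hmax⟩ := hKcomp.exists_isMaxOn hKne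
      ((Continuous.inner continuous_id continuous_const).continuousOn :
        ContinuousOn (fun y : EuclideanSpace ℝ (Fin n) => (inner ℝ y u : ℝ)) K)
    exact ⟨x, hxK, fun y hy => hmax hy⟩
  -- key reduction
  suffices hsuff : ∃ u ∈ Uᗮ, u ≠ 0 ∧ ∃ x, M u x ∧ (inner ℝ e x : ℝ) = 0 by
    obtain ⟨u, huW, hu0, x, ⟨hxK, hmax⟩, hxe⟩ := hsuff
    refine ⟨x, ?_, heH x hxe, u, hu0, ?_, hmax⟩
    · -- x is a frontier point
      constructor
      · exact subset_closure hxK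
      · intro hxint
        obtain ⟨ε, hε, hball⟩ := Metric.isOpen_iff.mp isOpen_interior x hxint
        have hu : 0 < ‖u‖ := norm_pos_iff.mpr hu0
        set y := x + (ε / (2 * ‖u‖)) • u with hy
        have hyK : y ∈ K := by
          apply interior_subset; apply hball
          rw [mem_ball, dist_eq_norm]
          have hxy : y - x = (ε / (2 * ‖u‖)) • u := by rw [hy]; abel
          rw [hxy, norm_smul, Real.norm_eq_abs, abs_of_pos (by positivity)]
          have hnn : ε / (2 * ‖u‖) * ‖u‖ = ε / 2 := by field_simp
          rw [hnn]; linarith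
        have hle := hmax y hyK
        rw [hy, inner_add_left, real_inner_smul_left, real_inner_self_eq_norm_sq] at hle
        have hpos : 0 < ε / (2 * ‖u‖) * ‖u‖ ^ 2 := by positivity
        linarith
    · -- u orthogonal to U
      intro w hw
      exact (Submodule.mem_orthogonal' U u).mp huW w hw
  -- suppose not
  by_contra hcon
  push_neg at hcon
  have hc : ∀ u ∈ Uᗮ, u ≠ 0 → ∀ x, M u x → (inner ℝ e x : ℝ) ≠ 0 := by
    intro u hu hu0 x hx
    exact hcon u hu hu0 x hx
  -- all maximizers for a fixed u have inner ℝ products with e of the same sign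
  have hsign : ∀ u ∈ Uᗮ, u ≠ 0 → ∀ x₁ x₂, M u x₁ → M u x₂ →
      (inner ℝ e x₁ : ℝ) < 0 → 0 < (inner ℝ e x₂ : ℝ) → False := by
    intro u hu hu0 x₁ x₂ hm1 hm2 h1 h2
    obtain ⟨a, ha⟩ : ∃ a : ℝ, (inner ℝ e x₂ : ℝ) = a := ⟨_, rfl⟩
    obtain ⟨b, hb⟩ : ∃ b : ℝ, (inner ℝ e x₁ : ℝ) = -b := ⟨-(inner ℝ e x₁ : ℝ), by ring⟩
    rw [ha] at h2
    have hbpos : 0 < b := by rw [hb] at h1; linarith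
    have habpos : 0 < a + b := by linarith
    obtain ⟨t, ht⟩ : ∃ t : ℝ, t = b / (a + b) := ⟨_, rfl⟩
    have ht0 : 0 ≤ t := by rw [ht]; positivity
    have ht1 : t ≤ 1 := by rw [ht, div_le_one habpos]; linarith
    have hkey : t * a - (1 - t) * b = 0 := by rw [ht]; field_simp; ring
    set p := t • x₂ + (1 - t) • x₁ with hp
    have hpK : p ∈ K := hKconv hm2.1 hm1.1 ht0 (by linarith) (by ring)
    have hpe : (inner ℝ e p : ℝ) = 0 := by
      rw [hp, inner_add_right, real_inner_smul_right, real_inner_smul_right, ha, hb]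
      linarith
    have hpx : (inner ℝ x₂ u : ℝ) = (inner ℝ x₁ u : ℝ) :=
      le_antisymm (hm1.2 x₂ hm2.1) (hm2.2 x₁ hm1.1)
    have hpM : M u p := by
      refine ⟨hpK, fun y hy => ?_⟩
      rw [hp, inner_add_left, real_inner_smul_left, real_inner_smul_left, hpx]
      have h := hm1.2 y hy
      nlinarith
    exact hc u hu hu0 p hpM hpe
  -- sign sets on the unit sphere of Uᗮ
  set A : Set (EuclideanSpace ℝ (Fin n)) :=
    {u | u ∈ Uᗮ ∧ ‖u‖ = 1 ∧ ∃ x, M u x ∧ 0 < (inner ℝ e x : ℝ)} with hA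
  set B : Set (EuclideanSpace ℝ (Fin n)) :=
    {u | u ∈ Uᗮ ∧ ‖u‖ = 1 ∧ ∃ x, M u x ∧ (inner ℝ e x : ℝ) < 0} with hB
  set S : Set (EuclideanSpace ℝ (Fin n)) := {u | u ∈ Uᗮ ∧ ‖u‖ = 1} with hS
  -- closedness of such sets
  have hclosed : ∀ s : ℝ, s ≠ 0 → IsClosed {u : EuclideanSpace ℝ (Fin n) | u ∈ Uᗮ ∧ ‖u‖ = 1 ∧
      ∃ x, M u x ∧ 0 < s * (inner ℝ e x : ℝ)} := by
    intro s hs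
    apply IsSeqClosed.isClosed
    intro uk u huk hlim
    have huW : u ∈ Uᗮ := by
      have hcl : IsClosed ((Uᗮ : Submodule ℝ (EuclideanSpace ℝ (Fin n))) :
          Set (EuclideanSpace ℝ (Fin n))) := Submodule.closed_of_finiteDimensional _
      exact hcl.isSeqClosed (fun k => (huk k).1) hlim
    have hun : ‖u‖ = 1 := by
      have h1 : Tendsto (fun k => ‖uk k‖) atTop (nhds ‖u‖) := hlim.norm
      have h2 : Tendsto (fun k => ‖uk k‖) atTop (nhds 1) := by
        simp only [show ∀ k, ‖uk k‖ = 1 from fun k => (huk k).2.1]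
        exact tendsto_const_nhds
      exact tendsto_nhds_unique h1 h2
    have hu0 : u ≠ 0 := by
      intro h; rw [h, norm_zero] at hun; norm_num at hun
    choose xk hxkM hxks using fun k => (huk k).2.2
    obtain ⟨x, hxK, φ, hφ, hxlim⟩ := hKcomp.tendsto_subseq (fun k => (hxkM k).1)
    have hxM : M u x := by
      refine ⟨hxK, fun y hy => ?_⟩
      have h1 : Tendsto (fun j => (inner ℝ y (uk (φ j)) : ℝ)) atTop (nhds (inner ℝ y u : ℝ)) :=
        Filter.Tendsto.inner tendsto_const_nhds (hlim.comp hφ.tendsto_atTop)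
      have h2 : Tendsto (fun j => (inner ℝ (xk (φ j)) (uk (φ j)) : ℝ)) atTop
          (nhds (inner ℝ x u : ℝ)) :=
        Filter.Tendsto.inner hxlim (hlim.comp hφ.tendsto_atTop)
      exact le_of_tendsto_of_tendsto' h1 h2 (fun j => (hxkM (φ j)).2 y hy)
    refine ⟨huW, hun, x, hxM, ?_⟩
    have hge : 0 ≤ s * (inner ℝ e x : ℝ) := by
      have h2 : Tendsto (fun j => s * (inner ℝ e (xk (φ j)) : ℝ)) atTop
          (nhds (s * (inner ℝ e x : ℝ))) :=
        (Filter.Tendsto.inner tendsto_const_nhds hxlim).const_mul s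
      exact le_of_tendsto_of_tendsto' tendsto_const_nhds h2
        (fun j => le_of_lt (hxks (φ j)))
    have hne : (inner ℝ e x : ℝ) ≠ 0 := hc u huW hu0 x hxM
    have hne' : s * (inner ℝ e x : ℝ) ≠ 0 := mul_ne_zero hs hne
    exact lt_of_le_of_ne hge (Ne.symm hne')
  have hAclosed : IsClosed A := by
    have h := hclosed 1 one_ne_zero
    simpa [hA, one_mul] using h
  have hBclosed : IsClosed B := by
    have h := hclosed (-1) (by norm_num)
    have heq : {u : EuclideanSpace ℝ (Fin n) | u ∈ Uᗮ ∧ ‖u‖ = 1 ∧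
        ∃ x, M u x ∧ 0 < (-1 : ℝ) * (inner ℝ e x : ℝ)} = B := by
      ext u
      simp only [hB, Set.mem_setOf_eq]
      constructor
      · rintro ⟨h1, h2, x, h3, h4⟩; exact ⟨h1, h2, x, h3, by linarith⟩
      · rintro ⟨h1, h2, x, h3, h4⟩; exact ⟨h1, h2, x, h3, by linarith⟩
    rwa [heq] at h
  -- the sphere is covered by A and B
  have hcover : S ⊆ A ∪ B := by
    rintro u ⟨huW, hun⟩
    have hu0 : u ≠ 0 := by intro h; rw [h, norm_zero] at hun; norm_num at hun
    obtain ⟨x, hxM⟩ := hexM u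
    have hne : (inner ℝ e x : ℝ) ≠ 0 := hc u huW hu0 x hxM
    rcases lt_or_gt_of_ne hne with h | h
    · exact Or.inr ⟨huW, hun, x, hxM, h⟩
    · exact Or.inl ⟨huW, hun, x, hxM, h⟩
  -- antipodal symmetry
  have hanti : ∀ u, u ∈ A → -u ∈ B := by
    rintro u ⟨huW, hun, x, ⟨hxK, hmax⟩, hxe⟩
    refine ⟨neg_mem huW, by rwa [norm_neg], -x, ⟨hneg x hxK, fun y hy => ?_⟩, ?_⟩
    · have h := hmax (-y) (hneg y hy)
      rw [inner_neg_left] at h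
      rw [inner_neg_right, inner_neg_left, inner_neg_right, neg_neg]
      linarith
    · rw [inner_neg_right]; linarith
  have hanti' : ∀ u, u ∈ B → -u ∈ A := by
    rintro u ⟨huW, hun, x, ⟨hxK, hmax⟩, hxe⟩
    refine ⟨neg_mem huW, by rwa [norm_neg], -x, ⟨hneg x hxK, fun y hy => ?_⟩, ?_⟩
    · have h := hmax (-y) (hneg y hy)
      rw [inner_neg_left] at h
      rw [inner_neg_right, inner_neg_left, inner_neg_right, neg_neg]
      linarith
    · rw [inner_neg_right]; linarith
  -- A and B are disjoint
  have hdisj : ∀ u, u ∈ A → u ∈ B → False := by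
    rintro u ⟨huW, hun, x₂, hm2, h2⟩ ⟨_, _, x₁, hm1, h1⟩
    have hu0 : u ≠ 0 := by intro h; rw [h, norm_zero] at hun; norm_num at hun
    exact hsign u huW hu0 x₁ x₂ hm1 hm2 h1 h2
  -- a point on the sphere
  obtain ⟨w₀, hw₀W, hw₀0⟩ : ∃ w₀ : EuclideanSpace ℝ (Fin n), w₀ ∈ Uᗮ ∧ w₀ ≠ 0 := by
    have hWne : Uᗮ ≠ ⊥ := by
      intro h
      rw [← Submodule.finrank_eq_zero (R := ℝ) (S := Uᗮ)] at h
      omega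
    obtain ⟨w, hwW, hw0⟩ := Submodule.exists_mem_ne_zero_of_ne_bot hWne
    exact ⟨w, hwW, hw0⟩
  have hw₀n : 0 < ‖w₀‖ := norm_pos_iff.mpr hw₀0
  set u₀ : EuclideanSpace ℝ (Fin n) := ‖w₀‖⁻¹ • w₀ with hu₀
  have hu₀S : u₀ ∈ S := by
    refine ⟨Submodule.smul_mem Uᗮ _ hw₀W, ?_⟩
    rw [hu₀, norm_smul, norm_inv, norm_norm, inv_mul_cancel₀ (ne_of_gt hw₀n)]
  have hu₀S' : -u₀ ∈ S := ⟨neg_mem hu₀S.1, by rw [norm_neg]; exact hu₀S.2⟩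
  -- both A and B are nonempty on S
  have hSA : (S ∩ A).Nonempty := by
    rcases hcover hu₀S with h | h
    · exact ⟨u₀, hu₀S, h⟩
    · exact ⟨-u₀, hu₀S', hanti' u₀ h⟩
  have hSB : (S ∩ B).Nonempty := by
    rcases hcover hu₀S with h | h
    · exact ⟨-u₀, hu₀S', hanti u₀ h⟩
    · exact ⟨u₀, hu₀S, h⟩
  -- the sphere S is connected
  have hconn : IsPreconnected S := by
    have hrank : 1 < Module.rank ℝ Uᗮ := by
      have h1 : (1 : Cardinal) < (Module.finrank ℝ Uᗮ : Cardinal) := by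
        exact_mod_cast (by omega : 1 < Module.finrank ℝ Uᗮ)
      rwa [Module.finrank_eq_rank] at h1
    have h := isConnected_sphere hrank (0 : Uᗮ) (zero_le_one)
    have himg : Subtype.val '' (sphere (0 : Uᗮ) 1) = S := by
      ext u
      simp only [Set.mem_image, mem_sphere_iff_norm, sub_zero, hS, Set.mem_setOf_eq]
      constructor
      · rintro ⟨v, hv, rfl⟩
        exact ⟨v.2, by rw [← hv]; rfl⟩
      · rintro ⟨huW, hun⟩
        exact ⟨⟨u, huW⟩, by simpa using hun, rfl⟩
    have h2 := (h.image _ continuous_subtype_val.continuousOn).isPreconnected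
    rwa [himg] at h2
  -- contradiction via connectedness
  obtain ⟨u, _, huA, huB⟩ := isPreconnected_closed_iff.mp hconn A B hAclosed hBclosed
    hcover hSA hSB
  exact hdisj u huA huB
end

section
/- Suppose K = B + C ⊂ ℝⁿ (Minkowski sum), x ∈ ∂B is a point at which B has an outer normal vector orthogonal to span(C), and c ∈ C. Then ‖2x‖_K = ‖x+c‖_K + ‖x−c‖_K = 2, i.e. the segment x + C lies entirely on the boundary of K. -/
open Pointwise

/-- If `K = B + C`, `x ∈ B` is a point at which `B` has an outer normal vector `u`
orthogonal to `span C`, and `c ∈ C`, then `‖2x‖_K = ‖x+c‖_K + ‖x-c‖_K = 2`; that is, the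
segment `x + C` lies on the boundary of `K`. -/
theorem segment_on_boundary_of_sum (n : ℕ) (B C K : Set (EuclideanSpace ℝ (Fin n)))
    (hBcomp : IsCompact B) (hCcomp : IsCompact C)
    (hBconv : Convex ℝ B) (hCconv : Convex ℝ C)
    (hBsymm : B = -B) (hCsymm : C = -C)
    (hK : K = B + C) (hKfull : (interior K).Nonempty)
    (x c : EuclideanSpace ℝ (Fin n)) (hx : x ∈ B) (hc : c ∈ C)
    (u : EuclideanSpace ℝ (Fin n)) (hu : u ≠ 0)
    (huC : ∀ c' ∈ C, (inner ℝ u c' : ℝ) = 0)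
    (hnormal : ∀ y ∈ B, (inner ℝ y u : ℝ) ≤ (inner ℝ x u : ℝ)) :
    gauge K (2 • x) = gauge K (x + c) + gauge K (x - c) ∧
      gauge K (x + c) + gauge K (x - c) = 2 := by
  have hKconv : Convex ℝ K := hK ▸ hBconv.add hCconv
  have hmc : -c ∈ C := by rw [hCsymm]; exact Set.neg_mem_neg.mpr hc
  have h0C : (0 : EuclideanSpace ℝ (Fin n)) ∈ C := by
    have := hCconv hc hmc (by norm_num : (0:ℝ) ≤ 1/2) (by norm_num : (0:ℝ) ≤ 1/2) (by norm_num)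
    simpa using this
  -- K is symmetric
  have hKsymm : ∀ k ∈ K, -k ∈ K := by
    intro k hk
    rw [hK] at hk ⊢
    obtain ⟨b, hb, c', hc', rfl⟩ := hk
    have hb' : -b ∈ B := by rw [hBsymm]; exact Set.neg_mem_neg.mpr hb
    have hc'' : -c' ∈ C := by rw [hCsymm]; exact Set.neg_mem_neg.mpr hc'
    have h2 := Set.add_mem_add hb' hc''
    have h3 : -b + -c' = -(b + c') := by abel
    rwa [h3] at h2
  -- support bound on K
  have hsup : ∀ k ∈ K, (inner ℝ k u : ℝ) ≤ (inner ℝ x u : ℝ) := by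
    intro k hk
    rw [hK] at hk
    obtain ⟨b, hb, c', hc', rfl⟩ := hk
    have h1 : (inner ℝ c' u : ℝ) = 0 := by rw [real_inner_comm]; exact huC c' hc'
    calc (inner ℝ (b + c') u : ℝ) = inner ℝ b u + inner ℝ c' u := inner_add_left _ _ _
      _ = (inner ℝ b u : ℝ) := by rw [h1, add_zero]
      _ ≤ inner ℝ x u := hnormal b hb
  -- positivity of the support value
  have hspos : (0:ℝ) < inner ℝ x u := by
    by_contra h
    push_neg at h
    have hall : ∀ k ∈ K, (inner ℝ k u : ℝ) = 0 := by
      intro k hk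
      have h1 := (hsup k hk).trans h
      have h2 := (hsup _ (hKsymm k hk)).trans h
      rw [inner_neg_left] at h2
      linarith
    obtain ⟨y0, hy0⟩ := hKfull
    obtain ⟨ε, hε, hball⟩ := Metric.mem_nhds_iff.mp (mem_interior_iff_mem_nhds.mp hy0)
    have hun : (0:ℝ) < ‖u‖ := norm_pos_iff.mpr hu
    set z := y0 + (ε / (2 * ‖u‖)) • u with hz
    have hzK : z ∈ K := by
      apply hball
      simp only [Metric.mem_ball, hz, dist_eq_norm]
      rw [add_sub_cancel_left, norm_smul]
      rw [Real.norm_eq_abs, abs_of_pos (by positivity)]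
      have heq : ε / (2 * ‖u‖) * ‖u‖ = ε / 2 := by field_simp
      rw [heq]; linarith
    have h0 : (inner ℝ z u : ℝ) = 0 := hall z hzK
    have hy00 : (inner ℝ y0 u : ℝ) = 0 := hall y0 (interior_subset hy0)
    rw [hz, inner_add_left, inner_smul_left, hy00, real_inner_self_eq_norm_sq] at h0
    simp only [zero_add, starRingEnd_apply, star_trivial] at h0
    have hpos : ε / (2 * ‖u‖) * ‖u‖ ^ 2 > 0 := by positivity
    linarith
  -- 0 in interior K, absorbent
  have h0int : (0 : EuclideanSpace ℝ (Fin n)) ∈ interior K := by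
    obtain ⟨y0, hy0⟩ := hKfull
    have hKeq : K = -K := by
      ext k
      constructor
      · intro hk; rw [Set.mem_neg]; simpa using hKsymm _ hk
      · intro hk; rw [Set.mem_neg] at hk; simpa using hKsymm _ hk
    have hy0' : -y0 ∈ K := hKsymm _ (interior_subset hy0)
    have h2 := hKconv.combo_interior_self_mem_interior hy0 hy0'
      (by norm_num : (0:ℝ) < 1/2) (by norm_num : (0:ℝ) ≤ 1/2) (by norm_num)
    have h3 : (1/2 : ℝ) • y0 + (1/2 : ℝ) • (-y0) = 0 := by
      rw [smul_neg]; abel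
    rwa [h3] at h2
  have habs : Absorbent ℝ K := absorbent_nhds_zero (mem_interior_iff_mem_nhds.mp h0int)
  -- lower bound lemma
  have hlow : ∀ z : EuclideanSpace ℝ (Fin n), (inner ℝ z u : ℝ) = inner ℝ x u → 1 ≤ gauge K z := by
    intro z hz
    by_contra h
    push_neg at h
    obtain ⟨b, hb0, hb1, k, hk, rfl⟩ := exists_lt_of_gauge_lt habs h
    rw [inner_smul_left] at hz
    simp only [starRingEnd_apply, star_trivial] at hz
    have h1 : (inner ℝ k u : ℝ) ≤ inner ℝ x u := hsup k hk
    nlinarith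
  have hxcK : x + c ∈ K := hK ▸ Set.add_mem_add hx hc
  have hxmcK : x - c ∈ K := by
    rw [hK, sub_eq_add_neg]; exact Set.add_mem_add hx hmc
  have hxK : x ∈ K := by
    have := Set.add_mem_add hx h0C
    rw [add_zero] at this
    exact hK ▸ this
  have hcu : (inner ℝ c u : ℝ) = 0 := by rw [real_inner_comm]; exact huC c hc
  have g1 : gauge K (x + c) = 1 :=
    le_antisymm (gauge_le_one_of_mem hxcK)
      (hlow _ (by rw [inner_add_left, hcu, add_zero]))
  have g2 : gauge K (x - c) = 1 :=
    le_antisymm (gauge_le_one_of_mem hxmcK)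
      (hlow _ (by rw [inner_sub_left, hcu, sub_zero]))
  have g3 : gauge K x = 1 :=
    le_antisymm (gauge_le_one_of_mem hxK) (hlow _ rfl)
  have g4 : gauge K (2 • x) = 2 := by
    have : (2 : ℕ) • x = (2 : ℝ) • x := by
      simp [two_smul]
    rw [this, gauge_smul_of_nonneg (by norm_num : (0:ℝ) ≤ 2), g3, smul_eq_mul, mul_one]
  rw [g1, g2, g4]
  norm_num
end

section
/- Suppose ν is a positive Borel measure on S^{n-1} such that ∫ |⟨z,u⟩| dν(u) = ‖z‖_K for all z ∈ ℝⁿ, where K = B + C, and suppose x ∈ ∂B has an outer normal orthogonal to span(C) and c ∈ C. Then ν-almost every u ∈ S^{n-1} satisfies |⟨u,x⟩| ≥ |⟨u,c⟩|. -/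
open MeasureTheory Pointwise

/-- If `ν` is a positive Borel measure on the unit sphere representing the gauge of
`K = B + C` as a cosine transform, `x ∈ B` has an outer normal orthogonal to `span C`, and
`c ∈ C`, then `ν`-almost every `u` satisfies `|⟨u,x⟩| ≥ |⟨u,c⟩|`. -/
theorem ae_abs_inner_ge_of_cosine_representation (n : ℕ)
    (B C K : Set (EuclideanSpace ℝ (Fin n)))
    (hBcomp : IsCompact B) (hCcomp : IsCompact C)
    (hBconv : Convex ℝ B) (hCconv : Convex ℝ C)
    (hBsymm : B = -B) (hCsymm : C = -C)
    (hK : K = B + C) (hKfull : (interior K).Nonempty)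
    (ν : Measure (EuclideanSpace ℝ (Fin n))) [IsFiniteMeasure ν]
    (hsphere : ν (Metric.sphere (0 : EuclideanSpace ℝ (Fin n)) 1)ᶜ = 0)
    (hrep : ∀ z : EuclideanSpace ℝ (Fin n), gauge K z = ∫ u, |(inner ℝ z u : ℝ)| ∂ν)
    (x c : EuclideanSpace ℝ (Fin n)) (hx : x ∈ B) (hc : c ∈ C)
    (u₀ : EuclideanSpace ℝ (Fin n)) (hu₀ : u₀ ≠ 0)
    (hu₀C : ∀ c' ∈ C, (inner ℝ u₀ c' : ℝ) = 0)
    (hnormal : ∀ y ∈ B, (inner ℝ y u₀ : ℝ) ≤ (inner ℝ x u₀ : ℝ)) :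
    ∀ᵐ u ∂ν, |(inner ℝ u c : ℝ)| ≤ |(inner ℝ u x : ℝ)| := by
  classical
  -- basic memberships
  have hnegc : -c ∈ C := by rw [hCsymm]; exact Set.neg_mem_neg.2 hc
  have h0C : (0 : EuclideanSpace ℝ (Fin n)) ∈ C := by
    have h := hCconv hc hnegc (by norm_num : (0:ℝ) ≤ 1/2) (by norm_num : (0:ℝ) ≤ 1/2)
      (by norm_num)
    simpa using h
  have hxK : x ∈ K := by
    rw [hK]; simpa using Set.add_mem_add hx h0C
  have hxcK : x + c ∈ K := by rw [hK]; exact Set.add_mem_add hx hc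
  have hxcK' : x - c ∈ K := by
    rw [hK, sub_eq_add_neg]; exact Set.add_mem_add hx hnegc
  have hKneg : ∀ z ∈ K, -z ∈ K := by
    intro z hz
    rw [hK] at hz ⊢
    obtain ⟨b, hb, c', hc', rfl⟩ := hz
    rw [neg_add]
    exact Set.add_mem_add (by rw [hBsymm]; exact Set.neg_mem_neg.2 hb)
      (by rw [hCsymm]; exact Set.neg_mem_neg.2 hc')
  -- every element of K has inner ℝ product with u₀ at most ⟨x,u₀⟩
  have hKbound : ∀ k ∈ K, (inner ℝ k u₀ : ℝ) ≤ (inner ℝ x u₀ : ℝ) := by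
    intro k hk
    rw [hK] at hk
    obtain ⟨b, hb, c', hc', rfl⟩ := hk
    have : (inner ℝ c' u₀ : ℝ) = 0 := by
      rw [real_inner_comm]; exact hu₀C c' hc'
    rw [inner_add_left, this, add_zero]
    exact hnormal b hb
  -- ⟨x,u₀⟩ > 0
  have hxu₀ : 0 < (inner ℝ x u₀ : ℝ) := by
    have h0int : (0 : EuclideanSpace ℝ (Fin n)) ∈ interior K := by
      obtain ⟨y, hy⟩ := hKfull
      have hUsub : -(interior K) ⊆ interior K := by
        apply interior_maximal _ isOpen_interior.neg
        intro z hz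
        rw [Set.mem_neg] at hz
        have := hKneg _ (interior_subset hz)
        simpa using this
      have hny : -y ∈ interior K := hUsub (Set.neg_mem_neg.2 hy)
      have hconvK : Convex ℝ (interior K) := by
        apply Convex.interior
        rw [hK]; exact hBconv.add hCconv
      have := hconvK hy hny (by norm_num : (0:ℝ) ≤ 1/2) (by norm_num : (0:ℝ) ≤ 1/2)
        (by norm_num)
      simpa using this
    obtain ⟨ε, hε, hball⟩ := Metric.isOpen_iff.1 isOpen_interior 0 h0int
    have hu₀norm : 0 < ‖u₀‖ := norm_pos_iff.2 hu₀
    set w : EuclideanSpace ℝ (Fin n) := (ε / (2 * ‖u₀‖)) • u₀ with hw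
    have hwK : w ∈ K := by
      apply interior_subset
      apply hball
      simp only [Metric.mem_ball, dist_zero_right, hw, norm_smul, Real.norm_eq_abs]
      rw [abs_of_pos (by positivity)]
      rw [div_mul_eq_mul_div, div_lt_iff₀ (by positivity)]
      nlinarith
    have hwin : (inner ℝ w u₀ : ℝ) = (ε / (2 * ‖u₀‖)) * ‖u₀‖ ^ 2 := by
      rw [hw, real_inner_smul_left, real_inner_self_eq_norm_sq]
    have hpos : 0 < (inner ℝ w u₀ : ℝ) := by
      rw [hwin]; positivity
    exact lt_of_lt_of_le hpos (hKbound w hwK)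
  -- gauge equals one on the relevant points
  have hgauge_ge : ∀ z : EuclideanSpace ℝ (Fin n),
      (inner ℝ x u₀ : ℝ) ≤ (inner ℝ z u₀ : ℝ) → z ∈ K → gauge K z = 1 := by
    intro z hz hzK
    refine le_antisymm (gauge_le_one_of_mem hzK) ?_
    apply le_csInf ⟨1, by simpa using hzK⟩
    rintro r ⟨hr, hrK⟩
    obtain ⟨k, hk, rfl⟩ := hrK
    have h1 : (inner ℝ (r • k) u₀ : ℝ) = r * inner ℝ k u₀ := real_inner_smul_left k u₀ r
    have h2 : (inner ℝ x u₀ : ℝ) ≤ r * inner ℝ k u₀ := by rw [← h1]; exact hz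
    have h3 : (inner ℝ k u₀ : ℝ) ≤ inner ℝ x u₀ := hKbound k hk
    by_contra hcon
    push_neg at hcon
    nlinarith
  have hcu₀ : (inner ℝ c u₀ : ℝ) = 0 := by rw [real_inner_comm]; exact hu₀C c hc
  have gx : gauge K x = 1 := hgauge_ge x le_rfl hxK
  have gxc : gauge K (x + c) = 1 := by
    apply hgauge_ge _ _ hxcK
    rw [inner_add_left, hcu₀, add_zero]
  have gxc' : gauge K (x - c) = 1 := by
    apply hgauge_ge _ _ hxcK'
    rw [inner_sub_left, hcu₀, sub_zero]
  -- integrability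
  have hmeas : ∀ z : EuclideanSpace ℝ (Fin n),
      AEStronglyMeasurable (fun u => |(inner ℝ z u : ℝ)|) ν := fun z =>
    ((continuous_const.inner continuous_id).abs).aestronglyMeasurable
  have haeSphere : ∀ᵐ u ∂ν, ‖u‖ = 1 := by
    have h : ∀ᵐ u ∂ν, u ∈ Metric.sphere (0 : EuclideanSpace ℝ (Fin n)) 1 := ae_iff.2 hsphere
    filter_upwards [h] with u hu
    simpa using hu
  have hint : ∀ z : EuclideanSpace ℝ (Fin n), Integrable (fun u => |(inner ℝ z u : ℝ)|) ν := by
    intro z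
    apply Integrable.mono' (integrable_const ‖z‖) (hmeas z)
    filter_upwards [haeSphere] with u hu
    rw [Real.norm_eq_abs, abs_abs]
    calc |(inner ℝ z u : ℝ)| ≤ ‖z‖ * ‖u‖ := abs_real_inner_le_norm z u
      _ = ‖z‖ := by rw [hu, mul_one]
  -- the key function
  set f : EuclideanSpace ℝ (Fin n) → ℝ := fun u =>
    |(inner ℝ (x + c) u : ℝ)| + |(inner ℝ (x - c) u : ℝ)| - 2 * |(inner ℝ x u : ℝ)| with hf
  have hfnonneg : ∀ u, 0 ≤ f u := by
    intro u
    simp only [hf, inner_add_left, inner_sub_left]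
    have h2 : 2 * |(inner ℝ x u : ℝ)| = |((inner ℝ x u : ℝ) + inner ℝ c u) + ((inner ℝ x u : ℝ) - inner ℝ c u)| := by
      rw [show ((inner ℝ x u : ℝ) + inner ℝ c u) + ((inner ℝ x u : ℝ) - inner ℝ c u) = 2 * inner ℝ x u by ring,
        abs_mul]
      norm_num
    have h3 := abs_add_le ((inner ℝ x u : ℝ) + inner ℝ c u) ((inner ℝ x u : ℝ) - inner ℝ c u)
    linarith
  have hfint : Integrable f ν :=
    (((hint (x + c)).add (hint (x - c))).sub ((hint x).const_mul 2))
  have hfintval : ∫ u, f u ∂ν = 0 := by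
    have h1 : ∫ u, f u ∂ν = ((∫ u, |(inner ℝ (x+c) u : ℝ)| ∂ν) + ∫ u, |(inner ℝ (x-c) u : ℝ)| ∂ν)
        - 2 * ∫ u, |(inner ℝ x u : ℝ)| ∂ν := by
      have hadd : Integrable (fun u => |(inner ℝ (x + c) u : ℝ)| + |(inner ℝ (x - c) u : ℝ)|) ν := by
        exact (hint (x + c)).add (hint (x - c))
      have hmul : Integrable (fun u => 2 * |(inner ℝ x u : ℝ)|) ν := (hint x).const_mul 2
      rw [show (∫ u, f u ∂ν) = ∫ u, (|(inner ℝ (x + c) u : ℝ)| + |(inner ℝ (x - c) u : ℝ)|)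
          - 2 * |(inner ℝ x u : ℝ)| ∂ν from rfl,
        integral_sub hadd hmul, integral_add (hint (x + c)) (hint (x - c)), integral_const_mul]
    rw [h1, ← hrep, ← hrep, ← hrep, gx, gxc, gxc']
    ring
  have hfzero : ∀ᵐ u ∂ν, f u = 0 := by
    have h := (integral_eq_zero_iff_of_nonneg (fun u => hfnonneg u) hfint).1 hfintval
    filter_upwards [h.le] with u hu
    exact le_antisymm hu (hfnonneg u)
  filter_upwards [hfzero] with u hu
  simp only [hf, inner_add_left, inner_sub_left] at hu
  have e1 : |(inner ℝ u c : ℝ)| = |(inner ℝ c u : ℝ)| := by rw [real_inner_comm]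
  have e2 : |(inner ℝ u x : ℝ)| = |(inner ℝ x u : ℝ)| := by rw [real_inner_comm]
  rw [e1, e2]
  set a := (inner ℝ x u : ℝ) with ha
  set b := (inner ℝ c u : ℝ) with hb
  have h1 : |a + b| + |a - b| = 2 * |a| := by linarith
  have h3 : |(a + b) - (a - b)| = 2 * |b| := by
    rw [show (a + b) - (a - b) = 2 * b by ring, abs_mul]
    norm_num
  have h2 : 2 * |b| ≤ |a + b| + |a - b| := h3 ▸ abs_sub (a + b) (a - b)
  linarith
end

section
/- If K is the unit ball of a norm on ℝⁿ, n ≥ 3, whose polar body K° is a zonoid, then K has no decomposition K = B ⊕ C as a direct Minkowski sum of convex bodies B, C of positive dimension with dim B + dim C = n. -/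
open MeasureTheory Pointwise

/-- The support function of a set with respect to the real inner product. -/
noncomputable def suppFn {E : Type*} [NormedAddCommGroup E] [InnerProductSpace ℝ E]
    (K : Set E) (u : E) : ℝ :=
  sSup ((fun x => (inner ℝ x u : ℝ)) '' K)

/-- The polar body of a set in a real inner product space. -/
def polarSet {E : Type*} [NormedAddCommGroup E] [InnerProductSpace ℝ E] (K : Set E) : Set E :=
  setOf (fun y => ∀ x ∈ K, (inner ℝ x y : ℝ) ≤ 1)

/-- A set is a zonoid iff its support function is the cosine transform of a positive
Borel measure on the unit sphere. -/
def IsZonoid {E : Type*} [NormedAddCommGroup E] [InnerProductSpace ℝ E] [MeasurableSpace E]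
    (K : Set E) : Prop :=
  ∃ ν : Measure E, IsFiniteMeasure ν ∧ ν (Metric.sphere (0 : E) 1)ᶜ = 0 ∧
    ∀ u, suppFn K u = ∫ v, |(inner ℝ u v : ℝ)| ∂ν

private lemma hlawka_abs (a b c : ℝ) :
    |a + b| + |b + c| + |c + a| ≤ |a| + |b| + |c| + |a + b + c| := by
  rcases abs_cases a with ⟨h1,_⟩|⟨h1,_⟩ <;> rcases abs_cases b with ⟨h2,_⟩|⟨h2,_⟩ <;>
  rcases abs_cases c with ⟨h3,_⟩|⟨h3,_⟩ <;> rcases abs_cases (a+b) with ⟨h4,_⟩|⟨h4,_⟩ <;>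
  rcases abs_cases (b+c) with ⟨h5,_⟩|⟨h5,_⟩ <;> rcases abs_cases (c+a) with ⟨h6,_⟩|⟨h6,_⟩ <;>
  rcases abs_cases (a+b+c) with ⟨h7,_⟩|⟨h7,_⟩ <;> linarith

set_option maxHeartbeats 4000000 in
private lemma key (n : ℕ) (K B C : Set (EuclideanSpace ℝ (Fin n)))
    (hBcomp : IsCompact B) (hCcomp : IsCompact C)
    (hBconv : Convex ℝ B)
    (hBne : B.Nonempty) (hCne : C.Nonempty)
    (hK : K = B + C)
    (hUV : Submodule.span ℝ B ⊓ Submodule.span ℝ C = ⊥)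
    (h2 : 2 ≤ Module.finrank ℝ (Submodule.span ℝ B))
    (hq : 0 < Module.finrank ℝ (Submodule.span ℝ C))
    (hsum : Module.finrank ℝ (Submodule.span ℝ B) + Module.finrank ℝ (Submodule.span ℝ C) = n)
    (hKsymm : K = -K)
    (hKint : (0 : EuclideanSpace ℝ (Fin n)) ∈ interior K)
    (hpolar : IsZonoid (polarSet K)) : False := by
  classical
  obtain ⟨ν, hνfin, hνsph, hνrep⟩ := hpolar
  haveI := hνfin
  set U : Submodule ℝ (EuclideanSpace ℝ (Fin n)) := Submodule.span ℝ B with hUdef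
  set V : Submodule ℝ (EuclideanSpace ℝ (Fin n)) := Submodule.span ℝ C with hVdef
  have hBU : B ⊆ (U : Set _) := Submodule.subset_span
  have hCV : C ⊆ (V : Set _) := Submodule.subset_span
  -- IsCompl
  have hfinE : Module.finrank ℝ (EuclideanSpace ℝ (Fin n)) = n := finrank_euclideanSpace_fin
  have hsup : U ⊔ V = ⊤ := by
    apply Submodule.eq_top_of_finrank_eq
    have h := Submodule.finrank_sup_add_finrank_inf_eq U V
    rw [hUV, finrank_bot] at h
    omega
  have hcompl : IsCompl U V := ⟨disjoint_iff.mpr hUV, codisjoint_iff.mpr hsup⟩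
  -- projections
  set prU : EuclideanSpace ℝ (Fin n) →ₗ[ℝ] EuclideanSpace ℝ (Fin n) :=
    U.subtype ∘ₗ U.projectionOnto V hcompl with hprUdef
  have hprU_left : ∀ x ∈ U, prU x = x := by
    intro x hx
    have h : U.projectionOnto V hcompl x = ⟨x, hx⟩ :=
      Submodule.projectionOnto_apply_left hcompl ⟨x, hx⟩
    simp [hprUdef, LinearMap.comp_apply, h]
  have hprU_right : ∀ x ∈ V, prU x = 0 := by
    intro x hx
    have h : U.projectionOnto V hcompl x = 0 :=
      Submodule.projectionOnto_apply_right hcompl ⟨x, hx⟩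
    simp [hprUdef, LinearMap.comp_apply, h]
  set prV : EuclideanSpace ℝ (Fin n) →ₗ[ℝ] EuclideanSpace ℝ (Fin n) :=
    V.subtype ∘ₗ V.projectionOnto U hcompl.symm with hprVdef
  have hprV_left : ∀ x ∈ V, prV x = x := by
    intro x hx
    have h : V.projectionOnto U hcompl.symm x = ⟨x, hx⟩ :=
      Submodule.projectionOnto_apply_left hcompl.symm ⟨x, hx⟩
    simp [hprVdef, LinearMap.comp_apply, h]
  have hprV_right : ∀ x ∈ U, prV x = 0 := by
    intro x hx
    have h : V.projectionOnto U hcompl.symm x = 0 :=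
      Submodule.projectionOnto_apply_right hcompl.symm ⟨x, hx⟩
    simp [hprVdef, LinearMap.comp_apply, h]
  -- symmetry
  have hsymmK : ∀ x ∈ K, -x ∈ K := by
    intro x hx
    rw [hKsymm]
    simpa using hx
  have hBsymm : ∀ b ∈ B, -b ∈ B := by
    intro b hb
    obtain ⟨c, hc⟩ := hCne
    have h1 : b + c ∈ K := by rw [hK]; exact Set.add_mem_add hb hc
    have h2' : -(b + c) ∈ K := hsymmK _ h1
    rw [hK] at h2'
    obtain ⟨b', hb', c', hc', heq⟩ := h2'
    have h3 := congrArg prU heq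
    rw [map_add, hprU_left b' (hBU hb'), hprU_right c' (hCV hc'), map_neg, map_add,
        hprU_left b (hBU hb), hprU_right c (hCV hc)] at h3
    simp only [add_zero] at h3
    rw [← h3]; exact hb'
  have hCsymm : ∀ c ∈ C, -c ∈ C := by
    intro c hc
    obtain ⟨b, hb⟩ := hBne
    have h1 : b + c ∈ K := by rw [hK]; exact Set.add_mem_add hb hc
    have h2' : -(b + c) ∈ K := hsymmK _ h1
    rw [hK] at h2'
    obtain ⟨b', hb', c', hc', heq⟩ := h2'
    have h3 := congrArg prV heq
    rw [map_add, hprV_right b' (hBU hb'), hprV_left c' (hCV hc'), map_neg, map_add,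
        hprV_right b (hBU hb), hprV_left c (hCV hc)] at h3
    simp only [zero_add] at h3
    rw [← h3]; exact hc'
  have h0B : (0 : EuclideanSpace ℝ (Fin n)) ∈ B := by
    obtain ⟨b, hb⟩ := hBne
    have hnb := hBsymm b hb
    have h := hBconv hb hnb (by norm_num : (0:ℝ) ≤ 1/2) (by norm_num : (0:ℝ) ≤ 1/2)
      (by norm_num)
    simpa using h
  -- polar bound
  obtain ⟨ε, hε0, hball⟩ : ∃ ε > 0, Metric.ball (0 : EuclideanSpace ℝ (Fin n)) ε ⊆ K := by
    rcases Metric.isOpen_iff.mp isOpen_interior 0 hKint with ⟨ε, hε, h⟩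
    exact ⟨ε, hε, h.trans interior_subset⟩
  have hpolar_bound : ∀ y ∈ polarSet K, ‖y‖ ≤ 2 / ε := by
    intro y hy
    rcases eq_or_ne y 0 with rfl | hy0
    · simp; positivity
    · have hy0' : 0 < ‖y‖ := norm_pos_iff.mpr hy0
      have hxy : ((ε / 2) • (‖y‖⁻¹ • y)) ∈ K := by
        apply hball
        simp only [Metric.mem_ball, dist_zero_right, norm_smul, norm_inv, norm_norm,
          Real.norm_eq_abs, abs_norm, abs_of_pos (by positivity : (0:ℝ) < ε / 2)]
        rw [inv_mul_cancel₀ hy0'.ne', mul_one]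
        linarith
      have h1 : (inner ℝ ((ε / 2) • (‖y‖⁻¹ • y)) y : ℝ) ≤ 1 := hy _ hxy
      rw [real_inner_smul_left, real_inner_smul_left, real_inner_self_eq_norm_sq] at h1
      rw [le_div_iff₀ hε0]
      have h2 : ‖y‖⁻¹ * ‖y‖^2 = ‖y‖ := by field_simp
      nlinarith
  have h0polar : (0 : EuclideanSpace ℝ (Fin n)) ∈ polarSet K := by
    intro x hx; simp
  -- N
  have hNub : ∀ u ∈ K, suppFn (polarSet K) u ≤ 1 := by
    intro u hu
    apply csSup_le ⟨_, Set.mem_image_of_mem _ h0polar⟩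
    rintro r ⟨y, hy, rfl⟩
    show (inner ℝ y u : ℝ) ≤ 1
    rw [real_inner_comm]
    exact hy u hu
  have hNlb : ∀ u : EuclideanSpace ℝ (Fin n), ∀ y ∈ polarSet K,
      (inner ℝ y u : ℝ) ≤ suppFn (polarSet K) u := by
    intro u y hy
    apply le_csSup
    · refine ⟨(2 / ε) * ‖u‖, ?_⟩
      rintro r ⟨z, hz, rfl⟩
      calc (inner ℝ z u : ℝ) ≤ ‖z‖ * ‖u‖ := real_inner_le_norm z u
        _ ≤ (2/ε) * ‖u‖ := by
            have h1 := hpolar_bound z hz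
            have h2 : (0:ℝ) ≤ ‖u‖ := norm_nonneg u
            nlinarith
    · exact Set.mem_image_of_mem _ hy
  -- D and P
  set D : Set (EuclideanSpace ℝ (Fin n)) :=
    {w | (∀ c ∈ C, (inner ℝ c w : ℝ) = 0) ∧ ∀ b ∈ B, (inner ℝ b w : ℝ) ≤ 1} with hDdef
  have hDpolar : D ⊆ polarSet K := by
    rintro w ⟨hwC, hwB⟩ x hx
    rw [hK] at hx
    obtain ⟨b, hb, c, hc, rfl⟩ := hx
    rw [inner_add_left]
    have h1 := hwB b hb; have h2 := hwC c hc; linarith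
  have hD0 : (0 : EuclideanSpace ℝ (Fin n)) ∈ D :=
    ⟨fun c _ => by simp, fun b _ => by simp⟩
  have hDsymm : ∀ w ∈ D, -w ∈ D := by
    rintro w ⟨hw1, hw2⟩
    refine ⟨fun c hc => by rw [inner_neg_right, hw1 c hc, neg_zero], fun b hb => ?_⟩
    have h := hw2 (-b) (hBsymm b hb)
    rw [inner_neg_left] at h
    rw [inner_neg_right]
    linarith
  have hDclosed : IsClosed D := by
    have hrw : D = (⋂ c ∈ C, {w | (inner ℝ c w : ℝ) = 0}) ∩
        ⋂ b ∈ B, {w : EuclideanSpace ℝ (Fin n) | (inner ℝ b w : ℝ) ≤ 1} := by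
      ext w
      simp only [hDdef, Set.mem_setOf_eq, Set.mem_inter_iff, Set.mem_iInter]
    rw [hrw]
    refine IsClosed.inter ?_ ?_
    · exact isClosed_biInter fun c _ =>
        isClosed_eq (Continuous.inner continuous_const continuous_id) continuous_const
    · exact isClosed_biInter fun b _ =>
        isClosed_le (Continuous.inner continuous_const continuous_id) continuous_const
  have hDcompact : IsCompact D := by
    apply Metric.isCompact_of_isClosed_isBounded hDclosed
    apply (Metric.isBounded_closedBall (x := (0 : EuclideanSpace ℝ (Fin n))) (r := 2/ε)).subset
    intro w hw
    simpa [Metric.mem_closedBall, dist_zero_right] using hpolar_bound w (hDpolar hw)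
  set P : EuclideanSpace ℝ (Fin n) → ℝ :=
    fun u => sSup ((fun w => (inner ℝ u w : ℝ)) '' D) with hPdef
  have hPbdd : ∀ u : EuclideanSpace ℝ (Fin n),
      BddAbove ((fun w => (inner ℝ u w : ℝ)) '' D) := by
    intro u
    refine ⟨(2/ε) * ‖u‖, ?_⟩
    rintro r ⟨w, hw, rfl⟩
    calc (inner ℝ u w : ℝ) ≤ ‖u‖ * ‖w‖ := real_inner_le_norm u w
      _ ≤ (2/ε) * ‖u‖ := by
          have h1 := hpolar_bound w (hDpolar hw)
          have h2 : (0:ℝ) ≤ ‖u‖ := norm_nonneg u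
          nlinarith
  have hPle : ∀ u : EuclideanSpace ℝ (Fin n), ∀ w ∈ D, (inner ℝ u w : ℝ) ≤ P u := fun u w hw =>
    le_csSup (hPbdd u) (Set.mem_image_of_mem _ hw)
  have hPatt : ∀ u : EuclideanSpace ℝ (Fin n), ∃ w ∈ D, (inner ℝ u w : ℝ) = P u := by
    intro u
    have hcont : Continuous fun w : EuclideanSpace ℝ (Fin n) => (inner ℝ u w : ℝ) :=
      continuous_const.inner continuous_id
    obtain ⟨w, hwD, hmax⟩ := hDcompact.exists_isMaxOn ⟨0, hD0⟩ hcont.continuousOn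
    refine ⟨w, hwD, ?_⟩
    exact (IsGreatest.csSup_eq ⟨Set.mem_image_of_mem _ hwD, by
      rintro r ⟨w', hw', rfl⟩; exact hmax hw'⟩).symm
  have hPsmul : ∀ (t : ℝ), 0 ≤ t → ∀ u, P (t • u) = t * P u := by
    intro t ht u
    obtain ⟨w, hwD, hw⟩ := hPatt u
    obtain ⟨w', hw'D, hw'⟩ := hPatt (t • u)
    apply le_antisymm
    · rw [← hw', real_inner_smul_left]
      exact mul_le_mul_of_nonneg_left (hPle u w' hw'D) ht
    · rw [← hw]
      have h1 : (inner ℝ (t • u) w : ℝ) ≤ P (t • u) := hPle _ w hwD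
      rw [real_inner_smul_left] at h1
      linarith
  have hPneg : ∀ u, P (-u) = P u := by
    have h : ∀ u : EuclideanSpace ℝ (Fin n), P (-u) ≤ P u := by
      intro u
      obtain ⟨w, hwD, hw⟩ := hPatt (-u)
      rw [← hw, inner_neg_left, ← inner_neg_right]
      exact hPle u (-w) (hDsymm w hwD)
    intro u
    have h2 := h (-u); rw [neg_neg] at h2; exact le_antisymm (h u) h2
  have hPadd : ∀ x y : EuclideanSpace ℝ (Fin n), P (x + y) ≤ P x + P y := by
    intro x y
    obtain ⟨w, hwD, hw⟩ := hPatt (x + y)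
    rw [← hw, inner_add_left]
    exact add_le_add (hPle x w hwD) (hPle y w hwD)
  have hPpos : ∀ x, x ∈ U → x ≠ 0 → 0 < P x := by
    intro x hxU hx0
    have hxV : x ∉ V := by
      intro hxV
      have : x ∈ (⊥ : Submodule ℝ (EuclideanSpace ℝ (Fin n))) := by
        rw [← hUV]; exact Submodule.mem_inf.mpr ⟨hxU, hxV⟩
      exact hx0 (by simpa using this)
    have hx' : x ∉ Vᗮᗮ := by rwa [Submodule.orthogonal_orthogonal]
    rw [Submodule.mem_orthogonal] at hx'
    push_neg at hx'
    obtain ⟨w₀, hw₀V, hw₀x⟩ := hx'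
    obtain ⟨w₁, hw₁V, hw₁x⟩ : ∃ w₁ ∈ Vᗮ, 0 < (inner ℝ w₁ x : ℝ) := by
      rcases hw₀x.lt_or_gt with h | h
      · exact ⟨-w₀, neg_mem hw₀V, by rw [inner_neg_left]; linarith⟩
      · exact ⟨w₀, hw₀V, h⟩
    have hcont : Continuous fun b : EuclideanSpace ℝ (Fin n) => (inner ℝ b w₁ : ℝ) :=
      continuous_id.inner continuous_const
    obtain ⟨bm, hbm, hbmax⟩ := hBcomp.exists_isMaxOn hBne hcont.continuousOn
    set m := max (inner ℝ bm w₁ : ℝ) 1 with hmdef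
    have hm1 : (1:ℝ) ≤ m := le_max_right _ _
    have hm0 : (0:ℝ) < m := lt_of_lt_of_le one_pos hm1
    have hwD : m⁻¹ • w₁ ∈ D := by
      constructor
      · intro c hc
        rw [real_inner_smul_right,
          Submodule.inner_right_of_mem_orthogonal (hCV hc) hw₁V, mul_zero]
      · intro b hb
        rw [real_inner_smul_right]
        have hble : (inner ℝ b w₁ : ℝ) ≤ m := le_trans (hbmax hb) (le_max_left _ _)
        calc m⁻¹ * (inner ℝ b w₁ : ℝ) ≤ m⁻¹ * m :=
              mul_le_mul_of_nonneg_left hble (inv_pos.mpr hm0).le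
          _ = 1 := inv_mul_cancel₀ hm0.ne'
    have hpos : 0 < (inner ℝ x (m⁻¹ • w₁) : ℝ) := by
      rw [real_inner_smul_right]
      have h : 0 < (inner ℝ x w₁ : ℝ) := by rw [real_inner_comm]; exact hw₁x
      exact mul_pos (inv_pos.mpr hm0) h
    exact lt_of_lt_of_le hpos (hPle x _ hwD)
  -- bipolar
  have hBclosed : IsClosed B := hBcomp.isClosed
  have hPball : ∀ x, x ∈ U → P x ≤ 1 → x ∈ B := by
    intro x hxU hPx
    by_contra hxB
    obtain ⟨f, u, hfB, hfx⟩ := geometric_hahn_banach_closed_point hBconv hBclosed hxB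
    have hu0 : 0 < u := by have h := hfB 0 h0B; simpa using h
    set g : EuclideanSpace ℝ (Fin n) →ₗ[ℝ] ℝ := (f : EuclideanSpace ℝ (Fin n) →ₗ[ℝ] ℝ) ∘ₗ prU
      with hgdef
    set z := (InnerProductSpace.toDual ℝ (EuclideanSpace ℝ (Fin n))).symm
      (LinearMap.toContinuousLinearMap g) with hzdef
    have hzval : ∀ a, (inner ℝ z a : ℝ) = f (prU a) := by
      intro a
      rw [hzdef, InnerProductSpace.toDual_symm_apply]
      simp [hgdef]
    have hwD : u⁻¹ • z ∈ D := by
      constructor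
      · intro c hc
        rw [real_inner_smul_right, real_inner_comm, hzval, hprU_right c (hCV hc), map_zero,
          mul_zero]
      · intro b hb
        rw [real_inner_smul_right, real_inner_comm, hzval, hprU_left b (hBU hb)]
        calc u⁻¹ * f b ≤ u⁻¹ * u :=
              mul_le_mul_of_nonneg_left (hfB b hb).le (inv_pos.mpr hu0).le
          _ = 1 := inv_mul_cancel₀ hu0.ne'
    have hle := hPle x _ hwD
    rw [real_inner_smul_right, real_inner_comm, hzval, hprU_left x hxU] at hle
    have h1 : 1 < u⁻¹ * f x := by
      rw [← inv_mul_cancel₀ hu0.ne']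
      exact mul_lt_mul_of_pos_left hfx (inv_pos.mpr hu0)
    linarith
  -- the core two-dimensional claim
  have claim : ∀ x y : EuclideanSpace ℝ (Fin n), x ∈ U → y ∈ U → P x = 1 → P y = 1 →
      x + y ≠ 0 → x - y ≠ 0 → P (x + y) ≤ P (x - y) →
      ∃ a ∈ B, ∃ b ∈ B, ∃ w₁ ∈ D, ∃ w₂ ∈ D,
        2 < (inner ℝ (a + b) w₁ : ℝ) + (inner ℝ (a - b) w₂ : ℝ) := by
    intro x y hxU hyU hPx hPy hxy hxy' hst
    have hs0 : 0 < P (x + y) := hPpos _ (U.add_mem hxU hyU) hxy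
    have ht0 : 0 < P (x - y) := hPpos _ (U.sub_mem hxU hyU) hxy'
    have hst2 : 2 ≤ P (x + y) + P (x - y) := by
      have h1 : P ((x + y) + (x - y)) ≤ P (x + y) + P (x - y) := hPadd _ _
      have h2 : (x + y) + (x - y) = (2:ℝ) • x := by rw [two_smul]; abel
      rw [h2, hPsmul 2 (by norm_num) x, hPx] at h1
      linarith
    have hxB : x ∈ B := hPball x hxU hPx.le
    have hyB : y ∈ B := hPball y hyU hPy.le
    rcases lt_or_eq_of_le hst2 with hlt | heq
    · obtain ⟨w₁, hw₁D, hw₁⟩ := hPatt (x + y)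
      obtain ⟨w₂, hw₂D, hw₂⟩ := hPatt (x - y)
      exact ⟨x, hxB, y, hyB, w₁, hw₁D, w₂, hw₂D, by rw [hw₁, hw₂]; linarith⟩
    · set s := P (x + y) with hsdef
      set t := P (x - y) with htdef
      have ht2 : t < 2 := by linarith
      obtain ⟨w₁, hw₁D, hw₁⟩ := hPatt x
      obtain ⟨w₂, hw₂D, hw₂⟩ := hPatt y
      have hPx' : P (s⁻¹ • (x + y)) = 1 := by
        rw [hPsmul _ (inv_nonneg.mpr hs0.le), ← hsdef, inv_mul_cancel₀ hs0.ne']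
      have hPy' : P (t⁻¹ • (x - y)) = 1 := by
        rw [hPsmul _ (inv_nonneg.mpr ht0.le), ← htdef, inv_mul_cancel₀ ht0.ne']
      have hx'B : s⁻¹ • (x + y) ∈ B :=
        hPball _ (U.smul_mem _ (U.add_mem hxU hyU)) hPx'.le
      have hy'B : t⁻¹ • (x - y) ∈ B :=
        hPball _ (U.smul_mem _ (U.sub_mem hxU hyU)) hPy'.le
      have hc1 : (inner ℝ y w₁ : ℝ) ≤ 1 := hw₁D.2 y hyB
      have hc2 : -(1:ℝ) ≤ (inner ℝ y w₁ : ℝ) := by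
        have h := hw₁D.2 (-y) (hBsymm y hyB)
        rw [inner_neg_left] at h; linarith
      have hd1 : (inner ℝ x w₂ : ℝ) ≤ 1 := hw₂D.2 x hxB
      have hd2 : -(1:ℝ) ≤ (inner ℝ x w₂ : ℝ) := by
        have h := hw₂D.2 (-x) (hBsymm x hxB)
        rw [inner_neg_left] at h; linarith
      refine ⟨_, hx'B, _, hy'B, w₁, hw₁D, w₂, hw₂D, ?_⟩
      have hxy1 : s⁻¹ • (x + y) + t⁻¹ • (x - y) = (s⁻¹ + t⁻¹) • x + (s⁻¹ - t⁻¹) • y := by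
        rw [smul_add, smul_sub, add_smul, sub_smul]; abel
      have hxy2 : s⁻¹ • (x + y) - t⁻¹ • (x - y) = (s⁻¹ - t⁻¹) • x + (s⁻¹ + t⁻¹) • y := by
        rw [smul_add, smul_sub, add_smul, sub_smul]; abel
      rw [hxy1, hxy2, inner_add_left, inner_add_left, real_inner_smul_left,
          real_inner_smul_left, real_inner_smul_left, real_inner_smul_left, hw₁, hw₂, hPx, hPy]
      have hsle : s ≤ t := hst
      have hinv : t⁻¹ ≤ s⁻¹ := by
        rw [← one_div, ← one_div]
        exact one_div_le_one_div_of_le hs0 hsle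
      have e1 : (s⁻¹ - t⁻¹) * (-1) ≤ (s⁻¹ - t⁻¹) * (inner ℝ y w₁ : ℝ) :=
        mul_le_mul_of_nonneg_left hc2 (by linarith)
      have e2 : (s⁻¹ - t⁻¹) * (-1) ≤ (s⁻¹ - t⁻¹) * (inner ℝ x w₂ : ℝ) :=
        mul_le_mul_of_nonneg_left hd2 (by linarith)
      have e3 : (2:ℝ) < 4 * t⁻¹ := by
        rw [show (4:ℝ) * t⁻¹ = 4 / t by rw [div_eq_mul_inv]]
        rw [lt_div_iff₀ ht0]
        linarith
      nlinarith
  -- choose independent unit vectors in U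
  have hU2 : 2 ≤ Module.finrank ℝ U := h2
  let bU := Module.finBasis ℝ U
  set i0 : Fin (Module.finrank ℝ U) := ⟨0, by omega⟩ with hi0
  set i1 : Fin (Module.finrank ℝ U) := ⟨1, by omega⟩ with hi1
  set v₀ : EuclideanSpace ℝ (Fin n) := ↑(bU i0) with hv₀def
  set v₁ : EuclideanSpace ℝ (Fin n) := ↑(bU i1) with hv₁def
  have hindep : ∀ (α β : ℝ), α • v₀ = β • v₁ → α = 0 := by
    intro α β h
    have h' : α • bU i0 = β • bU i1 := by
      apply Subtype.ext
      rw [Submodule.coe_smul, Submodule.coe_smul]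
      exact h
    have h3 := congrArg (fun v => (bU.repr v) i0) h'
    have hne : i1 ≠ i0 := by simp [hi0, hi1, Fin.ext_iff]
    simp only [_root_.map_smul, Finsupp.smul_apply, Module.Basis.repr_self, smul_eq_mul,
      Finsupp.single_eq_same, Finsupp.single_eq_of_ne' hne, mul_one, mul_zero] at h3
    exact h3
  have hv₀U : v₀ ∈ U := (bU i0).2
  have hv₁U : v₁ ∈ U := (bU i1).2
  have hv₀0 : v₀ ≠ 0 := by
    intro h
    have := hindep 1 0 (by rw [h]; simp)
    norm_num at this
  have hindep' : ∀ (α β : ℝ), α • v₁ = β • v₀ → α = 0 := by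
    intro α β h
    have h' : α • bU i1 = β • bU i0 := by
      apply Subtype.ext
      rw [Submodule.coe_smul, Submodule.coe_smul]
      exact h
    have h3 := congrArg (fun v => (bU.repr v) i1) h'
    have hne : i0 ≠ i1 := by simp [hi0, hi1, Fin.ext_iff]
    simp only [_root_.map_smul, Finsupp.smul_apply, Module.Basis.repr_self, smul_eq_mul,
      Finsupp.single_eq_same, Finsupp.single_eq_of_ne' hne, mul_one, mul_zero] at h3
    exact h3
  have hv₁0 : v₁ ≠ 0 := by
    intro h
    have h' := hindep' 1 0 (by rw [h]; simp)
    norm_num at h'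
  have hPv₀ : 0 < P v₀ := hPpos _ hv₀U hv₀0
  have hPv₁ : 0 < P v₁ := hPpos _ hv₁U hv₁0
  set x : EuclideanSpace ℝ (Fin n) := (P v₀)⁻¹ • v₀ with hxdef
  set y : EuclideanSpace ℝ (Fin n) := (P v₁)⁻¹ • v₁ with hydef
  have hxU : x ∈ U := U.smul_mem _ hv₀U
  have hyU : y ∈ U := U.smul_mem _ hv₁U
  have hPx : P x = 1 := by
    rw [hxdef, hPsmul _ (inv_nonneg.mpr hPv₀.le), inv_mul_cancel₀ hPv₀.ne']
  have hPy : P y = 1 := by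
    rw [hydef, hPsmul _ (inv_nonneg.mpr hPv₁.le), inv_mul_cancel₀ hPv₁.ne']
  have hxyne : x + y ≠ 0 := by
    intro h
    have h1 : (P v₀)⁻¹ • v₀ = (-(P v₁)⁻¹) • v₁ := by
      rw [neg_smul, ← hydef, ← hxdef]
      exact eq_neg_of_add_eq_zero_left h
    exact (inv_pos.mpr hPv₀).ne' (hindep _ _ h1)
  have hxyne' : x - y ≠ 0 := by
    intro h
    have h1 : (P v₀)⁻¹ • v₀ = (P v₁)⁻¹ • v₁ := by
      rw [← hydef, ← hxdef]
      exact sub_eq_zero.mp h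
    exact (inv_pos.mpr hPv₀).ne' (hindep _ _ h1)
  obtain ⟨a, haB, b, hbB, w₁, hw₁D, w₂, hw₂D, hkey⟩ :
      ∃ a ∈ B, ∃ b ∈ B, ∃ w₁ ∈ D, ∃ w₂ ∈ D,
        2 < (inner ℝ (a + b) w₁ : ℝ) + (inner ℝ (a - b) w₂ : ℝ) := by
    rcases le_total (P (x + y)) (P (x - y)) with h | h
    · exact claim x y hxU hyU hPx hPy hxyne hxyne' h
    · have e1 : x + -y = x - y := (sub_eq_add_neg x y).symm
      have e2 : x - -y = x + y := sub_neg_eq_add x y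
      refine claim x (-y) hxU (U.neg_mem hyU) hPx (by rw [hPneg]; exact hPy) ?_ ?_ ?_
      · rw [e1]; exact hxyne'
      · rw [e2]; exact hxyne
      · rw [e1, e2]; exact h
  -- the C-side functional
  have hCnotU : ∃ w ∈ Uᗮ, ∃ c ∈ C, (inner ℝ w c : ℝ) ≠ 0 := by
    by_contra hcon
    push_neg at hcon
    have hCsub : C ⊆ (U : Set (EuclideanSpace ℝ (Fin n))) := by
      intro c hc
      have hmem : c ∈ Uᗮᗮ := by
        rw [Submodule.mem_orthogonal]
        intro w hw
        exact hcon w hw c hc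
      rwa [Submodule.orthogonal_orthogonal] at hmem
    have hVU : V ≤ U := Submodule.span_le.mpr hCsub
    have hVbot : V ≤ (⊥ : Submodule ℝ (EuclideanSpace ℝ (Fin n))) := by
      rw [← hUV]
      exact le_inf hVU le_rfl
    have : V = ⊥ := le_bot_iff.mp hVbot
    rw [this, finrank_bot] at hq
    omega
  obtain ⟨w₀, hw₀U, c₀, hc₀C, hw₀c⟩ := hCnotU
  obtain ⟨w₃, hw₃U, hw₃c⟩ : ∃ w ∈ Uᗮ, 0 < (inner ℝ w c₀ : ℝ) := by
    rcases hw₀c.lt_or_gt with h | h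
    · exact ⟨-w₀, neg_mem hw₀U, by rw [inner_neg_left]; linarith⟩
    · exact ⟨w₀, hw₀U, h⟩
  have hcontC : Continuous fun c : EuclideanSpace ℝ (Fin n) => (inner ℝ c w₃ : ℝ) :=
    continuous_id.inner continuous_const
  obtain ⟨fm, hfmC, hfmax⟩ := hCcomp.exists_isMaxOn hCne hcontC.continuousOn
  set m : ℝ := (inner ℝ fm w₃ : ℝ) with hmdef
  have hm0 : 0 < m := by
    have h1 : (inner ℝ c₀ w₃ : ℝ) ≤ m := hfmax hc₀C
    have h2 : 0 < (inner ℝ c₀ w₃ : ℝ) := by rw [real_inner_comm]; exact hw₃c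
    linarith
  set yf : EuclideanSpace ℝ (Fin n) := m⁻¹ • w₃ with hyfdef
  have hyfpolar : yf ∈ polarSet K := by
    intro p hp
    rw [hK] at hp
    obtain ⟨b', hb', c', hc', rfl⟩ := hp
    rw [inner_add_left, hyfdef, real_inner_smul_right, real_inner_smul_right]
    have hb0 : (inner ℝ b' w₃ : ℝ) = 0 :=
      Submodule.inner_right_of_mem_orthogonal (hBU hb') hw₃U
    have hcle : (inner ℝ c' w₃ : ℝ) ≤ m := hfmax hc'
    rw [hb0, mul_zero, zero_add]
    calc m⁻¹ * (inner ℝ c' w₃ : ℝ) ≤ m⁻¹ * m :=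
          mul_le_mul_of_nonneg_left hcle (inv_pos.mpr hm0).le
      _ = 1 := inv_mul_cancel₀ hm0.ne'
  have hyffm : (inner ℝ yf fm : ℝ) = 1 := by
    rw [hyfdef, real_inner_smul_left, real_inner_comm, ← hmdef, inv_mul_cancel₀ hm0.ne']
  -- integrability and Hlawka for N
  have hInt : ∀ u : EuclideanSpace ℝ (Fin n), Integrable (fun v => |(inner ℝ u v : ℝ)|) ν := by
    intro u
    refine Integrable.mono' (integrable_const ‖u‖)
      (((Continuous.inner continuous_const continuous_id).abs).aestronglyMeasurable) ?_
    have hae : ∀ᵐ v ∂ν, v ∈ Metric.sphere (0 : EuclideanSpace ℝ (Fin n)) 1 :=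
      MeasureTheory.mem_ae_iff.mpr hνsph
    refine hae.mono fun v hv => ?_
    have hv1 : ‖v‖ = 1 := by simpa [dist_zero_right] using hv
    rw [Real.norm_eq_abs, abs_abs]
    calc |(inner ℝ u v : ℝ)| ≤ ‖u‖ * ‖v‖ := abs_real_inner_le_norm u v
      _ = ‖u‖ := by rw [hv1, mul_one]
  have hInt2 : ∀ p' q' : EuclideanSpace ℝ (Fin n),
      Integrable (fun v => |(inner ℝ p' v : ℝ)| + |(inner ℝ q' v : ℝ)|) ν :=
    fun p' q' => (hInt p').add (hInt q')
  have hInt3 : ∀ p' q' r' : EuclideanSpace ℝ (Fin n),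
      Integrable (fun v => |(inner ℝ p' v : ℝ)| + |(inner ℝ q' v : ℝ)| + |(inner ℝ r' v : ℝ)|) ν :=
    fun p' q' r' => (hInt2 p' q').add (hInt r')
  have hInt4 : ∀ p' q' r' s' : EuclideanSpace ℝ (Fin n),
      Integrable (fun v => |(inner ℝ p' v : ℝ)| + |(inner ℝ q' v : ℝ)| + |(inner ℝ r' v : ℝ)|
        + |(inner ℝ s' v : ℝ)|) ν :=
    fun p' q' r' s' => (hInt3 p' q' r').add (hInt s')
  have hlawkaN : ∀ p q r : EuclideanSpace ℝ (Fin n),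
      suppFn (polarSet K) (p + q) + suppFn (polarSet K) (q + r) + suppFn (polarSet K) (r + p) ≤
      suppFn (polarSet K) p + suppFn (polarSet K) q + suppFn (polarSet K) r +
        suppFn (polarSet K) (p + q + r) := by
    intro p q r
    rw [hνrep, hνrep, hνrep, hνrep, hνrep, hνrep, hνrep]
    have e1 : ∫ v, (|(inner ℝ (p+q) v : ℝ)| + |(inner ℝ (q+r) v : ℝ)| + |(inner ℝ (r+p) v : ℝ)|) ∂ν
        = ∫ v, |(inner ℝ (p+q) v : ℝ)| ∂ν + ∫ v, |(inner ℝ (q+r) v : ℝ)| ∂ν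
          + ∫ v, |(inner ℝ (r+p) v : ℝ)| ∂ν := by
      rw [integral_add (hInt2 _ _) (hInt _), integral_add (hInt _) (hInt _)]
    have e2 : ∫ v, (|(inner ℝ p v : ℝ)| + |(inner ℝ q v : ℝ)| + |(inner ℝ r v : ℝ)|
          + |(inner ℝ (p+q+r) v : ℝ)|) ∂ν
        = ∫ v, |(inner ℝ p v : ℝ)| ∂ν + ∫ v, |(inner ℝ q v : ℝ)| ∂ν + ∫ v, |(inner ℝ r v : ℝ)| ∂ν
          + ∫ v, |(inner ℝ (p+q+r) v : ℝ)| ∂ν := by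
      rw [integral_add (hInt3 _ _ _) (hInt _), integral_add (hInt2 _ _) (hInt _),
        integral_add (hInt _) (hInt _)]
    rw [← e1, ← e2]
    refine integral_mono (hInt3 _ _ _) (hInt4 _ _ _ _) ?_
    intro v
    dsimp only
    rw [inner_add_left, inner_add_left, inner_add_left, inner_add_left, inner_add_left]
    exact hlawka_abs _ _ _
  -- assembly
  set xx : EuclideanSpace ℝ (Fin n) := a + -fm with hxxdef
  set yy : EuclideanSpace ℝ (Fin n) := b + fm with hyydef
  set zz : EuclideanSpace ℝ (Fin n) := -b + fm with hzzdef
  have hxxK : xx ∈ K := by rw [hK, hxxdef]; exact Set.add_mem_add haB (hCsymm fm hfmC)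
  have hyyK : yy ∈ K := by rw [hK, hyydef]; exact Set.add_mem_add hbB hfmC
  have hzzK : zz ∈ K := by rw [hK, hzzdef]; exact Set.add_mem_add (hBsymm b hbB) hfmC
  have hswK : xx + yy + zz ∈ K := by
    have h : xx + yy + zz = a + fm := by rw [hxxdef, hyydef, hzzdef]; abel
    rw [h, hK]; exact Set.add_mem_add haB hfmC
  have e1 : xx + yy = a + b := by rw [hxxdef, hyydef]; abel
  have e2 : yy + zz = fm + fm := by rw [hyydef, hzzdef]; abel
  have e3 : zz + xx = a - b := by rw [hzzdef, hxxdef]; abel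
  have l1 : (inner ℝ (a + b) w₁ : ℝ) ≤ suppFn (polarSet K) (xx + yy) := by
    rw [e1]
    have h := hNlb (a + b) w₁ (hDpolar hw₁D)
    rwa [real_inner_comm] at h
  have l3 : (inner ℝ (a - b) w₂ : ℝ) ≤ suppFn (polarSet K) (zz + xx) := by
    rw [e3]
    have h := hNlb (a - b) w₂ (hDpolar hw₂D)
    rwa [real_inner_comm] at h
  have l2 : (2:ℝ) ≤ suppFn (polarSet K) (yy + zz) := by
    rw [e2]
    have h := hNlb (fm + fm) yf hyfpolar
    rw [inner_add_right, hyffm] at h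
    linarith
  have u1 := hNub xx hxxK
  have u2 := hNub yy hyyK
  have u3 := hNub zz hzzK
  have u4 := hNub _ hswK
  have hH := hlawkaN xx yy zz
  linarith

/-- If `K` is the unit ball of a norm on `ℝⁿ`, `n ≥ 3`, whose polar body is a zonoid, then
`K` admits no decomposition as a direct Minkowski sum `K = B ⊕ C` of convex bodies of
positive dimensions adding up to `n`. -/
theorem no_direct_summand_of_polar_zonoid (n : ℕ) (hn : 3 ≤ n)
    (K : Set (EuclideanSpace ℝ (Fin n)))
    (hKcomp : IsCompact K) (hKconv : Convex ℝ K) (hKsymm : K = -K)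
    (hKint : (0 : EuclideanSpace ℝ (Fin n)) ∈ interior K)
    (hpolar : IsZonoid (polarSet K)) :
    ¬ ∃ B C : Set (EuclideanSpace ℝ (Fin n)),
        IsCompact B ∧ IsCompact C ∧ Convex ℝ B ∧ Convex ℝ C ∧ B.Nonempty ∧ C.Nonempty ∧
        K = B + C ∧
        Submodule.span ℝ B ⊓ Submodule.span ℝ C = ⊥ ∧
        0 < Module.finrank ℝ (Submodule.span ℝ B) ∧
        0 < Module.finrank ℝ (Submodule.span ℝ C) ∧
        Module.finrank ℝ (Submodule.span ℝ B) + Module.finrank ℝ (Submodule.span ℝ C) = n := by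
  
  rintro ⟨B, C, hBcomp, hCcomp, hBconv, hCconv, hBne, hCne, hK, hUV, hp, hq, hsum⟩
  by_cases h2 : 2 ≤ Module.finrank ℝ (Submodule.span ℝ B)
  · exact key n K B C hBcomp hCcomp hBconv hBne hCne hK hUV h2 hq hsum hKsymm hKint hpolar
  · exact key n K C B hCcomp hBcomp hCconv hCne hBne (by rw [hK, add_comm])
      (by rw [inf_comm]; exact hUV) (by omega) hp (by omega) hKsymm hKint hpolar
end

section
/- Let K = B + C be a convex body (compact, full-dimensional, centrally symmetric) in ℝⁿ, n ≥ 3, where B, C are compact convex centrally symmetric sets with 1 ≤ dim C ≤ n−2. Then the polar body K° is not a zonoid. -/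
open MeasureTheory Pointwise

section Aux

open RealInnerProductSpace

variable {E : Type*} [NormedAddCommGroup E] [InnerProductSpace ℝ E]

/-- The face (argmax set) of `s` in direction `u`. -/
def mFace (s : Set E) (u : E) : Set E := {x ∈ s | ∀ y ∈ s, ⟪y, u⟫ ≤ ⟪x, u⟫}

lemma mFace_nonempty {s : Set E} (hs : IsCompact s) (hne : s.Nonempty) (u : E) :
    (mFace s u).Nonempty := by
  have hc : ContinuousOn (fun y : E => ⟪y, u⟫) s :=
    (continuous_id.inner continuous_const).continuousOn
  obtain ⟨x, hx, hmax⟩ := hs.exists_isMaxOn hne hc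
  exact ⟨x, hx, fun y hy => hmax hy⟩

lemma mem_mFace_add {B C : Set E} {u b : E} (hb : b ∈ mFace B u) {c : E} (hc : c ∈ C)
    (hC0 : ∀ c' ∈ C, ⟪c', u⟫ = 0) : b + c ∈ mFace (B + C) u := by
  refine ⟨Set.add_mem_add hb.1 hc, ?_⟩
  rintro y ⟨b', hb', c', hc', rfl⟩
  rw [inner_add_left, inner_add_left, hC0 c' hc', hC0 c hc]
  simpa using hb.2 b' hb'

lemma mFace_neg_mem {B : Set E} (hB : B = -B) {u b : E} (hb : b ∈ mFace B (-u)) :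
    -b ∈ mFace B u := by
  constructor
  · rw [hB]; exact Set.neg_mem_neg.mpr hb.1
  · intro y hy
    have hy' : -y ∈ B := by rw [hB]; exact Set.neg_mem_neg.mpr hy
    have := hb.2 (-y) hy'
    simp only [inner_neg_left, inner_neg_right, neg_neg] at this ⊢
    linarith

/-- If `u_n → u` and for each `n` every point of the face of `B` at `u_n` has `⟪·,v⟫ ≤ r`,
then some point of the face of `B` at `u` has `⟪·,v⟫ ≤ r`. -/
lemma exists_limit_face {B : Set E} (hBcomp : IsCompact B) (hBne : B.Nonempty)
    {useq : ℕ → E} {u : E} (hu : Filter.Tendsto useq Filter.atTop (nhds u))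
    {v : E} {r : ℝ} (hbound : ∀ n, ∀ b ∈ mFace B (useq n), ⟪b, v⟫ ≤ r) :
    ∃ b ∈ mFace B u, ⟪b, v⟫ ≤ r := by
  choose bseq hbseq using fun n => mFace_nonempty hBcomp hBne (useq n)
  obtain ⟨b, hbB, φ, hφ, hblim⟩ := hBcomp.tendsto_subseq (fun n => (hbseq n).1)
  have huφ : Filter.Tendsto (fun k => useq (φ k)) Filter.atTop (nhds u) :=
    hu.comp hφ.tendsto_atTop
  refine ⟨b, ⟨hbB, ?_⟩, ?_⟩
  · intro y hy
    have h1 : Filter.Tendsto (fun k => ⟪y, useq (φ k)⟫) Filter.atTop (nhds ⟪y, u⟫) :=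
      Filter.Tendsto.inner tendsto_const_nhds huφ
    have h2 : Filter.Tendsto (fun k => ⟪bseq (φ k), useq (φ k)⟫) Filter.atTop (nhds ⟪b, u⟫) :=
      Filter.Tendsto.inner hblim huφ
    exact le_of_tendsto_of_tendsto' h1 h2 (fun k => (hbseq (φ k)).2 y hy)
  · have h3 : Filter.Tendsto (fun k => ⟪bseq (φ k), v⟫) Filter.atTop (nhds ⟪b, v⟫) :=
      Filter.Tendsto.inner hblim tendsto_const_nhds
    exact le_of_tendsto h3 (Filter.Eventually.of_forall fun k =>
      hbound (φ k) _ (hbseq (φ k)))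

/-- The key geometric lemma: if `B` is a symmetric compact body, `C` a symmetric set,
and `v` is a direction not orthogonal to `C`, then (provided the orthogonal complement
of the span of `C` has rank `> 1`) there is a direction `u` orthogonal to `C` whose face
of `B + C` contains points on both strict sides of `v^⊥`. -/
lemma exists_sign_change {B C : Set E} (hBcomp : IsCompact B) (hBne : B.Nonempty)
    (hBsymm : B = -B) (hCsymm : C = -C)
    (hW : 1 < Module.rank ℝ ↥((Submodule.span ℝ C)ᗮ))
    {v cstar : E} (hcs : cstar ∈ C) (hposc : 0 < ⟪cstar, v⟫) :
    ∃ u x y, u ∈ (Submodule.span ℝ C)ᗮ ∧ ‖u‖ = 1 ∧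
      x ∈ mFace (B + C) u ∧ y ∈ mFace (B + C) u ∧ 0 < ⟪x, v⟫ ∧ ⟪y, v⟫ < 0 := by
  by_contra Hc
  push_neg at Hc
  set W := (Submodule.span ℝ C)ᗮ with hWdef
  set c₀ : ℝ := ⟪cstar, v⟫ with hc₀
  have horth : ∀ u, u ∈ W → ∀ c ∈ C, ⟪c, u⟫ = 0 := by
    intro u hu c hc
    exact (Submodule.mem_orthogonal _ u).mp hu c (Submodule.subset_span hc)
  set P : E → Prop := fun u => ∀ b ∈ mFace B u, c₀ ≤ ⟪b, v⟫ with hPdef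
  set N : E → Prop := fun u => ∀ b ∈ mFace B u, ⟪b, v⟫ ≤ -c₀ with hNdef
  have hcsneg : -cstar ∈ C := by rw [hCsymm]; exact Set.neg_mem_neg.mpr hcs
  have dich : ∀ u, u ∈ W → ‖u‖ = 1 → P u ∨ N u := by
    intro u huW hu1
    by_cases hex : ∃ x ∈ mFace (B + C) u, 0 < ⟪x, v⟫
    · left
      intro b hb
      obtain ⟨x, hx, hxv⟩ := hex
      have h1 : b + (-cstar) ∈ mFace (B + C) u := mem_mFace_add hb hcsneg (horth u huW)
      have h2 := Hc u x (b + -cstar) huW hu1 hx h1 hxv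
      rw [inner_add_left, inner_neg_left] at h2
      linarith
    · right
      intro b hb
      push_neg at hex
      have h1 : b + cstar ∈ mFace (B + C) u := mem_mFace_add hb hcs (horth u huW)
      have h2 := hex _ h1
      rw [inner_add_left] at h2
      linarith
  have hPN : ∀ u, P u → N (-u) := by
    intro u hP b hb
    have h1 : -b ∈ mFace B u := mFace_neg_mem hBsymm hb
    have := hP (-b) h1
    rw [inner_neg_left] at this
    linarith
  have hNP : ∀ u, N u → P (-u) := by
    intro u hN b hb
    have h1 : -b ∈ mFace B u := mFace_neg_mem hBsymm hb
    have := hN (-b) h1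
    rw [inner_neg_left] at this
    linarith
  have hsconn : IsConnected (Metric.sphere (0 : ↥W) 1) := isConnected_sphere hW 0 zero_le_one
  have hconn : IsConnected (Subtype.val '' (Metric.sphere (0 : ↥W) 1)) :=
    hsconn.image _ continuous_subtype_val.continuousOn
  set SS : Set E := Subtype.val '' (Metric.sphere (0 : ↥W) 1) with hSSdef
  have hSSmem : ∀ u ∈ SS, u ∈ W ∧ ‖u‖ = 1 := by
    rintro u ⟨⟨w, hw⟩, hsph, rfl⟩
    refine ⟨hw, ?_⟩
    simpa using hsph
  have hSSneg : ∀ u ∈ SS, -u ∈ SS := by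
    rintro u ⟨w, hsph, rfl⟩
    refine ⟨-w, by simpa using hsph, by simp⟩
  have keyN : ∀ u ∈ SS, u ∈ closure {z ∈ SS | N z} → N u := by
    intro u huS hcl
    obtain ⟨huW, hu1⟩ := hSSmem u huS
    rcases dich u huW hu1 with hP | hN
    · exfalso
      obtain ⟨seq, hseq, hlim⟩ := mem_closure_iff_seq_limit.mp hcl
      have hbound : ∀ n, ∀ b ∈ mFace B (seq n), ⟪b, v⟫ ≤ -c₀ := fun n => (hseq n).2
      obtain ⟨b, hb, hbv⟩ := exists_limit_face hBcomp hBne hlim hbound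
      have := hP b hb
      linarith
    · exact hN
  have keyP : ∀ u ∈ SS, u ∈ closure {z ∈ SS | P z} → P u := by
    intro u huS hcl
    obtain ⟨huW, hu1⟩ := hSSmem u huS
    rcases dich u huW hu1 with hP | hN
    · exact hP
    · exfalso
      obtain ⟨seq, hseq, hlim⟩ := mem_closure_iff_seq_limit.mp hcl
      have hbound : ∀ n, ∀ b ∈ mFace B (seq n), ⟪b, -v⟫ ≤ -c₀ := by
        intro n b hb
        have := (hseq n).2 b hb
        rw [inner_neg_right]
        linarith
      obtain ⟨b, hb, hbv⟩ := exists_limit_face hBcomp hBne hlim hbound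
      rw [inner_neg_right] at hbv
      have := hN b hb
      linarith
  obtain ⟨u₀, hu₀⟩ := hconn.nonempty
  obtain ⟨hu₀W, hu₀1⟩ := hSSmem u₀ hu₀
  have hne2 : {z ∈ SS | P z}.Nonempty ∧ {z ∈ SS | N z}.Nonempty := by
    rcases dich u₀ hu₀W hu₀1 with h | h
    · exact ⟨⟨u₀, hu₀, h⟩, ⟨-u₀, hSSneg u₀ hu₀, hPN u₀ h⟩⟩
    · exact ⟨⟨-u₀, hSSneg u₀ hu₀, hNP u₀ h⟩, ⟨u₀, hu₀, h⟩⟩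
  obtain ⟨p, hpS, hpN⟩ := hne2.2
  obtain ⟨q, hqS, hqP⟩ := hne2.1
  obtain ⟨w, hwS, hwN, hwP⟩ := isPreconnected_closed_iff.mp hconn.isPreconnected
      (closure {z ∈ SS | N z}) (closure {z ∈ SS | P z}) isClosed_closure isClosed_closure
      (fun u hu => by
        rcases dich u (hSSmem u hu).1 (hSSmem u hu).2 with h | h
        · exact Or.inr (subset_closure ⟨hu, h⟩)
        · exact Or.inl (subset_closure ⟨hu, h⟩))
      ⟨p, hpS, subset_closure ⟨hpS, hpN⟩⟩
      ⟨q, hqS, subset_closure ⟨hqS, hqP⟩⟩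
  have hNw := keyN w hwS hwN
  have hPw := keyP w hwS hwP
  obtain ⟨b, hb⟩ := mFace_nonempty hBcomp hBne w
  have h1 := hNw b hb
  have h2 := hPw b hb
  linarith

lemma suppFn_polar_eq_one {K : Set E} {u x : E} (hx : x ∈ mFace K u) (hpos : 0 < ⟪x, u⟫) :
    suppFn (polarSet K) x = 1 := by
  set M : ℝ := ⟪x, u⟫ with hM
  have hmem : M⁻¹ • u ∈ polarSet K := by
    intro z hz
    have h1 : ⟪z, u⟫ ≤ M := hx.2 z hz
    have : (inner ℝ z (M⁻¹ • u) : ℝ) = M⁻¹ * ⟪z, u⟫ := real_inner_smul_right z u M⁻¹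
    rw [this]
    rw [inv_mul_le_iff₀ hpos]
    linarith
  have hval : (inner ℝ (M⁻¹ • u) x : ℝ) = 1 := by
    rw [real_inner_smul_left, real_inner_comm]
    exact inv_mul_cancel₀ (ne_of_gt hpos)
  have hub : ∀ r ∈ (fun w => (inner ℝ w x : ℝ)) '' polarSet K, r ≤ 1 := by
    rintro r ⟨w, hw, rfl⟩
    have := hw x hx.1
    simp only []
    rwa [real_inner_comm]
  apply le_antisymm
  · exact csSup_le ⟨1, ⟨M⁻¹ • u, hmem, hval⟩⟩ hub
  · exact le_csSup ⟨1, hub⟩ ⟨M⁻¹ • u, hmem, hval⟩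

variable [MeasurableSpace E] [OpensMeasurableSpace E]

lemma integrable_abs_inner {ν : Measure E} [IsFiniteMeasure ν]
    (hsph : ν (Metric.sphere (0 : E) 1)ᶜ = 0) (x : E) :
    Integrable (fun v => |⟪x, v⟫|) ν := by
  have hmeas : AEStronglyMeasurable (fun v : E => |⟪x, v⟫|) ν :=
    ((continuous_const.inner continuous_id).abs).aestronglyMeasurable
  refine Integrable.mono' (integrable_const ‖x‖) hmeas ?_
  have hae : ∀ᵐ v ∂ν, v ∈ Metric.sphere (0 : E) 1 := by
    rw [MeasureTheory.ae_iff]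
    convert hsph using 2
    rfl
  filter_upwards [hae] with v hv
  rw [mem_sphere_zero_iff_norm] at hv
  rw [Real.norm_eq_abs, abs_abs]
  calc |⟪x, v⟫| ≤ ‖x‖ * ‖v‖ := abs_real_inner_le_norm x v
  _ = ‖x‖ := by rw [hv, mul_one]

lemma null_pair {K : Set E} {ν : Measure E} [IsFiniteMeasure ν]
    (hsph : ν (Metric.sphere (0 : E) 1)ᶜ = 0)
    (hrep : ∀ u, suppFn (polarSet K) u = ∫ v, |(inner ℝ u v : ℝ)| ∂ν)
    (hKconv : Convex ℝ K) {u x y : E}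
    (hx : x ∈ mFace K u) (hy : y ∈ mFace K u) (hpos : 0 < ⟪x, u⟫) :
    ν {v | 0 < ⟪x, v⟫ ∧ ⟪y, v⟫ < 0} = 0 := by
  have hyu : ⟪y, u⟫ = ⟪x, u⟫ := le_antisymm (hx.2 y hy.1) (hy.2 x hx.1)
  set m : E := (2⁻¹ : ℝ) • (x + y) with hmdef
  have hmK : m ∈ K := by
    have := hKconv hx.1 hy.1 (by norm_num : (0:ℝ) ≤ 2⁻¹) (by norm_num : (0:ℝ) ≤ 2⁻¹)
      (by norm_num : (2⁻¹ : ℝ) + 2⁻¹ = 1)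
    simpa [hmdef, smul_add] using this
  have hmu : ⟪m, u⟫ = ⟪x, u⟫ := by
    rw [hmdef, real_inner_smul_left, inner_add_left, hyu]; ring
  have hm : m ∈ mFace K u := ⟨hmK, fun z hz => by rw [hmu]; exact hx.2 z hz⟩
  have e1 : ∫ v, |⟪x, v⟫| ∂ν = 1 := (hrep x).symm.trans (suppFn_polar_eq_one hx hpos)
  have e2 : ∫ v, |⟪y, v⟫| ∂ν = 1 := (hrep y).symm.trans
    (suppFn_polar_eq_one hy (by rw [hyu]; exact hpos))
  have e3 : ∫ v, |⟪m, v⟫| ∂ν = 1 := (hrep m).symm.trans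
    (suppFn_polar_eq_one hm (by rw [hmu]; exact hpos))
  have i1 := integrable_abs_inner hsph x
  have i2 := integrable_abs_inner hsph y
  have i3 := integrable_abs_inner hsph m
  set f : E → ℝ := fun v => |⟪x, v⟫| + |⟪y, v⟫| - 2 * |⟪m, v⟫| with hfdef
  have hfint : Integrable f ν := (i1.add i2).sub (i3.const_mul 2)
  have h2m : ∀ v, 2 * |⟪m, v⟫| = |⟪x, v⟫ + ⟪y, v⟫| := by
    intro v
    have : ⟪x, v⟫ + ⟪y, v⟫ = 2 * ⟪m, v⟫ := by
      rw [hmdef, real_inner_smul_left, inner_add_left]; ring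
    rw [this, abs_mul]
    norm_num
  have hf0 : ∀ v, 0 ≤ f v := by
    intro v
    have := abs_add_le ⟪x, v⟫ ⟪y, v⟫
    simp only [hfdef]
    rw [h2m v]
    linarith
  have hint : ∫ v, f v ∂ν = 0 := by
    have : ∫ v, f v ∂ν = (∫ v, |⟪x, v⟫| ∂ν) + (∫ v, |⟪y, v⟫| ∂ν)
        - ∫ v, 2 * |⟪m, v⟫| ∂ν := by
      rw [← integral_add i1 i2]
      exact integral_sub (i1.add i2) (i3.const_mul 2)
    rw [this, integral_const_mul, e1, e2, e3]
    ring
  have haez : f =ᵐ[ν] 0 :=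
    (integral_eq_zero_iff_of_nonneg hf0 hfint).mp hint
  have h0 : ν {v | ¬ f v = 0} = 0 := by
    have : ∀ᵐ v ∂ν, f v = 0 := haez
    exact ae_iff.mp this
  refine measure_mono_null ?_ h0
  rintro v ⟨h1, h2⟩
  simp only [Set.mem_setOf_eq]
  have key : |⟪x, v⟫ + ⟪y, v⟫| < |⟪x, v⟫| + |⟪y, v⟫| := by
    rcases le_or_gt 0 (⟪x, v⟫ + ⟪y, v⟫) with h | h
    · rw [abs_of_nonneg h, abs_of_pos h1, abs_of_neg h2]; linarith
    · rw [abs_of_neg h, abs_of_pos h1, abs_of_neg h2]; linarith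
  have : 0 < f v := by
    simp only [hfdef]
    rw [h2m v]
    linarith
  linarith

end Aux

section Main

open RealInnerProductSpace

/-- If `K = B + C` is a convex body in `ℝⁿ`, `n ≥ 3`, with `B, C` compact convex centrally
symmetric and `1 ≤ dim C ≤ n - 2`, then the polar of `K` is not a zonoid. -/
theorem polar_not_zonoid_of_summand (n : ℕ) (hn : 3 ≤ n)
    (B C K : Set (EuclideanSpace ℝ (Fin n)))
    (hBcomp : IsCompact B) (hCcomp : IsCompact C)
    (hBconv : Convex ℝ B) (hCconv : Convex ℝ C)
    (hBsymm : B = -B) (hCsymm : C = -C)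
    (hK : K = B + C) (hKfull : (interior K).Nonempty)
    (hCdim₁ : 1 ≤ Module.finrank ℝ (Submodule.span ℝ C))
    (hCdim₂ : Module.finrank ℝ (Submodule.span ℝ C) ≤ n - 2) :
    ¬ IsZonoid (polarSet K) := by
  rintro ⟨ν, hfin, hsph, hrep⟩
  haveI := hfin
  have hKconv : Convex ℝ K := by rw [hK]; exact hBconv.add hCconv
  have hKcomp : IsCompact K := by rw [hK]; exact hBcomp.add hCcomp
  obtain ⟨x₀, hx₀⟩ := hKfull
  -- K is symmetric
  have hKsymm : ∀ z ∈ K, -z ∈ K := by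
    intro z hz
    rw [hK] at hz ⊢
    obtain ⟨b, hb, c, hc, rfl⟩ := hz
    have hb' : -b ∈ B := by rw [hBsymm]; exact Set.neg_mem_neg.mpr hb
    have hc' : -c ∈ C := by rw [hCsymm]; exact Set.neg_mem_neg.mpr hc
    have hmem := Set.add_mem_add hb' hc'
    have heq : -(b + c) = -b + -c := by abel
    rw [heq]
    exact hmem
  have hKneg : K = -K := by
    ext z
    rw [Set.mem_neg]
    constructor
    · intro h; simpa using hKsymm z h
    · intro h; simpa using hKsymm (-z) h
  -- 0 is in the interior of K
  have hnegint : ∀ y, y ∈ interior K → -y ∈ interior K := by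
    intro y hy
    rw [mem_interior_iff_mem_nhds] at hy ⊢
    have hpre : (fun w : EuclideanSpace ℝ (Fin n) => -w) ⁻¹' K = K := by
      ext w
      simp only [Set.mem_preimage]
      constructor
      · intro h; simpa using hKsymm _ h
      · intro h; exact hKsymm _ h
    have htend : Filter.Tendsto (fun w : EuclideanSpace ℝ (Fin n) => -w) (nhds (-y)) (nhds y) := by
      simpa using continuous_neg.tendsto (-y : EuclideanSpace ℝ (Fin n))
    have hmem := htend hy
    rw [Filter.mem_map, hpre] at hmem
    exact hmem
  have h0 : (0 : EuclideanSpace ℝ (Fin n)) ∈ interior K := by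
    have hx₀' : -x₀ ∈ interior K := hnegint x₀ hx₀
    have := hKconv.interior hx₀ hx₀' (by norm_num : (0:ℝ) ≤ 2⁻¹) (by norm_num : (0:ℝ) ≤ 2⁻¹)
      (by norm_num : (2⁻¹ : ℝ) + 2⁻¹ = 1)
    simpa [smul_neg] using this
  obtain ⟨ε, hε, hball⟩ := Metric.mem_nhds_iff.mp (mem_interior_iff_mem_nhds.mp h0)
  -- B and C are nonempty
  have hKne : K.Nonempty := ⟨x₀, interior_subset hx₀⟩
  obtain ⟨z₀, hz₀⟩ := hKne
  rw [hK] at hz₀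
  obtain ⟨b₀, hb₀, c₀, hc₀, _⟩ := hz₀
  have hBne : B.Nonempty := ⟨b₀, hb₀⟩
  -- C has a nonzero element
  obtain ⟨e, heC, hene⟩ : ∃ e ∈ C, e ≠ 0 := by
    by_contra h
    push_neg at h
    have hle : Submodule.span ℝ C ≤ ⊥ := Submodule.span_le.mpr (fun c hc => by simp [h c hc])
    rw [le_bot_iff] at hle
    rw [hle] at hCdim₁
    simp [finrank_bot] at hCdim₁
  -- the orthogonal complement of span C has rank > 1
  have hrank : 1 < Module.rank ℝ ↥((Submodule.span ℝ C)ᗮ) := by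
    have h1 := Submodule.finrank_add_finrank_orthogonal (K := Submodule.span ℝ C) (𝕜 := ℝ)
    rw [finrank_euclideanSpace_fin] at h1
    have h2 : 1 < Module.finrank ℝ ↥((Submodule.span ℝ C)ᗮ) := by omega
    rw [← Module.finrank_eq_rank]
    exact_mod_cast h2
  -- the measure is concentrated on directions orthogonal to C
  set V : Set (EuclideanSpace ℝ (Fin n)) := {v | ∀ c ∈ C, ⟪c, v⟫ = 0} with hVdef
  have hVc : ν Vᶜ = 0 := by
    set Np : EuclideanSpace ℝ (Fin n) × EuclideanSpace ℝ (Fin n) → Set (EuclideanSpace ℝ (Fin n)) := fun p => {v | 0 < ⟪p.1, v⟫ ∧ ⟪p.2, v⟫ < 0} with hNpdef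
    have hopen : ∀ i : {p : EuclideanSpace ℝ (Fin n) × EuclideanSpace ℝ (Fin n) // ν (Np p) = 0}, IsOpen (Np i.1) := by
      intro i
      have hop1 : IsOpen {v : EuclideanSpace ℝ (Fin n) | 0 < ⟪i.1.1, v⟫} :=
        isOpen_lt continuous_const (continuous_const.inner continuous_id)
      have hop2 : IsOpen {v : EuclideanSpace ℝ (Fin n) | ⟪i.1.2, v⟫ < 0} :=
        isOpen_lt (continuous_const.inner continuous_id) continuous_const
      exact hop1.inter hop2
    obtain ⟨T, hTc, hTU⟩ := TopologicalSpace.isOpen_iUnion_countable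
      (fun i : {p : EuclideanSpace ℝ (Fin n) × EuclideanSpace ℝ (Fin n) // ν (Np p) = 0} => Np i.1) hopen
    have hcover : Vᶜ ⊆ ⋃ i : {p : EuclideanSpace ℝ (Fin n) × EuclideanSpace ℝ (Fin n) // ν (Np p) = 0}, Np i.1 := by
      intro v hv
      simp only [hVdef, Set.mem_compl_iff, Set.mem_setOf_eq] at hv
      push_neg at hv
      obtain ⟨c, hcC, hcne⟩ := hv
      obtain ⟨cs, hcsC, hcspos⟩ : ∃ cs ∈ C, 0 < ⟪cs, v⟫ := by
        rcases hcne.lt_or_gt with h | h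
        · refine ⟨-c, by rw [hCsymm]; exact Set.neg_mem_neg.mpr hcC, ?_⟩
          rw [inner_neg_left]; linarith
        · exact ⟨c, hcC, h⟩
      obtain ⟨u, x, y, huW, hu1, hxF, hyF, hxv, hyv⟩ :=
        exists_sign_change hBcomp hBne hBsymm hCsymm hrank hcsC hcspos
      rw [← hK] at hxF hyF
      have hxu : 0 < ⟪x, u⟫ := by
        have hmemK : (2⁻¹ * ε) • u ∈ K := by
          apply hball
          rw [Metric.mem_ball, dist_zero_right, norm_smul, hu1, mul_one, Real.norm_eq_abs,
            abs_of_pos (by positivity)]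
          linarith
        have hle := hxF.2 _ hmemK
        rw [real_inner_smul_left, real_inner_self_eq_norm_mul_norm, hu1] at hle
        nlinarith
      have hnull : ν (Np (x, y)) = 0 := null_pair hsph hrep hKconv hxF hyF hxu
      exact Set.mem_iUnion.mpr ⟨⟨(x, y), hnull⟩, ⟨hxv, hyv⟩⟩
    have hUnull : ν (⋃ i : {p : EuclideanSpace ℝ (Fin n) × EuclideanSpace ℝ (Fin n) // ν (Np p) = 0}, Np i.1) = 0 := by
      rw [← hTU]
      rw [measure_biUnion_null_iff hTc]
      exact fun i _ => i.2
    exact measure_mono_null hcover hUnull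
  -- hence the cosine transform vanishes at e — contradiction with positivity
  have hzero : suppFn (polarSet K) e = 0 := by
    rw [hrep e]
    apply integral_eq_zero_of_ae
    have hnull : ν {v | ¬ |(inner ℝ e v : ℝ)| = 0} = 0 := by
      refine measure_mono_null ?_ hVc
      intro v hv
      simp only [Set.mem_setOf_eq] at hv
      simp only [Set.mem_compl_iff, hVdef, Set.mem_setOf_eq]
      intro hV
      exact hv (by simp [hV e heC])
    have hae : ∀ᵐ v ∂ν, |(inner ℝ e v : ℝ)| = 0 := ae_iff.mpr hnull
    exact hae.mono fun v hv => by simpa using hv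
  obtain ⟨R, hR⟩ := hKcomp.isBounded.subset_closedBall (0 : EuclideanSpace ℝ (Fin n))
  set R' := max R 1 with hR'def
  have hR' : K ⊆ Metric.closedBall 0 R' :=
    hR.trans (Metric.closedBall_subset_closedBall (le_max_left _ _))
  have hR'pos : (0 : ℝ) < R' := lt_of_lt_of_le one_pos (le_max_right _ _)
  have hne : (0:ℝ) < ‖e‖ := norm_pos_iff.mpr hene
  set z : EuclideanSpace ℝ (Fin n) := (R'⁻¹ * ‖e‖⁻¹) • e with hzdef
  have hz : z ∈ polarSet K := by
    intro w hw
    have hwn : ‖w‖ ≤ R' := by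
      have := hR' hw
      rwa [Metric.mem_closedBall, dist_zero_right] at this
    have hzn : ‖z‖ = R'⁻¹ := by
      rw [hzdef, norm_smul, Real.norm_eq_abs, abs_of_pos (by positivity)]
      field_simp
    calc (inner ℝ w z : ℝ) ≤ ‖w‖ * ‖z‖ := real_inner_le_norm w z
      _ ≤ R' * R'⁻¹ := by
          rw [hzn]
          exact mul_le_mul_of_nonneg_right hwn (by positivity)
      _ = 1 := mul_inv_cancel₀ (ne_of_gt hR'pos)
  have hval : (inner ℝ z e : ℝ) = R'⁻¹ * ‖e‖ := by
    rw [hzdef, real_inner_smul_left, real_inner_self_eq_norm_mul_norm]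
    field_simp
  -- an upper bound for the image set, giving bddAbove
  have hub : ∀ r ∈ (fun w => (inner ℝ w e : ℝ)) '' polarSet K, r ≤ (2⁻¹ * ε * ‖e‖⁻¹)⁻¹ := by
    rintro r ⟨w, hw, rfl⟩
    set k : ℝ := 2⁻¹ * ε * ‖e‖⁻¹ with hkdef
    have hk : 0 < k := by positivity
    have hxbK : k • e ∈ K := by
      apply hball
      rw [Metric.mem_ball, dist_zero_right, norm_smul, Real.norm_eq_abs, abs_of_pos hk]
      rw [hkdef]
      calc 2⁻¹ * ε * ‖e‖⁻¹ * ‖e‖ = 2⁻¹ * ε := by field_simp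
        _ < ε := by linarith
    have h1 := hw (k • e) hxbK
    rw [real_inner_smul_left] at h1
    have h2 : (inner ℝ w e : ℝ) = (inner ℝ e w : ℝ) := (real_inner_comm w e).symm
    simp only []
    rw [h2]
    rw [inv_eq_one_div, le_div_iff₀ hk]
    linarith [h1]
  have hlb : R'⁻¹ * ‖e‖ ≤ suppFn (polarSet K) e :=
    le_csSup ⟨_, hub⟩ ⟨z, hz, hval⟩
  rw [hzero] at hlb
  have : (0:ℝ) < R'⁻¹ * ‖e‖ := by positivity
  linarith

end Main
end

section
/- If n ≥ 3 and Z is an n-dimensional zonotope in ℝⁿ, then the polar body Z° is not a zonotope. -/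
set_option linter.unusedSectionVars false
set_option maxHeartbeats 1000000

open Pointwise

/-- A zonotope (centered at the origin) is a finite Minkowski sum of centrally symmetric
segments. -/
def IsZonotope {E : Type*} [NormedAddCommGroup E] [InnerProductSpace ℝ E] (Z : Set E) : Prop :=
  ∃ (m : ℕ) (v : Fin m → E), Z = ∑ i : Fin m, segment ℝ (-(v i)) (v i)

section Helpers

open RealInnerProductSpace

variable {F : Type*} [NormedAddCommGroup F] [InnerProductSpace ℝ F]

lemma smul_mem_seg {v : F} {c : ℝ} (h1 : -1 ≤ c) (h2 : c ≤ 1) :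
    c • v ∈ segment ℝ (-v) v := by
  refine ⟨(1 - c)/2, (1 + c)/2, by linarith, by linarith, by ring, ?_⟩
  module

lemma mem_seg_elim {v x : F} (h : x ∈ segment ℝ (-v) v) :
    ∃ c : ℝ, -1 ≤ c ∧ c ≤ 1 ∧ x = c • v := by
  obtain ⟨a, b, ha, hb, hab, h⟩ := h
  refine ⟨b - a, by linarith, by linarith, ?_⟩
  rw [← h]; module

lemma isCompact_seg (v : F) : IsCompact (segment ℝ (-v) v) := by
  rw [segment_eq_image]
  exact isCompact_Icc.image (by continuity)

lemma isCompact_sum_sets {ι : Type*} (s : Finset ι) (S : ι → Set F)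
    (h : ∀ i ∈ s, IsCompact (S i)) : IsCompact (∑ i ∈ s, S i) := by
  classical
  induction s using Finset.induction_on with
  | empty =>
    rw [Finset.sum_empty]
    exact Set.singleton_zero (α := F) ▸ isCompact_singleton
  | insert a s hni ih =>
    rw [Finset.sum_insert hni]
    exact (h a (Finset.mem_insert_self a s)).add
      (ih fun i hi => h i (Finset.mem_insert_of_mem hi))

lemma convex_sum_sets {ι : Type*} (s : Finset ι) (S : ι → Set F)
    (h : ∀ i ∈ s, Convex ℝ (S i)) : Convex ℝ (∑ i ∈ s, S i) := by
  classical
  induction s using Finset.induction_on with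
  | empty =>
    rw [Finset.sum_empty]
    exact Set.singleton_zero (α := F) ▸ convex_singleton (0 : F)
  | insert a s hni ih =>
    rw [Finset.sum_insert hni]
    exact (h a (Finset.mem_insert_self a s)).add
      (ih fun i hi => h i (Finset.mem_insert_of_mem hi))

lemma zero_mem_sum_seg {ι : Type*} (s : Finset ι) (w : ι → F) :
    (0 : F) ∈ ∑ j ∈ s, segment ℝ (-(w j)) (w j) := by
  rw [Set.mem_finset_sum]
  refine ⟨fun _ => 0, fun {i} _ => ?_, by simp⟩
  simpa using smul_mem_seg (v := w i) (c := 0) (by norm_num) (by norm_num)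

end Helpers

open RealInnerProductSpace

/-- If `n ≥ 3` and `Z` is an `n`-dimensional zonotope in `ℝⁿ`, then the polar body `Z°`
is not a zonotope. -/
theorem polar_of_zonotope_not_zonotope (n : ℕ) (hn : 3 ≤ n)
    (Z : Set (EuclideanSpace ℝ (Fin n)))
    (hZ : IsZonotope Z) (hZfull : (interior Z).Nonempty) :
    ¬ IsZonotope (polarSet Z) := by
  classical
  intro hcontra
  obtain ⟨m, v, hV⟩ := hZ
  obtain ⟨k, w, hP⟩ := hcontra
  -- basic symmetry of segments
  have hseg_sym : ∀ (u x : EuclideanSpace ℝ (Fin n)),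
      x ∈ segment ℝ (-u) u → -x ∈ segment ℝ (-u) u := by
    intro u x hx
    obtain ⟨c, hc1, hc2, rfl⟩ := mem_seg_elim hx
    rw [← neg_smul]
    exact smul_mem_seg (by linarith) (by linarith)
  have hZsym : ∀ x ∈ Z, -x ∈ Z := by
    rw [hV]
    intro x hx
    rw [Set.mem_finset_sum] at hx ⊢
    obtain ⟨g, hg, hgsum⟩ := hx
    refine ⟨fun i => -(g i), fun {i} hi => hseg_sym _ _ (hg hi), ?_⟩
    rw [← hgsum, ← Finset.sum_neg_distrib]
  have hZ0 : (0 : EuclideanSpace ℝ (Fin n)) ∈ Z := by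
    rw [hV]; exact zero_mem_sum_seg _ _
  have hZcompact : IsCompact Z := by
    rw [hV]; exact isCompact_sum_sets _ _ (fun i _ => isCompact_seg (v i))
  have hZconvex : Convex ℝ Z := by
    rw [hV]; exact convex_sum_sets _ _ (fun i _ => convex_segment _ _)
  have hZclosed : IsClosed Z := hZcompact.isClosed
  -- 0 is an interior point
  have h0int : (0 : EuclideanSpace ℝ (Fin n)) ∈ interior Z := by
    obtain ⟨x₀, hx₀⟩ := hZfull
    have hnegZ : -Z = Z := by
      ext y
      rw [Set.mem_neg]
      constructor
      · intro h; simpa using hZsym _ h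
      · intro h; exact hZsym _ h
    have hx₀neg : -x₀ ∈ interior Z := by
      have hsub : -interior Z ⊆ Z := by
        intro y hy
        rw [Set.mem_neg] at hy
        have h := interior_subset hy
        simpa using hZsym _ h
      exact interior_maximal hsub isOpen_interior.neg (Set.neg_mem_neg.mpr hx₀)
    have h00 := (hZconvex.interior) hx₀ hx₀neg (by norm_num : (0:ℝ) ≤ 1/2)
      (by norm_num : (0:ℝ) ≤ 1/2) (by norm_num)
    have : (1/2 : ℝ) • x₀ + (1/2 : ℝ) • (-x₀) = 0 := by module
    rwa [this] at h00
  have hZnhds : Z ∈ nhds (0 : EuclideanSpace ℝ (Fin n)) := mem_interior_iff_mem_nhds.mp h0int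
  have habs : Absorbent ℝ Z := absorbent_nhds_zero hZnhds
  -- supporting functional at boundary points
  have hsupport : ∀ z, z ∈ Z → z ∉ interior Z →
      ∃ y, (∀ x ∈ Z, ⟪x, y⟫ ≤ 1) ∧ ⟪z, y⟫ = 1 := by
    intro z hzZ hzb
    obtain ⟨f, hf⟩ := geometric_hahn_banach_open_point (hZconvex.interior) isOpen_interior hzb
    have hf0 : (0:ℝ) < f z := by simpa using hf 0 h0int
    have hfle : ∀ x ∈ Z, f x ≤ f z := by
      intro x hx
      have key : ∀ t : ℝ, t ∈ Set.Ioc (0:ℝ) 1 →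
          f (t • (0 : EuclideanSpace ℝ (Fin n)) + (1 - t) • x) < f z := by
        intro t ht
        exact hf _ (hZconvex.combo_interior_closure_mem_interior h0int (subset_closure hx)
          ht.1 (by linarith [ht.2]) (by ring))
      have hcont : Continuous fun t : ℝ => f (t • (0 : EuclideanSpace ℝ (Fin n)) + (1 - t) • x) := by
        apply f.continuous.comp
        continuity
      have htend : Filter.Tendsto (fun t : ℝ => f (t • (0 : EuclideanSpace ℝ (Fin n)) + (1 - t) • x))
          (nhdsWithin 0 (Set.Ioi 0)) (nhds (f x)) := by
        have h0 : f ((0:ℝ) • (0 : EuclideanSpace ℝ (Fin n)) + (1 - (0:ℝ)) • x) = f x := by simp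
        simpa [h0] using (hcont.tendsto 0).mono_left nhdsWithin_le_nhds
      refine le_of_tendsto htend ?_
      filter_upwards [Ioc_mem_nhdsGT_of_mem (Set.mem_Ico.mpr ⟨le_refl (0:ℝ), zero_lt_one⟩)] with t ht
      exact (key t ht).le
    set θ := (InnerProductSpace.toDual ℝ (EuclideanSpace ℝ (Fin n))).symm f with hθ
    have hθx : ∀ x : EuclideanSpace ℝ (Fin n), ⟪x, θ⟫ = f x := fun x => by
      rw [real_inner_comm]; exact InnerProductSpace.toDual_symm_apply
    refine ⟨(f z)⁻¹ • θ, ?_, ?_⟩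
    · intro x hx
      rw [real_inner_smul_right, hθx]
      calc (f z)⁻¹ * f x ≤ (f z)⁻¹ * f z :=
            mul_le_mul_of_nonneg_left (hfle x hx) (inv_nonneg.mpr hf0.le)
        _ = 1 := inv_mul_cancel₀ hf0.ne'
    · rw [real_inner_smul_right, hθx]; exact inv_mul_cancel₀ hf0.ne'
  -- a boundary point exists
  have hbd : ∃ z', z' ∈ Z ∧ z' ∉ interior Z := by
    obtain ⟨z', hz'Z, hz'max⟩ := hZcompact.exists_isMaxOn ⟨0, hZ0⟩ continuous_norm.continuousOn
    obtain ⟨ε, hε, hball⟩ := Metric.mem_nhds_iff.mp hZnhds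
    have hu₀ : ‖(EuclideanSpace.single (⟨0, by omega⟩ : Fin n) (1:ℝ))‖ = 1 := by
      simp [EuclideanSpace.norm_single]
    have hz'pos : 0 < ‖z'‖ := by
      have hp : (ε/2) • (EuclideanSpace.single (⟨0, by omega⟩ : Fin n) (1:ℝ)) ∈ Z := by
        apply hball
        rw [Metric.mem_ball, dist_zero_right, norm_smul, hu₀]
        rw [Real.norm_eq_abs, abs_of_pos (by linarith)]
        linarith
      have h3 : ‖(ε/2) • (EuclideanSpace.single (⟨0, by omega⟩ : Fin n) (1:ℝ))‖ ≤ ‖z'‖ := hz'max hp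
      have h2 : ‖(ε/2) • (EuclideanSpace.single (⟨0, by omega⟩ : Fin n) (1:ℝ))‖ = ε/2 := by
        rw [norm_smul, hu₀, Real.norm_eq_abs, abs_of_pos (by linarith)]; ring
      rw [h2] at h3
      linarith
    refine ⟨z', hz'Z, ?_⟩
    intro hint
    obtain ⟨δ, hδ, hball'⟩ := Metric.mem_nhds_iff.mp (mem_interior_iff_mem_nhds.mp hint)
    set c := δ / (2 * ‖z'‖) with hc
    have hcpos : 0 < c := by positivity
    have hx'Z : (1 + c) • z' ∈ Z := by
      apply hball'
      rw [Metric.mem_ball, dist_eq_norm]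
      have h3 : (1 + c) • z' - z' = c • z' := by module
      rw [h3, norm_smul, Real.norm_eq_abs, abs_of_pos hcpos]
      have : c * ‖z'‖ = δ / 2 := by
        rw [hc]; field_simp
      rw [this]; linarith
    have h4 : ‖(1 + c) • z'‖ ≤ ‖z'‖ := hz'max hx'Z
    rw [norm_smul, Real.norm_eq_abs, abs_of_pos (by linarith : (0:ℝ) < 1 + c)] at h4
    nlinarith
  obtain ⟨z', hz'Z, hz'bd⟩ := hbd
  obtain ⟨y', hy'p, hy'z⟩ := hsupport z' hz'Z hz'bd
  -- some generator of the polar is nonzero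
  have hwex : ∃ j, w j ≠ 0 := by
    by_contra hall
    push_neg at hall
    have hy'P : y' ∈ polarSet Z := hy'p
    rw [hP] at hy'P
    have hzero : ∑ j : Fin k, segment ℝ (-(w j)) (w j) = ({0} : Set (EuclideanSpace ℝ (Fin n))) := by
      have : ∀ j : Fin k, segment ℝ (-(w j)) (w j) = ({0} : Set (EuclideanSpace ℝ (Fin n))) := by
        intro j; rw [hall j, neg_zero, segment_same]
      rw [Finset.sum_congr rfl (fun j _ => this j)]
      rw [Set.singleton_zero, Finset.sum_const_zero]
    rw [hzero] at hy'P
    rw [Set.mem_singleton_iff] at hy'P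
    rw [hy'P] at hy'z
    simp at hy'z
  obtain ⟨j₀, hwj0⟩ := hwex
  -- some generator of Z is not orthogonal to w j₀
  have hwnorm : 0 < ‖w j₀‖ := norm_pos_iff.mpr hwj0
  have hperp : ∃ i, ⟪w j₀, v i⟫ ≠ 0 := by
    by_contra hall
    push_neg at hall
    have hZperp : ∀ x ∈ Z, ⟪w j₀, x⟫ = 0 := by
      rw [hV]
      intro x hx
      rw [Set.mem_finset_sum] at hx
      obtain ⟨g, hg, hgsum⟩ := hx
      rw [← hgsum, inner_sum]
      apply Finset.sum_eq_zero
      intro i _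
      obtain ⟨c, _, _, hc⟩ := mem_seg_elim (hg (Finset.mem_univ i))
      rw [hc, real_inner_smul_right, hall i, mul_zero]
    obtain ⟨ε, hε, hball⟩ := Metric.mem_nhds_iff.mp hZnhds
    have hp : (ε / (2 * ‖w j₀‖)) • (w j₀) ∈ Z := by
      apply hball
      rw [Metric.mem_ball, dist_zero_right, norm_smul, Real.norm_eq_abs,
        abs_of_pos (by positivity)]
      have : ε / (2 * ‖w j₀‖) * ‖w j₀‖ = ε / 2 := by field_simp
      rw [this]; linarith
    have h5 := hZperp _ hp
    rw [real_inner_smul_right, real_inner_self_eq_norm_sq] at h5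
    have : ε / (2 * ‖w j₀‖) * ‖w j₀‖ ^ 2 > 0 := by positivity
    linarith
  obtain ⟨i₀, hi₀⟩ := hperp
  -- choose the sign of the generator
  set v₀ := if 0 ≤ ⟪w j₀, v i₀⟫ then v i₀ else -(v i₀) with hv₀def
  have hv₀pos : 0 < ⟪w j₀, v₀⟫ := by
    rw [hv₀def]
    split_ifs with h
    · exact lt_of_le_of_ne h (Ne.symm hi₀)
    · rw [inner_neg_right]; push_neg at h; linarith
  have hseg₀ : segment ℝ (-(v i₀)) (v i₀) = segment ℝ (-v₀) v₀ := by
    rw [hv₀def]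
    split_ifs
    · rfl
    · rw [neg_neg, segment_symm]
  have hZsplit : Z = (∑ i ∈ Finset.univ.erase i₀, segment ℝ (-(v i)) (v i))
      + segment ℝ (-v₀) v₀ := by
    rw [hV, ← hseg₀]
    exact (Finset.sum_erase_add _ _ (Finset.mem_univ i₀)).symm
  have hPsplit : polarSet Z = (∑ j ∈ Finset.univ.erase j₀, segment ℝ (-(w j)) (w j))
      + segment ℝ (-(w j₀)) (w j₀) := by
    rw [hP]
    exact (Finset.sum_erase_add _ _ (Finset.mem_univ j₀)).symm
  -- gauge facts
  have hmemgauge : ∀ x : EuclideanSpace ℝ (Fin n), gauge Z x ≤ 1 → x ∈ Z := by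
    intro x hx
    have := (gauge_le_one_iff_mem_closure hZconvex hZnhds).mp hx
    rwa [hZclosed.closure_eq] at this
  obtain ⟨R, hR⟩ := hZcompact.isBounded.subset_closedBall 0
  have hRpos : (0:ℝ) < max R 1 := lt_of_lt_of_le one_pos (le_max_right R 1)
  have hZR : Z ⊆ Metric.closedBall 0 (max R 1) :=
    hR.trans (Metric.closedBall_subset_closedBall (le_max_left R 1))
  have hgpos : ∀ x : EuclideanSpace ℝ (Fin n), x ≠ 0 → 0 < gauge Z x := by
    intro x hx
    have h1 : gauge (Metric.closedBall (0 : EuclideanSpace ℝ (Fin n)) (max R 1)) x ≤ gauge Z x :=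
      gauge_mono habs hZR x
    rw [gauge_closedBall hRpos.le] at h1
    have : 0 < ‖x‖ / max R 1 := by
      have := norm_pos_iff.mpr hx
      positivity
    linarith
  have hgcont : Continuous (gauge Z) := continuous_gauge hZconvex hZnhds
  have hgsym : ∀ x, gauge Z (-x) = gauge Z x := gauge_neg hZsym
  -- the orthogonal complement of w j₀ and its sphere
  have hrankW : 2 ≤ Module.finrank ℝ ((ℝ ∙ (w j₀))ᗮ) := by
    have h1 : Module.finrank ℝ (ℝ ∙ (w j₀)) = 1 := finrank_span_singleton hwj0
    have h2 := Submodule.finrank_add_finrank_orthogonal (K := (ℝ ∙ (w j₀)))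
    have h3 : Module.finrank ℝ (EuclideanSpace ℝ (Fin n)) = n := finrank_euclideanSpace_fin
    omega
  have hrank1 : 1 < Module.rank ℝ ((ℝ ∙ (w j₀))ᗮ) := by
    rw [← Module.finrank_eq_rank]
    exact_mod_cast (by omega : 1 < Module.finrank ℝ ((ℝ ∙ (w j₀))ᗮ))
  have hWnontriv : Nontrivial ((ℝ ∙ (w j₀))ᗮ) :=
    Module.nontrivial_of_finrank_pos (R := ℝ) (by omega)
  set gmap : ((ℝ ∙ (w j₀))ᗮ) → EuclideanSpace ℝ (Fin n) :=
    fun u => (gauge Z (u : EuclideanSpace ℝ (Fin n)))⁻¹ • (u : EuclideanSpace ℝ (Fin n))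
    with hgmap
  set S : Set (EuclideanSpace ℝ (Fin n)) := gmap '' Metric.sphere (0 : (ℝ ∙ (w j₀))ᗮ) 1
    with hSdef
  have hcoe_ne : ∀ u : (ℝ ∙ (w j₀))ᗮ, u ∈ Metric.sphere (0 : (ℝ ∙ (w j₀))ᗮ) 1 →
      (u : EuclideanSpace ℝ (Fin n)) ≠ 0 := by
    intro u hu
    have hu1 : ‖u‖ = 1 := by simpa using mem_sphere_zero_iff_norm.mp hu
    intro h
    have : u = 0 := by exact_mod_cast h
    rw [this] at hu1
    simp at hu1
  have hScont : ContinuousOn gmap (Metric.sphere (0 : (ℝ ∙ (w j₀))ᗮ) 1) := by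
    apply ContinuousOn.fun_smul
    · apply ContinuousOn.inv₀
      · exact (hgcont.comp continuous_subtype_val).continuousOn
      · intro u hu
        exact ne_of_gt (hgpos _ (hcoe_ne u hu))
    · exact continuous_subtype_val.continuousOn
  have hconnS : IsConnected S :=
    (isConnected_sphere hrank1 0 zero_le_one).image _ hScont
  have hSne : S.Nonempty := by
    apply Set.Nonempty.image
    exact NormedSpace.sphere_nonempty.mpr zero_le_one
  have hSprop : ∀ z ∈ S, z ∈ Z ∧ z ∉ interior Z ∧ ⟪w j₀, z⟫ = 0 := by
    rintro z ⟨u, hu, rfl⟩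
    have hune := hcoe_ne u hu
    have hg1 : gauge Z (gmap u) = 1 := by
      rw [hgmap]
      dsimp only
      rw [gauge_smul_of_nonneg (inv_nonneg.mpr (hgpos _ hune).le)]
      rw [smul_eq_mul]
      exact inv_mul_cancel₀ (hgpos _ hune).ne'
    refine ⟨hmemgauge _ hg1.le, ?_, ?_⟩
    · intro hint
      have := (gauge_lt_one_iff_mem_interior hZconvex hZnhds).mpr hint
      rw [hg1] at this
      exact absurd this (lt_irrefl 1)
    · have hperpu : ⟪w j₀, (u : EuclideanSpace ℝ (Fin n))⟫ = 0 := by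
        have hmem := u.2
        rw [Submodule.mem_orthogonal] at hmem
        exact hmem (w j₀) (Submodule.mem_span_singleton_self _)
      rw [hgmap]
      dsimp only
      rw [real_inner_smul_right, hperpu, mul_zero]
  have hSneg : ∀ z ∈ S, -z ∈ S := by
    rintro z ⟨u, hu, rfl⟩
    refine ⟨-u, by simpa using hu, ?_⟩
    rw [hgmap]
    dsimp only
    push_cast
    rw [hgsym, smul_neg]
  -- the two closed pieces
  have hclosed₁ : IsClosed {z : EuclideanSpace ℝ (Fin n) | z - v₀ ∈ Z} :=
    hZclosed.preimage (continuous_id.sub continuous_const)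
  have hclosed₂ : IsClosed {z : EuclideanSpace ℝ (Fin n) | z + v₀ ∈ Z} :=
    hZclosed.preimage (continuous_id.add continuous_const)
  have hcover : S ⊆ {z : EuclideanSpace ℝ (Fin n) | z - v₀ ∈ Z}
      ∪ {z : EuclideanSpace ℝ (Fin n) | z + v₀ ∈ Z} := by
    intro z hz
    obtain ⟨hzZ, -, -⟩ := hSprop z hz
    rw [hZsplit, Set.mem_add] at hzZ
    obtain ⟨a, ha, b, hb, hab⟩ := hzZ
    obtain ⟨c, hc1, hc2, rfl⟩ := mem_seg_elim hb
    rcases le_or_gt 0 c with hc | hc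
    · left
      show z - v₀ ∈ Z
      rw [hZsplit]
      have h6 : z - v₀ = a + (c - 1) • v₀ := by rw [← hab]; module
      rw [h6]
      exact Set.add_mem_add ha (smul_mem_seg (by linarith) (by linarith))
    · right
      show z + v₀ ∈ Z
      rw [hZsplit]
      have h6 : z + v₀ = a + (c + 1) • v₀ := by rw [← hab]; module
      rw [h6]
      exact Set.add_mem_add ha (smul_mem_seg (by linarith) (by linarith))
  have hne₁ : (S ∩ {z : EuclideanSpace ℝ (Fin n) | z - v₀ ∈ Z}).Nonempty := by
    obtain ⟨z₀, hz₀⟩ := hSne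
    rcases hcover hz₀ with h | h
    · exact ⟨z₀, hz₀, h⟩
    · refine ⟨-z₀, hSneg _ hz₀, ?_⟩
      show -z₀ - v₀ ∈ Z
      have h7 : -z₀ - v₀ = -(z₀ + v₀) := by module
      rw [h7]
      exact hZsym _ h
  have hne₂ : (S ∩ {z : EuclideanSpace ℝ (Fin n) | z + v₀ ∈ Z}).Nonempty := by
    obtain ⟨z₀, hz₀⟩ := hSne
    rcases hcover hz₀ with h | h
    · refine ⟨-z₀, hSneg _ hz₀, ?_⟩
      show -z₀ + v₀ ∈ Z
      have h7 : -z₀ + v₀ = -(z₀ - v₀) := by module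
      rw [h7]
      exact hZsym _ h
    · exact ⟨z₀, hz₀, h⟩
  obtain ⟨z, hzS, hzt⟩ := isPreconnected_closed_iff.mp hconnS.isPreconnected _ _
    hclosed₁ hclosed₂ hcover hne₁ hne₂
  obtain ⟨hzt₁, hzt₂⟩ := hzt
  have hz₁Z : z - v₀ ∈ Z := hzt₁
  have hz₂Z : z + v₀ ∈ Z := hzt₂
  obtain ⟨hzZ, hzbd, hzw⟩ := hSprop z hzS
  obtain ⟨y₁, hy₁p, hy₁z⟩ := hsupport z hzZ hzbd
  have hzwj : ⟪z, w j₀⟫ = 0 := by rw [real_inner_comm]; exact hzw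
  -- maximize over K
  set K : Set (EuclideanSpace ℝ (Fin n)) :=
    ∑ j ∈ Finset.univ.erase j₀, segment ℝ (-(w j)) (w j) with hKdef
  have hKcompact : IsCompact K := isCompact_sum_sets _ _ (fun j _ => isCompact_seg (w j))
  have hK0 : (0 : EuclideanSpace ℝ (Fin n)) ∈ K := zero_mem_sum_seg _ _
  obtain ⟨y₀, hy₀K, hy₀max⟩ := hKcompact.exists_isMaxOn ⟨0, hK0⟩
    ((continuous_const.inner continuous_id).continuousOn :
      ContinuousOn (fun y => ⟪z, y⟫) K)
  have hy₀ge : 1 ≤ ⟪z, y₀⟫ := by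
    have hy₁mem : y₁ ∈ polarSet Z := hy₁p
    rw [hPsplit, Set.mem_add] at hy₁mem
    obtain ⟨u', hu', b, hb, hub⟩ := hy₁mem
    obtain ⟨c, _, _, rfl⟩ := mem_seg_elim hb
    have h8 : ⟪z, y₁⟫ = ⟪z, u'⟫ := by
      rw [← hub, inner_add_right, real_inner_smul_right, hzwj, mul_zero, add_zero]
    calc (1:ℝ) = ⟪z, y₁⟫ := hy₁z.symm
      _ = ⟪z, u'⟫ := h8
      _ ≤ ⟪z, y₀⟫ := hy₀max hu'
  have hy₀wP : y₀ + w j₀ ∈ polarSet Z := by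
    rw [hPsplit]
    exact Set.add_mem_add hy₀K (right_mem_segment ℝ (-(w j₀)) (w j₀))
  have hy₀wP' : y₀ - w j₀ ∈ polarSet Z := by
    rw [hPsplit]
    have h9 : y₀ - w j₀ = y₀ + (-(w j₀)) := by module
    rw [h9]
    exact Set.add_mem_add hy₀K (left_mem_segment ℝ (-(w j₀)) (w j₀))
  have hy₀le : ⟪z, y₀⟫ ≤ 1 := by
    have h10 : ⟪z, y₀ + w j₀⟫ ≤ 1 := hy₀wP z hzZ
    rw [inner_add_right, hzwj, add_zero] at h10
    exact h10
  have hzy₀ : ⟪z, y₀⟫ = 1 := le_antisymm hy₀le hy₀ge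
  -- final contradiction
  have hf1 : ⟪z + v₀, y₀ + w j₀⟫ ≤ 1 := hy₀wP _ hz₂Z
  have hf2 : ⟪z - v₀, y₀ - w j₀⟫ ≤ 1 := hy₀wP' _ hz₁Z
  rw [inner_add_left, inner_add_right, inner_add_right, hzy₀, hzwj] at hf1
  rw [inner_sub_left, inner_sub_right, inner_sub_right, hzy₀, hzwj] at hf2
  have hwv : ⟪v₀, w j₀⟫ = ⟪w j₀, v₀⟫ := real_inner_comm _ _
  rw [hwv] at hf1 hf2
  linarith
end

section
/- For r > 0, the gauge (norm) of the body 𝓑_{n,r} = B₂ⁿ + r·B₂^{n−1} at a unit vector with vertical angle φ ∈ [0, π/2] equals cos φ if 0 ≤ φ ≤ arctan r, and equals 1/(r sin φ + √(1 − r² cos² φ)) if arctan r ≤ φ ≤ π/2. -/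
open Pointwise RealInnerProductSpace

private lemma barrel_le_of_sq_le_sq (a b : ℝ) (hb : 0 ≤ b) (h : a^2 ≤ b^2) (ha : 0 ≤ a) :
    a ≤ b := by nlinarith

private lemma barrel_case1_iff (r s c t : ℝ) (hr : 0 < r) (hc : 0 < c)
    (hsc : s ≤ r * c) :
    (0 < t ∧ max (s - t*r) 0 ^ 2 + c^2 ≤ t^2) ↔ c ≤ t := by
  constructor
  · rintro ⟨ht, hC⟩
    nlinarith [sq_nonneg (max (s - t*r) 0)]
  · intro hct
    have ht : 0 < t := lt_of_lt_of_le hc hct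
    refine ⟨ht, ?_⟩
    have hmax : max (s - t*r) 0 = 0 := max_eq_right (by nlinarith)
    rw [hmax]
    nlinarith

set_option maxHeartbeats 1000000 in
private lemma barrel_case2_iff (r s c t : ℝ) (hr : 0 < r) (hc : 0 ≤ c) (hs0 : 0 < s)
    (h1 : s^2 + c^2 = 1) (hsc : r * c ≤ s) :
    (0 < t ∧ max (s - t*r) 0 ^ 2 + c^2 ≤ t^2) ↔
      1 / (r * s + Real.sqrt (1 - r^2 * c^2)) ≤ t := by
  have hkey : r^2*c^2 ≤ s^2 := by nlinarith [mul_le_mul hsc hsc (mul_nonneg hr.le hc) hs0.le]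
  have h7 : c^2*(1+r^2) ≤ 1 := by nlinarith [hkey]
  have h6 := mul_le_mul_of_nonneg_left h7 (sq_nonneg r)
  have hqpos : 0 < 1 - r^2*c^2 := by nlinarith [sq_nonneg r]
  set q := Real.sqrt (1 - r^2 * c^2) with hqdef
  have hq2 : q^2 = 1 - r^2 * c^2 := Real.sq_sqrt hqpos.le
  have hq0 : 0 < q := Real.sqrt_pos.mpr hqpos
  have hden : 0 < r * s + q := by positivity
  have ha0 : 0 < 1 / (r * s + q) := by positivity
  have key : ∀ t : ℝ, t^2 - c^2 - (s - t*r)^2 = ((q + r*s)*t - 1)*((q - r*s)*t + 1) := by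
    intro t
    linear_combination (t^2*r^2 - 1) * h1 - t^2 * hq2
  have hsecond : ∀ t : ℝ, 0 < t → t*r < s → 0 < (q - r*s)*t + 1 := by
    intro t ht htr
    nlinarith [mul_pos ht hq0, mul_lt_mul_of_pos_left htr hs0, sq_nonneg c]
  have hfac : (1 - c*r*s - c*q)*(1 - c*r*s + c*q) = (s - r*c)^2 := by
    linear_combination (r^2*c^2 - 1) * h1 - c^2 * hq2
  have h2 : 0 < 1 - c*r*s + c*q := by
    nlinarith [mul_nonneg hc hq0.le, mul_nonneg (mul_nonneg hc hr.le) hs0.le,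
      mul_le_mul_of_nonneg_left hsc hc]
  have hca : 0 ≤ 1 - c*r*s - c*q := by
    by_contra hcon
    push_neg at hcon
    nlinarith [sq_nonneg (s - r*c)]
  have h5 : r^2*c^2 ≤ s^2 := hkey
  have hA : (s*q)^2 - (r*c^2)^2 = s^2 - r^2*c^2 := by
    linear_combination s^2*hq2 - r^2*c^2*h1
  have hsq : r*c^2 ≤ s*q := by
    nlinarith [mul_nonneg hs0.le hq0.le, mul_nonneg (mul_nonneg hr.le hc) hc]
  have has : r ≤ s * (r * s + q) := by nlinarith
  constructor
  · rintro ⟨ht, hC⟩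
    rw [div_le_iff₀ hden]
    rcases le_or_gt s (t*r) with hcase | hcase
    · nlinarith [mul_le_mul_of_nonneg_right hcase hden.le]
    · have hmax : max (s - t*r) 0 = s - t*r := max_eq_left (by linarith)
      rw [hmax] at hC
      have hprod : 0 ≤ ((q + r*s)*t - 1)*((q - r*s)*t + 1) := by
        rw [← key]; linarith
      have hfirst : 0 ≤ (q + r*s)*t - 1 :=
        (mul_nonneg_iff_of_pos_right (hsecond t ht hcase)).mp hprod
      nlinarith
  · intro hat
    have ht : 0 < t := lt_of_lt_of_le ha0 hat
    refine ⟨ht, ?_⟩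
    rw [div_le_iff₀ hden] at hat
    rcases le_or_gt s (t*r) with hcase | hcase
    · have hmax : max (s - t*r) 0 = 0 := max_eq_right (by linarith)
      rw [hmax]
      have hc1 : c * (r*s+q) ≤ 1 := by linarith
      have hct : c ≤ t := le_of_mul_le_mul_right (hc1.trans hat) hden
      have := pow_le_pow_left₀ hc hct 2
      linarith
    · have hmax : max (s - t*r) 0 = s - t*r := max_eq_left (by linarith)
      rw [hmax]
      have hfirst : 0 ≤ (q + r*s)*t - 1 := by linarith
      have := mul_nonneg hfirst (hsecond t ht hcase).le
      linarith [key t]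

noncomputable section BarrelAux

variable {n : ℕ}

private abbrev EE (n : ℕ) := EuclideanSpace ℝ (Fin (n + 3))
private abbrev LL (n : ℕ) : Fin (n + 3) := Fin.last (n + 2)
private noncomputable abbrev ee (n : ℕ) : EE n := EuclideanSpace.single (LL n) (1 : ℝ)

private lemma norm_sq_decomp (w : EE n) (a : ℝ) (hw : w (LL n) = 0) :
    ‖w + a • ee n‖ ^ 2 = ‖w‖ ^ 2 + a ^ 2 := by
  have h1 : ⟪w, a • ee n⟫ = 0 := by
    rw [real_inner_smul_right, EuclideanSpace.inner_single_right]
    simp [hw]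
  rw [norm_add_sq_real, h1, norm_smul]
  simp [EuclideanSpace.norm_single]

private lemma barrel_mem_smul_iff (r t : ℝ) (hr : 0 < r) (ht : 0 < t) (u : EE n) :
    u ∈ t • (Metric.closedBall (0 : EE n) 1 +
        r • setOf (fun x : EE n => ‖x‖ ≤ 1 ∧ x (LL n) = 0)) ↔
      ∃ y : EE n, ‖y‖ ≤ t * r ∧ y (LL n) = 0 ∧ ‖u - y‖ ≤ t := by
  rw [Set.mem_smul_set_iff_inv_smul_mem₀ (ne_of_gt ht)]
  constructor
  · rintro hmem
    rw [Set.mem_add] at hmem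
    obtain ⟨x, hx, y, hy, hxy⟩ := hmem
    rw [Set.mem_smul_set_iff_inv_smul_mem₀ (ne_of_gt hr)] at hy
    obtain ⟨hy1, hy2⟩ := hy
    refine ⟨t • y, ?_, ?_, ?_⟩
    · have : ‖r⁻¹ • y‖ = r⁻¹ * ‖y‖ := by
        rw [norm_smul, Real.norm_eq_abs, abs_of_pos (inv_pos.mpr hr)]
      rw [this] at hy1
      have : ‖y‖ ≤ r := by
        rwa [inv_mul_le_iff₀ hr, mul_one] at hy1
      rw [norm_smul]
      rw [Real.norm_eq_abs, abs_of_pos ht]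
      exact mul_le_mul_of_nonneg_left this ht.le
    · have : (r⁻¹ • y) (LL n) = r⁻¹ * y (LL n) := rfl
      rw [this] at hy2
      have hy0 : y (LL n) = 0 := by
        field_simp at hy2; simpa using hy2
      show t * y (LL n) = 0
      simp [hy0]
    · have hux : u - t • y = t • x := by
        have : x = t⁻¹ • u - y := by
          rw [← hxy]; abel
        rw [this]; rw [smul_sub, smul_smul]
        field_simp
        rw [one_smul]
      rw [hux, norm_smul, Real.norm_eq_abs, abs_of_pos ht]
      rw [mem_closedBall_zero_iff] at hx
      calc t * ‖x‖ ≤ t * 1 := mul_le_mul_of_nonneg_left hx ht.le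
        _ = t := mul_one t
  · rintro ⟨y, hy1, hy2, hy3⟩
    rw [Set.mem_add]
    refine ⟨t⁻¹ • (u - y), ?_, t⁻¹ • y, ?_, ?_⟩
    · rw [mem_closedBall_zero_iff, norm_smul, Real.norm_eq_abs, abs_of_pos (inv_pos.mpr ht)]
      rw [inv_mul_le_iff₀ ht, mul_one]; exact hy3
    · rw [Set.mem_smul_set_iff_inv_smul_mem₀ (ne_of_gt hr)]
      constructor
      · rw [smul_smul, norm_smul, Real.norm_eq_abs]
        have : |r⁻¹ * t⁻¹| = r⁻¹ * t⁻¹ := abs_of_pos (by positivity)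
        rw [this]
        rw [mul_comm r⁻¹ t⁻¹, ← mul_inv]
        rw [inv_mul_le_iff₀ (by positivity), mul_one, mul_comm]
        linarith
      · show r⁻¹ * ((t⁻¹ • y) (LL n)) = 0
        have : (t⁻¹ • y) (LL n) = t⁻¹ * y (LL n) := rfl
        simp [this, hy2]
    · rw [← smul_add]
      rw [sub_add_cancel]

private lemma barrel_exists_iff (t r : ℝ) (hr : 0 < r) (ht : 0 < t) (u : EE n) :
    (∃ y : EE n, ‖y‖ ≤ t * r ∧ y (LL n) = 0 ∧ ‖u - y‖ ≤ t) ↔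
      max (‖u - u (LL n) • ee n‖ - t*r) 0 ^ 2 + (u (LL n))^2 ≤ t^2 := by
  set h : EE n := u - u (LL n) • ee n with hhdef
  have hhL : h (LL n) = 0 := by
    show u (LL n) - (u (LL n) • ee n) (LL n) = 0
    have : (u (LL n) • ee n) (LL n) = u (LL n) * (ee n) (LL n) := rfl
    rw [this]
    simp [ee, EuclideanSpace.single_apply]
  constructor
  · rintro ⟨y, hy1, hy2, hy3⟩
    have hdL : (h - y) (LL n) = 0 := by
      show h (LL n) - y (LL n) = 0
      rw [hhL, hy2, sub_zero]
    have hd : ‖u - y‖^2 = ‖h - y‖^2 + (u (LL n))^2 := by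
      have huy : u - y = (h - y) + u (LL n) • ee n := by rw [hhdef]; abel
      rw [huy, norm_sq_decomp _ _ hdL]
    have h2 : max (‖h‖ - t*r) 0 ≤ ‖h - y‖ := by
      apply max_le
      · calc ‖h‖ - t*r ≤ ‖h‖ - ‖y‖ := by linarith
          _ ≤ ‖h - y‖ := norm_sub_norm_le _ _
      · exact norm_nonneg _
    have h3 : max (‖h‖ - t*r) 0 ^ 2 ≤ ‖h - y‖^2 :=
      pow_le_pow_left₀ (le_max_right _ _) h2 2
    have h4 : ‖u - y‖^2 ≤ t^2 := pow_le_pow_left₀ (norm_nonneg _) hy3 2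
    linarith
  · intro hC
    by_cases hcase : ‖h‖ ≤ t * r
    · refine ⟨h, hcase, hhL, ?_⟩
      have huh : u - h = u (LL n) • ee n := by rw [hhdef]; abel
      rw [huh, norm_smul, Real.norm_eq_abs]
      simp only [EuclideanSpace.norm_single, norm_one, mul_one]
      have hmax : max (‖h‖ - t*r) 0 = 0 := max_eq_right (by linarith)
      rw [hmax] at hC
      apply barrel_le_of_sq_le_sq _ _ ht.le _ (abs_nonneg _)
      rw [sq_abs]
      linarith
    · push_neg at hcase
      have hs0 : 0 < ‖h‖ := lt_of_le_of_lt (by positivity) hcase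
      refine ⟨((t*r)/‖h‖) • h, ?_, ?_, ?_⟩
      · rw [norm_smul, Real.norm_eq_abs, abs_of_pos (by positivity)]
        rw [div_mul_cancel₀ _ (ne_of_gt hs0)]
      · show (t*r)/‖h‖ * h (LL n) = 0
        rw [hhL, mul_zero]
      · have huy : u - ((t*r)/‖h‖) • h = (1 - (t*r)/‖h‖) • h + u (LL n) • ee n := by
          rw [sub_smul, one_smul, hhdef]; abel
        have hL2 : ((1 - (t*r)/‖h‖) • h) (LL n) = 0 := by
          show (1 - (t*r)/‖h‖) * h (LL n) = 0
          rw [hhL, mul_zero]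
        rw [huy]
        have hmax : max (‖h‖ - t*r) 0 = ‖h‖ - t*r := max_eq_left (by linarith)
        rw [hmax] at hC
        have hnormsq : ‖(1 - (t*r)/‖h‖) • h‖^2 = (‖h‖ - t*r)^2 := by
          rw [norm_smul, Real.norm_eq_abs, mul_pow, sq_abs]
          field_simp
        apply barrel_le_of_sq_le_sq _ _ ht.le _ (norm_nonneg _)
        rw [norm_sq_decomp _ _ hL2, hnormsq]
        linarith

end BarrelAux

/-- The gauge of the barrel body `𝓑_{n,r} = B₂ⁿ + r·B₂^{n-1}` at a unit vector with
vertical angle `φ ∈ [0, π/2]` (so `cos φ = |uₙ|`) equals `cos φ` for `0 ≤ φ ≤ arctan r`,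
and `1/(r sin φ + √(1 - r² cos² φ))` for `arctan r ≤ φ ≤ π/2`. -/
theorem gauge_barrel (n : ℕ) (r : ℝ) (hr : 0 < r)
    (u : EuclideanSpace ℝ (Fin (n + 3))) (hu : ‖u‖ = 1)
    (φ : ℝ) (hφ : φ ∈ Set.Icc 0 (Real.pi / 2))
    (hcos : Real.cos φ = |u (Fin.last (n + 2))|) :
    (φ ≤ Real.arctan r →
      gauge (Metric.closedBall (0 : EuclideanSpace ℝ (Fin (n + 3))) 1 +
          r • setOf (fun x : EuclideanSpace ℝ (Fin (n + 3)) =>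
            ‖x‖ ≤ 1 ∧ x (Fin.last (n + 2)) = 0)) u
        = Real.cos φ) ∧
    (Real.arctan r ≤ φ →
      gauge (Metric.closedBall (0 : EuclideanSpace ℝ (Fin (n + 3))) 1 +
          r • setOf (fun x : EuclideanSpace ℝ (Fin (n + 3)) =>
            ‖x‖ ≤ 1 ∧ x (Fin.last (n + 2)) = 0)) u
        = 1 / (r * Real.sin φ + Real.sqrt (1 - r ^ 2 * Real.cos φ ^ 2))) := by
  obtain ⟨hφ0, hφ2⟩ := hφ
  have hpi := Real.pi_pos
  have hc0 : 0 ≤ Real.cos φ := Real.cos_nonneg_of_mem_Icc ⟨by linarith, hφ2⟩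
  have hs0 : 0 ≤ Real.sin φ := Real.sin_nonneg_of_nonneg_of_le_pi hφ0 (by linarith)
  have h1 : Real.sin φ ^ 2 + Real.cos φ ^ 2 = 1 := Real.sin_sq_add_cos_sq φ
  have hcL : (u (LL n))^2 = Real.cos φ ^ 2 := by rw [hcos, sq_abs]
  -- the norm of the horizontal part is `sin φ`
  have hhL : (u - u (LL n) • ee n) (LL n) = 0 := by
    show u (LL n) - (u (LL n) • ee n) (LL n) = 0
    have : (u (LL n) • ee n) (LL n) = u (LL n) * (ee n) (LL n) := rfl
    rw [this]
    simp [ee, EuclideanSpace.single_apply]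
  have hnormh : ‖u - u (LL n) • ee n‖ = Real.sin φ := by
    have hdec := norm_sq_decomp (u - u (LL n) • ee n) (u (LL n)) hhL
    have he : (u - u (LL n) • ee n) + u (LL n) • ee n = u := by abel
    rw [he, hu] at hdec
    have hsq : ‖u - u (LL n) • ee n‖^2 = Real.sin φ ^ 2 := by
      rw [hcL] at hdec; nlinarith
    exact le_antisymm
      (barrel_le_of_sq_le_sq _ _ hs0 (le_of_eq hsq) (norm_nonneg _))
      (barrel_le_of_sq_le_sq _ _ (norm_nonneg _) (le_of_eq hsq.symm) hs0)
  -- description of the gauge set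
  have hS : {t : ℝ | t ∈ Set.Ioi 0 ∧
      u ∈ t • (Metric.closedBall (0 : EuclideanSpace ℝ (Fin (n + 3))) 1 +
          r • setOf (fun x : EuclideanSpace ℝ (Fin (n + 3)) =>
            ‖x‖ ≤ 1 ∧ x (Fin.last (n + 2)) = 0))} =
      {t : ℝ | 0 < t ∧ max (Real.sin φ - t*r) 0 ^ 2 + Real.cos φ ^ 2 ≤ t^2} := by
    ext t
    simp only [Set.mem_setOf_eq, Set.mem_Ioi]
    constructor
    · rintro ⟨ht, hmem⟩
      rw [barrel_mem_smul_iff r t hr ht, barrel_exists_iff t r hr ht, hnormh, hcL] at hmem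
      exact ⟨ht, hmem⟩
    · rintro ⟨ht, hC⟩
      refine ⟨ht, ?_⟩
      rw [barrel_mem_smul_iff r t hr ht, barrel_exists_iff t r hr ht, hnormh, hcL]
      exact hC
  have harc0 : 0 ≤ Real.arctan r := by
    rw [← Real.arctan_zero]
    exact Real.arctan_strictMono.monotone hr.le
  have harc2 : Real.arctan r < Real.pi / 2 := Real.arctan_lt_pi_div_two r
  have hsqrtpos : 0 < Real.sqrt (1 + r^2) := Real.sqrt_pos.mpr (by positivity)
  constructor
  · -- case φ ≤ arctan r
    intro hφr
    have hφ2' : φ < Real.pi / 2 := lt_of_le_of_lt hφr harc2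
    have hsm : Real.sin φ ≤ Real.sin (Real.arctan r) :=
      Real.strictMonoOn_sin.monotoneOn ⟨by linarith, by linarith⟩
        ⟨by linarith, harc2.le⟩ hφr
    have hcm : Real.cos (Real.arctan r) ≤ Real.cos φ :=
      Real.strictAntiOn_cos.antitoneOn ⟨hφ0, by linarith⟩ ⟨harc0, by linarith⟩ hφr
    rw [Real.sin_arctan] at hsm
    rw [Real.cos_arctan] at hcm
    have hcpos : 0 < Real.cos φ := lt_of_lt_of_le (by positivity) hcm
    have hsc : Real.sin φ ≤ r * Real.cos φ := by
      have h8 : r * (1 / Real.sqrt (1+r^2)) ≤ r * Real.cos φ :=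
        mul_le_mul_of_nonneg_left hcm hr.le
      have h9 : r / Real.sqrt (1+r^2) = r * (1/Real.sqrt (1+r^2)) := by ring
      linarith
    rw [gauge_def, hS]
    have hIci : {t : ℝ | 0 < t ∧ max (Real.sin φ - t*r) 0 ^ 2 + Real.cos φ ^ 2 ≤ t^2} =
        Set.Ici (Real.cos φ) := by
      ext t
      simp only [Set.mem_setOf_eq, Set.mem_Ici]
      exact barrel_case1_iff r (Real.sin φ) (Real.cos φ) t hr hcpos hsc
    rw [hIci, csInf_Ici]
  · -- case arctan r ≤ φ
    intro hrφ
    have hsm : Real.sin (Real.arctan r) ≤ Real.sin φ :=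
      Real.strictMonoOn_sin.monotoneOn ⟨by linarith, harc2.le⟩
        ⟨by linarith, by linarith⟩ hrφ
    have hcm : Real.cos φ ≤ Real.cos (Real.arctan r) :=
      Real.strictAntiOn_cos.antitoneOn ⟨harc0, by linarith⟩ ⟨hφ0, by linarith⟩ hrφ
    rw [Real.sin_arctan] at hsm
    rw [Real.cos_arctan] at hcm
    have hspos : 0 < Real.sin φ := lt_of_lt_of_le (by positivity) hsm
    have hsc : r * Real.cos φ ≤ Real.sin φ := by
      have h8 : r * Real.cos φ ≤ r * (1 / Real.sqrt (1+r^2)) :=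
        mul_le_mul_of_nonneg_left hcm hr.le
      have h9 : r / Real.sqrt (1+r^2) = r * (1/Real.sqrt (1+r^2)) := by ring
      linarith
    rw [gauge_def, hS]
    have hIci : {t : ℝ | 0 < t ∧ max (Real.sin φ - t*r) 0 ^ 2 + Real.cos φ ^ 2 ≤ t^2} =
        Set.Ici (1 / (r * Real.sin φ + Real.sqrt (1 - r^2 * Real.cos φ ^ 2))) := by
      ext t
      simp only [Set.mem_setOf_eq, Set.mem_Ici]
      exact barrel_case2_iff r (Real.sin φ) (Real.cos φ) t hr hc0 hspos h1 hsc
    rw [hIci, csInf_Ici]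
end

section
/- The intersection of the polar body of 𝓑₃ = B₂³ + B₂² with the plane {(x, y, 0)} is the region bounded by the curves |y| = (1 − x²)/2, |x| ≤ 1; equivalently, the radial function of 𝓑₃° in that plane traces the parabolic curve y = (1 − x²)/2 for |x| ≤ 1 and its reflection. -/
open Pointwise

/-- The intersection of the polar of the barrel `𝓑₃ = B₂³ + B₂²` with the plane spanned by
`e₁` and `e₃` is the region bounded by the parabolic curves `|y| = (1 - x²)/2`, `|x| ≤ 1`
(where `x` is the coordinate along the symmetry axis `e₃` and `y` the one along `e₁`). -/
theorem polar_barrel_section :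
    polarSet (Metric.closedBall (0 : EuclideanSpace ℝ (Fin 3)) 1 +
        setOf (fun x : EuclideanSpace ℝ (Fin 3) => ‖x‖ ≤ 1 ∧ x 2 = 0)) ∩
      setOf (fun v : EuclideanSpace ℝ (Fin 3) => v 1 = 0)
    = setOf (fun v : EuclideanSpace ℝ (Fin 3) =>
        v 1 = 0 ∧ |v 2| ≤ 1 ∧ |v 0| ≤ (1 - (v 2) ^ 2) / 2) := by
  ext v
  simp only [Set.mem_inter_iff, Set.mem_setOf_eq, polarSet]
  constructor
  · rintro ⟨hp, h1⟩
    refine ⟨h1, ?_⟩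
    have hn : ‖v‖ ^ 2 = v 0 ^ 2 + v 2 ^ 2 := by
      rw [← real_inner_self_eq_norm_sq, PiLp.inner_apply, Fin.sum_univ_three, h1]
      simp [RCLike.inner_apply]
    by_cases hv : v = 0
    · subst hv; norm_num
    have key : ‖v‖ + |v 0| ≤ 1 := by
      set t : ℝ := if 0 ≤ v 0 then 1 else -1 with ht
      have htabs : |t| ≤ 1 := by rw [ht]; split <;> simp
      have htv : t * v 0 = |v 0| := by
        rw [ht]; split
        · rw [one_mul, abs_of_nonneg (by assumption)]
        · rw [abs_of_neg (by push_neg at *; linarith), neg_one_mul]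
      set z : EuclideanSpace ℝ (Fin 3) := EuclideanSpace.single 0 t with hz
      have hzmem : z ∈ setOf (fun x : EuclideanSpace ℝ (Fin 3) => ‖x‖ ≤ 1 ∧ x 2 = 0) := by
        constructor
        · rw [hz, EuclideanSpace.norm_single]; exact htabs
        · simp [hz, EuclideanSpace.single_apply]
      have hvnorm : ‖v‖ ≠ 0 := by simpa using hv
      set x : EuclideanSpace ℝ (Fin 3) := ‖v‖⁻¹ • v with hx
      have hxmem : x ∈ Metric.closedBall (0 : EuclideanSpace ℝ (Fin 3)) 1 := by
        rw [Metric.mem_closedBall, dist_zero_right, hx, norm_smul, norm_inv, norm_norm,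
          inv_mul_cancel₀ hvnorm]
      have := hp (x + z) (Set.add_mem_add hxmem hzmem)
      rw [inner_add_left] at this
      have hix : (inner ℝ x v : ℝ) = ‖v‖ := by
        rw [hx, real_inner_smul_left, real_inner_self_eq_norm_sq]
        field_simp
      have hiz : (inner ℝ z v : ℝ) = |v 0| := by
        rw [hz, EuclideanSpace.inner_single_left]
        simpa using htv
      rw [hix, hiz] at this
      exact this
    constructor
    · nlinarith [sq_abs (v 0), sq_abs (v 2), abs_nonneg (v 0), abs_nonneg (v 2),
        norm_nonneg v]
    · nlinarith [sq_abs (v 0), sq_abs (v 2), abs_nonneg (v 0), abs_nonneg (v 2),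
        norm_nonneg v]
  · rintro ⟨h1, h2, h3⟩
    refine ⟨?_, h1⟩
    intro w hw
    rw [Set.mem_add] at hw
    obtain ⟨x, hx, z, ⟨hz1, hz2⟩, rfl⟩ := hw
    rw [inner_add_left]
    have hn : ‖v‖ ^ 2 = v 0 ^ 2 + v 2 ^ 2 := by
      rw [← real_inner_self_eq_norm_sq, PiLp.inner_apply, Fin.sum_univ_three, h1]
      simp [RCLike.inner_apply]
    have hxn : ‖x‖ ≤ 1 := by rwa [Metric.mem_closedBall, dist_zero_right] at hx
    have h4 : (inner ℝ x v : ℝ) ≤ ‖v‖ := by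
      calc (inner ℝ x v : ℝ) ≤ ‖x‖ * ‖v‖ := real_inner_le_norm x v
        _ ≤ 1 * ‖v‖ := by gcongr
        _ = ‖v‖ := one_mul _
    have hzn : ‖z‖ ^ 2 = z 0 ^ 2 + z 1 ^ 2 := by
      rw [← real_inner_self_eq_norm_sq, PiLp.inner_apply, Fin.sum_univ_three, hz2]
      simp [RCLike.inner_apply]
    have hz0 : |z 0| ≤ 1 := by
      nlinarith [sq_abs (z 0), abs_nonneg (z 0), sq_nonneg (z 1), norm_nonneg z]
    have h5 : (inner ℝ z v : ℝ) ≤ |v 0| := by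
      rw [PiLp.inner_apply, Fin.sum_univ_three, h1, hz2]
      simp only [RCLike.inner_apply, conj_trivial]
      calc v 0 * z 0 + 0 * z 1 + v 2 * 0 = z 0 * v 0 := by ring
        _ ≤ |z 0 * v 0| := le_abs_self _
        _ = |z 0| * |v 0| := abs_mul _ _
        _ ≤ 1 * |v 0| := by gcongr
        _ = |v 0| := one_mul _
    have h6 : ‖v‖ ≤ 1 - |v 0| := by
      nlinarith [sq_abs (v 0), sq_abs (v 2), abs_nonneg (v 0), abs_nonneg (v 2),
        norm_nonneg v]
    linarith
end

section
/- For t ∈ [−1,1], the integral ∫₀^π |√(1−t²)·cos ψ + t| · sin ψ dψ equals 2|t| if |t| ≥ 1/√2, and equals 1/√(1−t²) if |t| ≤ 1/√2. -/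
open Real intervalIntegral

lemma lin_int (c d p q : ℝ) :
    ∫ u in p..q, (c * u + d) = c * (q ^ 2 - p ^ 2) / 2 + d * (q - p) := by
  have h1 : IntervalIntegrable (fun u : ℝ => c * u) MeasureTheory.volume p q :=
    (continuous_const.mul continuous_id).intervalIntegrable _ _
  have h2 : IntervalIntegrable (fun _ : ℝ => d) MeasureTheory.volume p q :=
    intervalIntegrable_const
  rw [intervalIntegral.integral_add h1 h2, intervalIntegral.integral_const_mul,
    integral_id, intervalIntegral.integral_const, smul_eq_mul]
  ring

lemma subst_cos (a t : ℝ) :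
    (∫ ψ in (0:ℝ)..Real.pi, |a * Real.cos ψ + t| * Real.sin ψ)
      = ∫ u in (-1:ℝ)..1, |a * u + t| := by
  have h := intervalIntegral.integral_comp_smul_deriv
    (f := Real.cos) (f' := fun x => -Real.sin x) (g := fun u => |a * u + t|)
    (a := (0:ℝ)) (b := Real.pi)
    (fun x _ => Real.hasDerivAt_cos x)
    (Real.continuous_sin.neg.continuousOn)
    (by continuity)
  simp only [smul_eq_mul, Function.comp, Real.cos_zero, Real.cos_pi] at h
  have : (∫ ψ in (0:ℝ)..Real.pi, |a * Real.cos ψ + t| * Real.sin ψ)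
      = -∫ x in (0:ℝ)..Real.pi, -Real.sin x * |a * Real.cos x + t| := by
    rw [← intervalIntegral.integral_neg]
    congr 1; ext ψ; ring
  rw [this, h, intervalIntegral.integral_symm, neg_neg]

/-- For `t ∈ [-1,1]`, the integral `∫₀^π |√(1-t²)·cos ψ + t| · sin ψ dψ` equals `2|t|`
if `|t| ≥ 1/√2`, and equals `1/√(1-t²)` if `|t| ≤ 1/√2`. -/
theorem barrel_sphere_integral (t : ℝ) (ht : t ∈ Set.Icc (-1 : ℝ) 1) :
    (1 / Real.sqrt 2 ≤ |t| →
      (∫ ψ in (0:ℝ)..Real.pi, |Real.sqrt (1 - t ^ 2) * Real.cos ψ + t| * Real.sin ψ)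
        = 2 * |t|) ∧
    (|t| ≤ 1 / Real.sqrt 2 →
      (∫ ψ in (0:ℝ)..Real.pi, |Real.sqrt (1 - t ^ 2) * Real.cos ψ + t| * Real.sin ψ)
        = 1 / Real.sqrt (1 - t ^ 2)) := by
  obtain ⟨ht1, ht2⟩ := ht
  set a := Real.sqrt (1 - t ^ 2) with ha
  have ha0 : 0 ≤ a := Real.sqrt_nonneg _
  have ha2 : a ^ 2 = 1 - t ^ 2 := Real.sq_sqrt (by nlinarith)
  have hs2 : Real.sqrt 2 > 0 := by positivity
  rw [subst_cos a t]
  constructor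
  · intro hge
    -- |t| ≥ 1/√2 means a ≤ |t|
    have h2 : (1:ℝ) / Real.sqrt 2 * (1 / Real.sqrt 2) = 1 / 2 := by
      rw [div_mul_div_comm, one_mul, Real.mul_self_sqrt (by norm_num)]
    have hle : a ≤ |t| := by
      have := mul_le_mul hge hge (by positivity) (abs_nonneg t)
      rw [h2] at this
      nlinarith [sq_abs t, abs_nonneg t]
    rcases le_or_gt 0 t with h0 | h0
    · have habs : |t| = t := abs_of_nonneg h0
      rw [habs] at hle
      have : (∫ u in (-1:ℝ)..1, |a * u + t|) = ∫ u in (-1:ℝ)..1, (a * u + t) := by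
        apply intervalIntegral.integral_congr
        intro u hu
        rw [Set.uIcc_of_le (by norm_num)] at hu
        have h1 : -1 ≤ u := hu.1
        show |a * u + t| = a * u + t
        exact abs_of_nonneg (by nlinarith)
      rw [this, lin_int, habs]; ring
    · have habs : |t| = -t := abs_of_neg h0
      rw [habs] at hle
      have : (∫ u in (-1:ℝ)..1, |a * u + t|) = ∫ u in (-1:ℝ)..1, (-a * u + -t) := by
        apply intervalIntegral.integral_congr
        intro u hu
        rw [Set.uIcc_of_le (by norm_num)] at hu
        have h1 : u ≤ 1 := hu.2
        have h2 : a * u + t ≤ 0 := by nlinarith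
        show |a * u + t| = -a * u + -t
        rw [abs_of_nonpos h2]; ring
      rw [this, lin_int, habs]; ring
  · intro hle
    -- |t| ≤ 1/√2 means |t| ≤ a, a > 0
    have h2 : (1:ℝ) / Real.sqrt 2 * (1 / Real.sqrt 2) = 1 / 2 := by
      rw [div_mul_div_comm, one_mul, Real.mul_self_sqrt (by norm_num)]
    have hta : |t| ≤ a := by
      have := mul_le_mul hle hle (abs_nonneg t) (by positivity)
      rw [h2] at this
      nlinarith [sq_abs t, abs_nonneg t]
    have hap : 0 < a := by nlinarith [sq_abs t, abs_nonneg t]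
    set u0 : ℝ := -t / a with hu0
    have hu0l : -1 ≤ u0 := by
      rw [hu0, le_div_iff₀ hap]
      have := le_abs_self t
      nlinarith
    have hu0r : u0 ≤ 1 := by
      rw [hu0, div_le_iff₀ hap]
      have := neg_abs_le t
      nlinarith
    have hsplit : (∫ u in (-1:ℝ)..1, |a * u + t|)
        = (∫ u in (-1:ℝ)..u0, |a * u + t|) + ∫ u in u0..1, |a * u + t| := by
      rw [intervalIntegral.integral_add_adjacent_intervals] <;>
        exact ((continuous_const.mul continuous_id).add continuous_const).abs.intervalIntegrable _ _
    have e1 : (∫ u in (-1:ℝ)..u0, |a * u + t|) = ∫ u in (-1:ℝ)..u0, (-a * u + -t) := by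
      apply intervalIntegral.integral_congr
      intro u hu
      rw [Set.uIcc_of_le hu0l] at hu
      have h1 : u ≤ u0 := hu.2
      have : a * u + t ≤ 0 := by
        have : a * u ≤ a * u0 := by nlinarith
        rw [hu0] at this
        rw [mul_div_cancel₀ _ (ne_of_gt hap)] at this
        linarith
      show |a * u + t| = -a * u + -t
      rw [abs_of_nonpos this]; ring
    have e2 : (∫ u in u0..1, |a * u + t|) = ∫ u in u0..1, (a * u + t) := by
      apply intervalIntegral.integral_congr
      intro u hu
      rw [Set.uIcc_of_le hu0r] at hu
      have h1 : u0 ≤ u := hu.1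
      show |a * u + t| = a * u + t
      apply abs_of_nonneg
      have : a * u0 ≤ a * u := by nlinarith
      rw [hu0, mul_div_cancel₀ _ (ne_of_gt hap)] at this
      linarith
    rw [hsplit, e1, e2, lin_int, lin_int, hu0]
    field_simp
    ring_nf
    nlinarith [ha2]
end

section
/- If Z is a convex body in a linear subspace H ⊂ ℝⁿ such that there is an orthogonal projection of ℝⁿ onto H, and W is a convex body in ℝⁿ with W ∩ H = Z, then: if W° is a zonoid, the polar of Z within H is also a zonoid. In particular, since 𝓑_{n,r} is a central section of 𝓑_{n+1,r} (onto which there is an orthogonal projection), if 𝓑_{n+1,r}° is a zonoid then so is 𝓑_{n,r}°. -/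
open MeasureTheory Pointwise
open scoped NNReal ENNReal

section Aux

variable {E : Type*} [NormedAddCommGroup E] [InnerProductSpace ℝ E]

lemma zero_mem_polarSet (K : Set E) : (0 : E) ∈ polarSet K := by
  intro x _; simp

lemma inner_le_gauge_of_mem_polarSet {K : Set E} (h0 : 0 ∈ interior K)
    {z : E} (hz : z ∈ polarSet K) (u : E) : (inner ℝ z u : ℝ) ≤ gauge K u := by
  obtain ⟨ε, hε, hball⟩ := Metric.mem_nhds_iff.mp (mem_interior_iff_mem_nhds.mp h0)
  rw [gauge_def]
  refine le_csInf ⟨(‖u‖ + 1) / ε, ?_⟩ ?_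
  · have ht : (0:ℝ) < (‖u‖ + 1) / ε := by positivity
    refine ⟨ht, ?_⟩
    rw [Set.mem_smul_set_iff_inv_smul_mem₀ ht.ne']
    apply hball
    simp only [Metric.mem_ball, dist_zero_right, norm_smul, norm_inv, Real.norm_eq_abs]
    rw [abs_of_pos ht]
    calc ((‖u‖+1)/ε)⁻¹ * ‖u‖ = ε * (‖u‖ / (‖u‖+1)) := by field_simp
    _ < ε * 1 := by
        apply mul_lt_mul_of_pos_left _ hε
        rw [div_lt_one (by positivity)]; linarith
    _ = ε := mul_one ε
  · rintro t ⟨ht, hmem⟩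
    rw [Set.mem_smul_set] at hmem
    obtain ⟨x, hx, rfl⟩ := hmem
    have hx1 : (inner ℝ x z : ℝ) ≤ 1 := hz x hx
    rw [real_inner_comm] at hx1
    rw [real_inner_smul_right]
    calc t * (inner ℝ z x : ℝ) ≤ t * 1 := by
          exact mul_le_mul_of_nonneg_left hx1 (le_of_lt (Set.mem_Ioi.mp ht))
    _ = t := mul_one t

lemma suppFn_polarSet_eq_gauge [CompleteSpace E] {K : Set E} (hconv : Convex ℝ K)
    (hcomp : IsCompact K) (h0 : 0 ∈ interior K) (u : E) :
    suppFn (polarSet K) u = gauge K u := by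
  have hbdd : ∀ y ∈ (fun x => (inner ℝ x u : ℝ)) '' polarSet K, y ≤ gauge K u := by
    rintro y ⟨z, hz, rfl⟩
    exact inner_le_gauge_of_mem_polarSet h0 hz u
  have hBdd : BddAbove ((fun x => (inner ℝ x u : ℝ)) '' polarSet K) := ⟨gauge K u, hbdd⟩
  have h0mem : (0:ℝ) ∈ (fun x => (inner ℝ x u : ℝ)) '' polarSet K :=
    ⟨0, zero_mem_polarSet K, by simp⟩
  refine le_antisymm (csSup_le ⟨0, h0mem⟩ hbdd) ?_
  refine le_of_forall_lt fun c hc => ?_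
  rcases lt_or_ge c 0 with hc0 | hc0
  · exact lt_of_lt_of_le hc0 (le_csSup hBdd h0mem)
  · set t := (c + gauge K u) / 2 with htdef
    have htc : c < t := by rw [htdef]; linarith
    have ht0 : 0 < t := lt_of_le_of_lt hc0 htc
    have htg : t < gauge K u := by rw [htdef]; linarith
    have hnot : (u : E) ∉ t • K := fun hmem =>
      absurd (gauge_le_of_mem ht0.le hmem) (not_le.mpr htg)
    have hclosed : IsClosed (t • K) := (hcomp.smul t).isClosed
    obtain ⟨f, s, hfs, hsu⟩ :=
      geometric_hahn_banach_closed_point (hconv.smul t) hclosed hnot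
    have h0K : (0:E) ∈ K := interior_subset h0
    have hs0 : (0:ℝ) < s := by
      have := hfs 0 ⟨0, h0K, smul_zero t⟩
      simpa using this
    set y := (InnerProductSpace.toDual ℝ E).symm f with hy
    have hyx : ∀ x : E, (inner ℝ y x : ℝ) = f x := fun x =>
      InnerProductSpace.toDual_symm_apply
    have hzmem : (t / s) • y ∈ polarSet K := by
      intro x hx
      have hfx : f (t • x) < s := hfs _ ⟨x, hx, rfl⟩
      rw [_root_.map_smul, smul_eq_mul] at hfx
      rw [real_inner_smul_right, real_inner_comm, hyx]
      rw [div_mul_eq_mul_div, div_le_one hs0]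
      linarith
    refine lt_of_lt_of_le ?_ (le_csSup hBdd ⟨(t / s) • y, hzmem, rfl⟩)
    show c < (inner ℝ ((t / s) • y) u : ℝ)
    rw [real_inner_smul_left, hyx]
    calc c < t := htc
    _ = (t / s) * s := by field_simp
    _ < (t / s) * f u := by
        apply mul_lt_mul_of_pos_left hsu (div_pos ht0 hs0)

lemma zero_mem_interior_of_symm' {F : Type*} [NormedAddCommGroup F] [NormedSpace ℝ F]
    {K : Set F} (hconv : Convex ℝ K) (hsymm : K = -K) (hne : (interior K).Nonempty) :
    (0 : F) ∈ interior K := by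
  obtain ⟨x, hx⟩ := hne
  have hx' : -x ∈ interior K := by
    rw [hsymm]
    have hK : (-K : Set F) = Neg.neg ⁻¹' K := rfl
    have := (Homeomorph.neg F).preimage_interior K
    rw [hK, show (Neg.neg : F → F) = ⇑(Homeomorph.neg F) from rfl, ← this]
    simpa using hx
  have := hconv.interior hx hx' (by norm_num : (0:ℝ) ≤ 1/2)
    (by norm_num : (0:ℝ) ≤ 1/2) (by norm_num)
  simpa using this

lemma gauge_section (H : Submodule ℝ E) (Z W : Set E)
    (hWH : W ∩ (H : Set E) = Z) (u : H) :
    gauge (((↑) : H → E) ⁻¹' Z) u = gauge W (u : E) := by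
  unfold gauge
  congr 1
  ext t
  simp only [Set.mem_setOf_eq, and_congr_right_iff]
  intro ht
  rw [Set.mem_smul_set_iff_inv_smul_mem₀ ht.ne', Set.mem_smul_set_iff_inv_smul_mem₀ ht.ne']
  rw [Set.mem_preimage]
  constructor
  · intro h
    have : ((t⁻¹ • u : H) : E) ∈ Z := h
    rw [← hWH] at this
    simpa using this.1
  · intro h
    have hmem : t⁻¹ • (u : E) ∈ W ∩ (H : Set E) := ⟨h, H.smul_mem _ u.2⟩
    rw [hWH] at hmem
    simpa using hmem

end Aux

theorem polar_aux {E : Type*} [NormedAddCommGroup E] [InnerProductSpace ℝ E]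
    [FiniteDimensional ℝ E] [MeasurableSpace E] [BorelSpace E]
    (H : Submodule ℝ E) (Z W : Set E)
    (hZH : Z ⊆ (H : Set E))
    (hZconv : Convex ℝ Z) (hZcomp : IsCompact Z)
    (hZint : (interior (((↑) : H → E) ⁻¹' Z)).Nonempty)
    (hWconv : Convex ℝ W) (hWcomp : IsCompact W) (hWsymm : W = -W)
    (hWint : (interior W).Nonempty)
    (hWH : W ∩ (H : Set E) = Z)
    (hpolar : IsZonoid (polarSet W)) :
    IsZonoid (polarSet (((↑) : H → E) ⁻¹' Z)) := by
  classical
  obtain ⟨ν, hνfin, hνsph, hνsupp⟩ := hpolar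
  have h0W : (0 : E) ∈ interior W := zero_mem_interior_of_symm' hWconv hWsymm hWint
  set Z' : Set H := (((↑) : H → E)) ⁻¹' Z with hZ'def
  have hZ'conv : Convex ℝ Z' := hZconv.linear_preimage H.subtype
  have hZsymm : Z = -Z := by
    ext x
    rw [← hWH]
    simp only [Set.mem_neg, Set.mem_inter_iff, SetLike.mem_coe]
    constructor
    · rintro ⟨hxW, hxH⟩
      refine ⟨?_, H.neg_mem hxH⟩
      rw [hWsymm]; simpa using hxW
    · rintro ⟨hxW, hxH⟩
      refine ⟨?_, by simpa using H.neg_mem hxH⟩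
      rw [hWsymm]; simpa using hxW
  have hZ'symm : Z' = -Z' := by
    ext w
    simp only [Set.mem_preimage, Set.mem_neg, hZ'def]
    constructor
    · intro hw
      show ((-w : H) : E) ∈ Z
      rw [hZsymm]
      simpa using hw
    · intro hw
      have : ((-w : H) : E) ∈ Z := hw
      rw [hZsymm] at this
      simpa using this
  have himg : (((↑) : H → E)) '' Z' = Z := by
    apply Set.eq_of_subset_of_subset
    · rintro _ ⟨w, hw, rfl⟩; exact hw
    · intro x hx; exact ⟨⟨x, hZH hx⟩, hx, rfl⟩
  have hZ'comp : IsCompact Z' := by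
    rw [Topology.IsEmbedding.subtypeVal.isCompact_iff, himg]
    exact hZcomp
  have h0Z' : (0 : H) ∈ interior Z' := zero_mem_interior_of_symm' hZ'conv hZ'symm hZint
  have hkey : ∀ u : H, suppFn (polarSet Z') u = ∫ v, |(inner ℝ (u : E) v : ℝ)| ∂ν := by
    intro u
    rw [suppFn_polarSet_eq_gauge hZ'conv hZ'comp h0Z' u, gauge_section H Z W hWH u,
      ← suppFn_polarSet_eq_gauge hWconv hWcomp h0W, hνsupp]
  -- measure construction
  set P := H.orthogonalProjectionOnto with hPdef
  have hPcont : Continuous fun v : E => ((P v : H) : E) := (H.subtypeL.comp P).continuous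
  set g : E → E := fun v => ‖((P v : H) : E)‖⁻¹ • ((P v : H) : E) with hgdef
  have hgH : ∀ v, g v ∈ H := fun v => H.smul_mem _ (P v).2
  set f : E → H := fun v => ⟨g v, hgH v⟩ with hfdef
  have hgmeas : Measurable g :=
    ((continuous_norm.comp hPcont).measurable.inv).smul hPcont.measurable
  have hfmeas : Measurable f := hgmeas.subtype_mk
  have hρmeas : Measurable fun v : E => (‖((P v : H) : E)‖₊ : ℝ≥0) :=
    (continuous_nnnorm.comp hPcont).measurable
  set μ := ν.withDensity fun v => ((‖((P v : H) : E)‖₊ : ℝ≥0) : ENNReal) with hμdef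
  have hsphH : MeasurableSet (Metric.sphere (0 : H) 1) := by
    have : Metric.sphere (0 : H) 1 = (fun w : H => (w : E)) ⁻¹' (Metric.sphere (0 : E) 1) := by
      ext w
      simp [Metric.mem_sphere, dist_zero_right, Submodule.coe_norm]
    rw [this]
    exact measurable_subtype_coe (Metric.isClosed_sphere.measurableSet)
  refine ⟨Measure.map f μ, ?_, ?_, ?_⟩
  · constructor
    rw [Measure.map_apply hfmeas MeasurableSet.univ, Set.preimage_univ, hμdef,
      withDensity_apply _ MeasurableSet.univ, Measure.restrict_univ]
    have hb : ∀ᵐ v ∂ν, ((‖((P v : H) : E)‖₊ : ℝ≥0) : ENNReal) ≤ 1 := by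
      have hs : ∀ᵐ v ∂ν, v ∈ Metric.sphere (0 : E) 1 := by
        rw [ae_iff]
        convert hνsph using 2
        rfl
      filter_upwards [hs] with v hv
      have hv1 : ‖v‖ = 1 := by simpa [dist_zero_right] using hv
      have h1 : ‖((P v : H) : E)‖ ≤ 1 := by
        rw [← Submodule.coe_norm]
        calc ‖P v‖ ≤ ‖(P : E →L[ℝ] ↥H)‖ * ‖v‖ := (P : E →L[ℝ] ↥H).le_opNorm v
        _ ≤ 1 * 1 := mul_le_mul (H.orthogonalProjectionOnto_norm_le) (le_of_eq hv1)
            (norm_nonneg v) zero_le_one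
        _ = 1 := by norm_num
      simp only [ENNReal.coe_le_one_iff]
      rwa [← NNReal.coe_le_coe, coe_nnnorm, NNReal.coe_one]
    calc ∫⁻ v, ((‖((P v : H) : E)‖₊ : ℝ≥0) : ENNReal) ∂ν ≤ ∫⁻ _, 1 ∂ν :=
          lintegral_mono_ae hb
    _ = ν Set.univ := by simp
    _ < ⊤ := measure_lt_top ν _
  · rw [Measure.map_apply hfmeas hsphH.compl, hμdef,
      withDensity_apply _ (hfmeas hsphH.compl)]
    have hzero : ∀ v ∈ f ⁻¹' (Metric.sphere (0 : H) 1)ᶜ,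
        ((‖((P v : H) : E)‖₊ : ℝ≥0) : ENNReal) = 0 := by
      intro v hv
      by_contra hne
      have hP0 : ((P v : H) : E) ≠ 0 := by
        simpa using hne
      apply hv
      show f v ∈ Metric.sphere (0 : H) 1
      rw [Metric.mem_sphere, dist_zero_right, Submodule.coe_norm]
      show ‖g v‖ = 1
      rw [hgdef]
      simp only [norm_smul, norm_inv, norm_norm]
      rw [inv_mul_cancel₀ (norm_ne_zero_iff.mpr hP0)]
    calc ∫⁻ v in f ⁻¹' (Metric.sphere (0 : H) 1)ᶜ, ((‖((P v : H) : E)‖₊ : ℝ≥0) : ENNReal) ∂ν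
        = ∫⁻ _ in f ⁻¹' (Metric.sphere (0 : H) 1)ᶜ, 0 ∂ν :=
          setLIntegral_congr_fun (hfmeas hsphH.compl) hzero
    _ = 0 := by simp
  · intro u
    have hInt : AEStronglyMeasurable (fun w : H => |(inner ℝ u w : ℝ)|) (Measure.map f μ) := by
      have hm : Measurable fun w : H => |(inner ℝ u w : ℝ)| := by
        have heq : (fun w : H => (inner ℝ u w : ℝ)) =
            (fun x : E => (inner ℝ ((u : H) : E) x : ℝ)) ∘ (fun w : H => (w : E)) := by
          funext w
          simp [Submodule.coe_inner]
        have : Measurable fun w : H => (inner ℝ u w : ℝ) := by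
          rw [heq]
          exact ((continuous_const.inner continuous_id).measurable).comp measurable_subtype_coe
        exact this.abs
      exact hm.aestronglyMeasurable
    rw [integral_map hfmeas.aemeasurable hInt, hμdef,
      integral_withDensity_eq_integral_smul hρmeas, hkey u]
    refine integral_congr_ae (Filter.Eventually.of_forall fun v => ?_)
    have hproj : (inner ℝ ((u : H) : E) v : ℝ) = inner ℝ u (P v) := by
      rw [← Submodule.inner_orthogonalProjectionOnto_eq_of_mem_left]
    have hPinner : (inner ℝ u (f v) : ℝ) = ‖((P v : H) : E)‖⁻¹ * (inner ℝ u (P v) : ℝ) := by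
      rw [Submodule.coe_inner, Submodule.coe_inner]
      show (inner ℝ ((u:H):E) (g v) : ℝ) = _
      rw [hgdef]
      simp [real_inner_smul_right]
    show |(inner ℝ ((u : H) : E) v : ℝ)| = ‖((P v : H) : E)‖₊ • |(inner ℝ u (f v) : ℝ)|
    rcases eq_or_ne ((P v : H) : E) 0 with h0 | h0
    · have hP0 : P v = 0 := by
        ext1; simpa using h0
      rw [hproj, hPinner, hP0]
      simp
    · rw [hproj, hPinner, NNReal.smul_def]
      rw [abs_mul, abs_inv, abs_norm]
      simp only [coe_nnnorm, Submodule.coe_norm]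
      have hnz : ‖P v‖ ≠ 0 := by
        rw [Submodule.coe_norm]
        exact norm_ne_zero_iff.mpr h0
      rw [smul_eq_mul]
      field_simp

/-- If `Z` is a convex body in a subspace `H ⊆ ℝⁿ` which is a central section `Z = W ∩ H`
of a centrally symmetric convex body `W ⊆ ℝⁿ`, and the polar of `W` is a zonoid, then the
polar of `Z` within `H` is also a zonoid. -/
theorem polar_of_section_zonoid (n : ℕ) (H : Submodule ℝ (EuclideanSpace ℝ (Fin n)))
    (Z W : Set (EuclideanSpace ℝ (Fin n)))
    (hZH : Z ⊆ (H : Set (EuclideanSpace ℝ (Fin n))))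
    (hZconv : Convex ℝ Z) (hZcomp : IsCompact Z)
    (hZint : (interior (((↑) : H → EuclideanSpace ℝ (Fin n)) ⁻¹' Z)).Nonempty)
    (hWconv : Convex ℝ W) (hWcomp : IsCompact W) (hWsymm : W = -W)
    (hWint : (interior W).Nonempty)
    (hWH : W ∩ (H : Set (EuclideanSpace ℝ (Fin n))) = Z)
    (hpolar : IsZonoid (polarSet W)) :
    IsZonoid (polarSet (((↑) : H → EuclideanSpace ℝ (Fin n)) ⁻¹' Z)) :=
  polar_aux H Z W hZH hZconv hZcomp hZint hWconv hWcomp hWsymm hWint hWH hpolar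
end

section
/- For r > 0 and x_r = r/√(1+r²), the function G(x) defined for x ∈ [0,1] by G(x) = (1−2x²)/√(1−x²) for 0 ≤ x ≤ x_r and G(x) = (1−r²)/(A(x,r)·(rx + A(x,r))²) for x_r ≤ x ≤ 1, where A(x,r) = √(1−r²+r²x²), satisfies: the jump of its derivative at x_r is lim_{x→x_r⁺} G′(x) − lim_{x→x_r⁻} G′(x) = r(r²+1)². -/
open Filter

/-- The piecewise function `G` arising from the barrel zonoid `𝓑_{4,r}` has a jump in its
derivative at `x_r = r/√(1+r²)` equal to `r(r²+1)²`:
`lim_{x→x_r⁺} G′(x) − lim_{x→x_r⁻} G′(x) = r(r²+1)²`. -/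
theorem barrel_derivative_jump (r : ℝ) (hr : 0 < r)
    (xr : ℝ) (hxr : xr = r / Real.sqrt (1 + r ^ 2))
    (A : ℝ → ℝ) (hA : ∀ x, A x = Real.sqrt (1 - r ^ 2 + r ^ 2 * x ^ 2))
    (G : ℝ → ℝ)
    (hG1 : ∀ x, x ≤ xr → G x = (1 - 2 * x ^ 2) / Real.sqrt (1 - x ^ 2))
    (hG2 : ∀ x, xr ≤ x → G x = (1 - r ^ 2) / (A x * (r * x + A x) ^ 2)) :
    ∃ a b : ℝ,
      Tendsto (deriv G) (nhdsWithin xr (Set.Ioi xr)) (nhds a) ∧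
      Tendsto (deriv G) (nhdsWithin xr (Set.Iio xr)) (nhds b) ∧
      a - b = r * (r ^ 2 + 1) ^ 2 := by
  have hAfun : A = fun x => Real.sqrt (1 - r ^ 2 + r ^ 2 * x ^ 2) := funext hA
  subst hAfun
  have hs0 : (0:ℝ) < Real.sqrt (1 + r ^ 2) := Real.sqrt_pos.2 (by positivity)
  set s := Real.sqrt (1 + r ^ 2) with hs
  have hs2 : s ^ 2 = 1 + r ^ 2 := Real.sq_sqrt (by positivity)
  have hsne : s ≠ 0 := ne_of_gt hs0
  have hxr0 : 0 < xr := by rw [hxr]; positivity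
  have hxr1 : xr < 1 := by
    rw [hxr, div_lt_one hs0]; nlinarith [hs2, hs0]
  have hu0 : 1 - r ^ 2 + r ^ 2 * xr ^ 2 = (1 / s) ^ 2 := by
    rw [hxr]; field_simp; nlinarith [hs2]
  have hv0 : 1 - xr ^ 2 = (1 / s) ^ 2 := by
    rw [hxr]; field_simp; nlinarith [hs2]
  have h1spos : (0:ℝ) < 1 / s := by positivity
  have hAxr : Real.sqrt (1 - r ^ 2 + r ^ 2 * xr ^ 2) = 1 / s := by
    rw [hu0, Real.sqrt_sq h1spos.le]
  have hBxr : Real.sqrt (1 - xr ^ 2) = 1 / s := by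
    rw [hv0, Real.sqrt_sq h1spos.le]
  -- explicit derivative formulas
  set d1 : ℝ → ℝ := fun x => (2 * x ^ 3 - 3 * x) / Real.sqrt (1 - x ^ 2) ^ 3 with hd1def
  set d2 : ℝ → ℝ := fun x =>
      r * (2 * Real.sqrt (1 - r ^ 2 + r ^ 2 * x ^ 2) + r * x) *
        (r * x - Real.sqrt (1 - r ^ 2 + r ^ 2 * x ^ 2)) /
      (Real.sqrt (1 - r ^ 2 + r ^ 2 * x ^ 2) ^ 3 *
        (Real.sqrt (1 - r ^ 2 + r ^ 2 * x ^ 2) + r * x)) with hd2def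
  have hder1 : ∀ x : ℝ, -1 < x → x < 1 →
      HasDerivAt (fun y => (1 - 2 * y ^ 2) / Real.sqrt (1 - y ^ 2)) (d1 x) x := by
    intro x hx1 hx2
    have hvpos : 0 < 1 - x ^ 2 := by nlinarith
    have hBpos : 0 < Real.sqrt (1 - x ^ 2) := Real.sqrt_pos.2 hvpos
    have hBne : Real.sqrt (1 - x ^ 2) ≠ 0 := ne_of_gt hBpos
    have hB2 : Real.sqrt (1 - x ^ 2) ^ 2 = 1 - x ^ 2 := Real.sq_sqrt hvpos.le
    have hv : HasDerivAt (fun y : ℝ => 1 - y ^ 2) (-(2 * x ^ 1)) x :=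
      (hasDerivAt_pow 2 x).const_sub 1
    have hB : HasDerivAt (fun y : ℝ => Real.sqrt (1 - y ^ 2))
        ((-(2 * x ^ 1)) / (2 * Real.sqrt (1 - x ^ 2))) x := hv.sqrt (ne_of_gt hvpos)
    have hN : HasDerivAt (fun y : ℝ => 1 - 2 * y ^ 2) (-(2 * (2 * x ^ 1))) x :=
      ((hasDerivAt_pow 2 x).const_mul 2).const_sub 1
    have hres := hN.div hB (ne_of_gt hBpos)
    refine hres.congr_deriv ?_
    symm
    simp only [hd1def]
    field_simp
    linear_combination (4 * x) * hB2
  have hder2 : ∀ x : ℝ, 0 < x → 0 < 1 - r ^ 2 + r ^ 2 * x ^ 2 →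
      HasDerivAt (fun y => (1 - r ^ 2) /
        (Real.sqrt (1 - r ^ 2 + r ^ 2 * y ^ 2) *
          (r * y + Real.sqrt (1 - r ^ 2 + r ^ 2 * y ^ 2)) ^ 2)) (d2 x) x := by
    intro x hx0 hu
    have hApos : 0 < Real.sqrt (1 - r ^ 2 + r ^ 2 * x ^ 2) := Real.sqrt_pos.2 hu
    have hAne : Real.sqrt (1 - r ^ 2 + r ^ 2 * x ^ 2) ≠ 0 := ne_of_gt hApos
    have hA2 : Real.sqrt (1 - r ^ 2 + r ^ 2 * x ^ 2) ^ 2 = 1 - r ^ 2 + r ^ 2 * x ^ 2 :=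
      Real.sq_sqrt hu.le
    have hLpos : 0 < r * x + Real.sqrt (1 - r ^ 2 + r ^ 2 * x ^ 2) := by positivity
    have hLne : r * x + Real.sqrt (1 - r ^ 2 + r ^ 2 * x ^ 2) ≠ 0 := ne_of_gt hLpos
    have hu' : HasDerivAt (fun y : ℝ => 1 - r ^ 2 + r ^ 2 * y ^ 2) (r ^ 2 * (2 * x ^ 1)) x :=
      ((hasDerivAt_pow 2 x).const_mul (r ^ 2)).const_add (1 - r ^ 2)
    have hAder : HasDerivAt (fun y : ℝ => Real.sqrt (1 - r ^ 2 + r ^ 2 * y ^ 2))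
        ((r ^ 2 * (2 * x ^ 1)) / (2 * Real.sqrt (1 - r ^ 2 + r ^ 2 * x ^ 2))) x :=
      hu'.sqrt (ne_of_gt hu)
    have hlin : HasDerivAt
        (fun y : ℝ => r * y + Real.sqrt (1 - r ^ 2 + r ^ 2 * y ^ 2))
        (r * 1 + (r ^ 2 * (2 * x ^ 1)) / (2 * Real.sqrt (1 - r ^ 2 + r ^ 2 * x ^ 2))) x := by
      exact ((hasDerivAt_id x).const_mul r).add hAder
    have hpow := hlin.pow 2
    have hD := hAder.mul hpow
    have hres := (hasDerivAt_const x (1 - r ^ 2)).div hD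
      (by positivity : Real.sqrt (1 - r ^ 2 + r ^ 2 * x ^ 2) *
        (r * x + Real.sqrt (1 - r ^ 2 + r ^ 2 * x ^ 2)) ^ 2 ≠ 0)
    refine hres.congr_deriv ?_
    symm
    simp only [hd2def, Pi.mul_apply, Pi.pow_apply]
    field_simp
    linear_combination (-2 * r * Real.sqrt (1 - r ^ 2 + r ^ 2 * x ^ 2) ^ 4
      - 7 * r ^ 2 * x * Real.sqrt (1 - r ^ 2 + r ^ 2 * x ^ 2) ^ 3
      - 9 * r ^ 3 * x ^ 2 * Real.sqrt (1 - r ^ 2 + r ^ 2 * x ^ 2) ^ 2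
      - 5 * r ^ 4 * x ^ 3 * Real.sqrt (1 - r ^ 2 + r ^ 2 * x ^ 2)
      - r ^ 5 * x ^ 4) * hA2
  -- values at xr
  have hvalr : d2 xr = r ^ 5 + r ^ 3 - 2 * r := by
    simp only [hd2def]
    rw [hAxr, hxr]
    field_simp
    linear_combination (r ^ 4 + r ^ 2 - 2) * hs2
  have hvall : d1 xr = -(r ^ 3 + 3 * r) := by
    simp only [hd1def]
    rw [hBxr, hxr]
    field_simp
    linear_combination (-3) * hs2
  -- continuity of the derivative formulas at xr
  have hcont2 : ContinuousAt d2 xr := by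
    rw [hd2def]
    apply ContinuousAt.div
    · fun_prop
    · fun_prop
    · rw [hAxr]
      have : (0:ℝ) < (1 / s) ^ 3 * (1 / s + r * xr) :=
        mul_pos (pow_pos h1spos 3) (add_pos h1spos (mul_pos hr hxr0))
      exact ne_of_gt this
  have hcont1 : ContinuousAt d1 xr := by
    rw [hd1def]
    apply ContinuousAt.div
    · fun_prop
    · fun_prop
    · rw [hBxr]; positivity
  -- eventual equality of deriv G with the formulas
  have hEq2 : deriv G =ᶠ[nhdsWithin xr (Set.Ioi xr)] d2 := by
    filter_upwards [self_mem_nhdsWithin] with x hx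
    have hx' : xr < x := hx
    have hx0 : 0 < x := hxr0.trans hx'
    have hu : 0 < 1 - r ^ 2 + r ^ 2 * x ^ 2 := by
      have h3 : 0 ≤ r ^ 2 * (x ^ 2 - xr ^ 2) :=
        mul_nonneg (sq_nonneg r) (by nlinarith)
      have h4 : 0 < (1 / s) ^ 2 := pow_pos h1spos 2
      have h5 : r ^ 2 * (x ^ 2 - xr ^ 2) = r ^ 2 * x ^ 2 - r ^ 2 * xr ^ 2 := by ring
      linarith [hu0, h3, h4, h5]
    have hg : G =ᶠ[nhds x] (fun y => (1 - r ^ 2) /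
        (Real.sqrt (1 - r ^ 2 + r ^ 2 * y ^ 2) *
          (r * y + Real.sqrt (1 - r ^ 2 + r ^ 2 * y ^ 2)) ^ 2)) :=
      eventuallyEq_of_mem (Ioi_mem_nhds hx') (fun y hy => hG2 y (le_of_lt hy))
    rw [hg.deriv_eq, (hder2 x hx0 hu).deriv]
  have hEq1 : deriv G =ᶠ[nhdsWithin xr (Set.Iio xr)] d1 := by
    filter_upwards [Ioo_mem_nhdsLT_of_mem (Set.mem_Ioc.2 ⟨hxr0, le_refl xr⟩)] with x hx
    have hx1 : x < 1 := hx.2.trans hxr1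
    have hxm1 : -1 < x := by linarith [hx.1]
    have hg : G =ᶠ[nhds x] (fun y => (1 - 2 * y ^ 2) / Real.sqrt (1 - y ^ 2)) :=
      eventuallyEq_of_mem (Iio_mem_nhds hx.2) (fun y hy => hG1 y (le_of_lt hy))
    rw [hg.deriv_eq, (hder1 x hxm1 hx1).deriv]
  refine ⟨r ^ 5 + r ^ 3 - 2 * r, -(r ^ 3 + 3 * r), ?_, ?_, by ring⟩
  · exact Tendsto.congr' hEq2.symm
      (hvalr ▸ (hcont2.tendsto.mono_left nhdsWithin_le_nhds))
  · exact Tendsto.congr' hEq1.symm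
      (hvall ▸ (hcont1.tendsto.mono_left nhdsWithin_le_nhds))
end
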